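/- arXiv:math/9801111 — 6 statements merged into one kernel-verified Lean document; each statement's English description precedes it below -/
import Mathlib

section
/- For any finite triangulated planar region R, the numbers n_xy, n_xz, n_yz of lozenges in each of the three orientations are the same for every lozenge tiling of R. More precisely, in any tiling the vector n_xy·w_xy + n_xz·w_xz + n_yz·w_yz equals a fixed vector v depending only on R, where v is the sum over white triangles of the vector from the origin to their centre minus the sum over black triangles of the vector from their centre to the origin; since the total number of lozenges n_xy+n_xz+n_yz = |R|/2 is fixed and w_xy−w_xz, w_xy−w_yz are linearly independent, the three counts are determined. -/
/-- A triangle of the triangulated plane: `(x, y, true)` is the upward ("black") triangle with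
vertices `(x,y), (x+1,y), (x,y+1)` (coordinates in the triangular-lattice basis), and
`(x, y, false)` is the downward ("white") triangle with vertices `(x+1,y), (x,y+1), (x+1,y+1)`. -/
abbrev Tri := ℤ × ℤ × Bool

/-- A lozenge is encoded by an upward triangle together with one of the three downward
neighbours it is glued to; `lozCells` is the pair of triangles it covers.  The `Fin 3`
component records the orientation of the lozenge. -/
def lozCells (p : (ℤ × ℤ) × Fin 3) : Finset Tri :=
  {(p.1.1, p.1.2, true),
   if p.2 = 0 then (p.1.1, p.1.2, false)
   else if p.2 = 1 then (p.1.1 - 1, p.1.2, false)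
   else (p.1.1, p.1.2 - 1, false)}

/-- A tiling of a finite triangulated region `R` by lozenges: a partition of `R` into lozenges. -/
def IsLozTiling (T : Finset ((ℤ × ℤ) × Fin 3)) (R : Finset Tri) : Prop :=
  (∀ p ∈ T, ∀ q ∈ T, p ≠ q → Disjoint (lozCells p) (lozCells q)) ∧
  T.biUnion lozCells = R

/-- Weight of a triangle, depending on the orientation `o` we are counting. -/
def triWt (t : Tri) (o : Fin 3) : ℤ :=
  if t.2.2 then (if o = 0 then 1 - t.1 - t.2.1 else if o = 1 then t.1 else t.2.1)
  else (if o = 0 then t.1 + t.2.1 else if o = 1 then -t.1 else -t.2.1)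

lemma lozWt (p : (ℤ × ℤ) × Fin 3) (o : Fin 3) :
    ∑ t ∈ lozCells p, triWt t o = if p.2 = o then 1 else 0 := by
  obtain ⟨⟨x, y⟩, j⟩ := p
  fin_cases j <;> fin_cases o <;>
    · rw [lozCells, show ({(x, y, true), _} : Finset Tri) = {_, _} from rfl,
        Finset.sum_pair (by simp)]
      simp [triWt]
      try ring

lemma tilingWt (R : Finset Tri) (T : Finset ((ℤ × ℤ) × Fin 3)) (h : IsLozTiling T R)
    (o : Fin 3) : ∑ t ∈ R, triWt t o = (T.filter (fun p => p.2 = o)).card := by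
  rw [← h.2, Finset.sum_biUnion (fun p hp q hq hpq => h.1 p hp q hq hpq)]
  simp only [lozWt]
  rw [Finset.sum_boole]

/-- For any finite triangulated planar region `R`, the number of lozenges in each of
the three orientations is the same for every lozenge tiling of `R`. -/
theorem stmt_3 (R : Finset Tri) (T₁ T₂ : Finset ((ℤ × ℤ) × Fin 3))
    (h₁ : IsLozTiling T₁ R) (h₂ : IsLozTiling T₂ R) (o : Fin 3) :
    (T₁.filter (fun p => p.2 = o)).card = (T₂.filter (fun p => p.2 = o)).card := by
  have := (tilingWt R T₁ h₁ o).symm.trans (tilingWt R T₂ h₂ o)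
  exact_mod_cast this
end

section
/- For r = c = m = 1, 2 the MacMahon product formula gives 2 and 20 respectively; in general the product ∏_{i=1}^{r} ∏_{j=1}^{m} (c+i+j−1)/(i+j−1) is always a positive integer. -/
/-!
With `H n = ∏_{k<n} k!`, the product equals
`H(c+m+r) H(c) H(m) H(r) / (H(c+m) H(m+r) H(r+c))`. By Legendre's formula the `p`-adic valuation
of `H n` is `∑_{i ≥ 1} g_{p^i}(n)`, where `g_q(n) = ∑_{k<n} ⌊k/q⌋`, so integrality reduces to
`g_q(a+b) + g_q(b+c) + g_q(c+a) ≤ g_q(a+b+c) + g_q(a) + g_q(b) + g_q(c)`.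
Since `g_q(n+q) = g_q(n) + n`, the difference of the two sides is `q`-periodic in each of `a, b, c`,
and for `a, b, c < q` every `g_q` involved is a sum of at most two terms `(n - q)⁺`, `(n - 2q)⁺`,
where the inequality is elementary.
-/

/-- MacMahon's product `P(r,c,m) = ∏_{i=1}^{r} ∏_{j=1}^{m} (c+i+j−1)/(i+j−1)`, as a rational
number. -/
def macmahon (r c m : ℕ) : ℚ :=
  ∏ i ∈ Finset.Icc 1 r, ∏ j ∈ Finset.Icc 1 m, ((c : ℚ) + i + j - 1) / ((i : ℚ) + j - 1)

open Finset Nat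

section FloorSum

variable (q : ℕ)

def floorSum (n : ℕ) : ℕ := ∑ k ∈ range n, k / q

variable {q}

theorem floorSum_of_le {n : ℕ} (hn : n ≤ q) : floorSum q n = 0 :=
  sum_eq_zero fun _ hk => Nat.div_eq_of_lt ((mem_range.1 hk).trans_le hn)

theorem floorSum_add_self (hq : 0 < q) (n : ℕ) : floorSum q (n + q) = floorSum q n + n := by
  rw [floorSum, add_comm n, sum_range_add, ← floorSum, floorSum_of_le le_rfl, zero_add, floorSum]
  simp_rw [add_comm q, Nat.add_div_right _ hq, sum_add_distrib, sum_const, card_range, smul_eq_mul,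
    mul_one]

theorem floorSum_of_le_three_mul (hq : 0 < q) {n : ℕ} (hn : n ≤ 3 * q) :
    floorSum q n = (n - q) + (n - 2 * q) := by
  by_cases h1 : n ≤ q
  · rw [floorSum_of_le h1]; omega
  obtain ⟨n, rfl⟩ := Nat.exists_eq_add_of_le' (not_le.1 h1).le
  rw [floorSum_add_self hq]
  by_cases h2 : n ≤ q
  · rw [floorSum_of_le h2]; omega
  obtain ⟨n, rfl⟩ := Nat.exists_eq_add_of_le' (not_le.1 h2).le
  rw [floorSum_add_self hq, floorSum_of_le (by omega)]
  omega

variable (q)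

def floorSumDefect (a b c : ℕ) : ℤ :=
  floorSum q (a + b + c) + floorSum q a + floorSum q b + floorSum q c
    - floorSum q (a + b) - floorSum q (b + c) - floorSum q (c + a)

variable {q}

theorem floorSumDefect_rotate (a b c : ℕ) :
    floorSumDefect q a b c = floorSumDefect q b c a := by
  rw [floorSumDefect, floorSumDefect, show b + c + a = a + b + c by ring]
  ring

theorem floorSumDefect_add_self (hq : 0 < q) (a b c : ℕ) :
    floorSumDefect q (a + q) b c = floorSumDefect q a b c := by
  have h := floorSum_add_self hq
  rw [floorSumDefect, floorSumDefect, show a + q + b + c = a + b + c + q by ring,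
    show a + q + b = a + b + q by ring, show c + (a + q) = c + a + q by ring, h, h, h, h]
  push_cast
  ring

theorem floorSumDefect_mod_left (hq : 0 < q) (a b c : ℕ) :
    floorSumDefect q (a % q) b c = floorSumDefect q a b c := by
  conv_rhs => rw [← Nat.mod_add_div a q]
  induction a / q with
  | zero => simp
  | succ s ih => rw [mul_add_one, ← add_assoc, floorSumDefect_add_self hq, ih]

theorem floorSumDefect_nonneg_of_lt (hq : 0 < q) {a b c : ℕ} (ha : a < q) (hb : b < q)
    (hc : c < q) : 0 ≤ floorSumDefect q a b c := by
  have h := fun n (hn : n ≤ 3 * q) => floorSum_of_le_three_mul hq hn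
  rw [floorSumDefect, h (a + b + c) (by omega), h a (by omega), h b (by omega), h c (by omega),
    h (a + b) (by omega), h (b + c) (by omega), h (c + a) (by omega)]
  omega

theorem floorSumDefect_nonneg (hq : 0 < q) (a b c : ℕ) : 0 ≤ floorSumDefect q a b c := by
  rw [← floorSumDefect_mod_left hq, floorSumDefect_rotate, ← floorSumDefect_mod_left hq,
    floorSumDefect_rotate, ← floorSumDefect_mod_left hq, floorSumDefect_rotate]
  exact floorSumDefect_nonneg_of_lt hq (Nat.mod_lt _ hq) (Nat.mod_lt _ hq) (Nat.mod_lt _ hq)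

end FloorSum

def prodFactorials (n : ℕ) : ℕ := ∏ k ∈ range n, k !

theorem prodFactorials_pos (n : ℕ) : 0 < prodFactorials n :=
  prod_pos fun k _ => factorial_pos k

theorem prodFactorials_succ (n : ℕ) : prodFactorials (n + 1) = prodFactorials n * n ! :=
  prod_range_succ _ n

theorem factorization_prodFactorials {p : ℕ} (hp : p.Prime) {n b : ℕ} (hn : n ≤ b) :
    (prodFactorials n).factorization p = ∑ i ∈ Ico 1 b, floorSum (p ^ i) n := by
  rw [prodFactorials, factorization_prod fun k _ => (factorial_pos k).ne', sum_apply']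
  simp only [floorSum]
  rw [sum_comm]
  refine sum_congr rfl fun k hk => factorization_factorial hp ?_
  exact (log_le_self p k).trans_lt ((mem_range.1 hk).trans_le hn)

theorem prodFactorials_dvd (a b c : ℕ) :
    prodFactorials (a + b) * prodFactorials (b + c) * prodFactorials (c + a) ∣
      prodFactorials (a + b + c) * prodFactorials a * prodFactorials b * prodFactorials c := by
  have hne := fun n => (prodFactorials_pos n).ne'
  refine (factorization_prime_le_iff_dvd (by simp [hne]) (by simp [hne])).1 fun p hp => ?_
  simp only [factorization_mul, hne, mul_ne_zero_iff, ne_eq, not_false_eq_true, and_self,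
    Finsupp.add_apply]
  simp (disch := omega) only [factorization_prodFactorials hp (b := a + b + c), ← sum_add_distrib]
  refine sum_le_sum fun i _ => ?_
  have := floorSumDefect_nonneg (pow_pos hp.pos i) a b c
  rw [floorSumDefect] at this
  omega

theorem prod_Icc_natCast_add_mul_factorial (x m : ℕ) :
    (∏ j ∈ Icc 1 m, ((x : ℚ) + j)) * x ! = (x + m)! := by
  induction m with
  | zero => simp
  | succ m ih =>
    rw [prod_Icc_succ_top (by omega), mul_right_comm, ih, ← add_assoc, factorial_succ]
    push_cast
    ring

theorem macmahon_succ (r c m : ℕ) :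
    macmahon (r + 1) c m = macmahon r c m * ∏ j ∈ Icc 1 m, ((c + r : ℕ) + j : ℚ) / (r + j) := by
  rw [macmahon, prod_Icc_succ_top (by omega), ← macmahon]
  congr 1
  refine prod_congr rfl fun j _ => ?_
  push_cast
  ring_nf

theorem macmahon_mul_prodFactorials (r c m : ℕ) :
    macmahon r c m *
        (prodFactorials (c + m) * prodFactorials (m + r) * prodFactorials (r + c) : ℕ) =
      (prodFactorials (c + m + r) * prodFactorials c * prodFactorials m * prodFactorials r :
        ℕ) := by
  push_cast
  induction r with
  | zero => simp [macmahon, prodFactorials, mul_right_comm]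
  | succ r ih =>
    -- the new row contributes `(c+r+m)! r! / ((c+r)! (r+m)!)`
    have hN := prod_Icc_natCast_add_mul_factorial (c + r) m
    have hD := prod_Icc_natCast_add_mul_factorial r m
    have hD0 : ∏ j ∈ Icc 1 m, ((r : ℚ) + j) ≠ 0 :=
      prod_ne_zero_iff.2 fun j hj => by have := (mem_Icc.1 hj).1; norm_cast; omega
    rw [macmahon_succ, prod_div_distrib, ← add_assoc, ← add_assoc, prodFactorials_succ,
      prodFactorials_succ, prodFactorials_succ, add_right_comm r 1 c, prodFactorials_succ]
    push_cast
    field_simp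
    rw [show c + m + r = c + r + m by ring, show m + r = r + m by ring, add_comm r c] at *
    push_cast at hN
    linear_combination (∏ j ∈ Icc 1 m, ((r : ℚ) + j)) * (r ! : ℚ) * ((c + r + m)! : ℚ) * ih +
      macmahon r c m * prodFactorials (c + m) * prodFactorials (r + m) * prodFactorials (c + r) *
        (((r + m)! : ℚ) * hN - ((c + r + m)! : ℚ) * hD)

theorem exists_macmahon_eq_natCast (r c m : ℕ) : ∃ N : ℕ, 0 < N ∧ macmahon r c m = N := by
  have hpos := prodFactorials_pos
  have hden := mul_pos (mul_pos (hpos (c + m)) (hpos (m + r))) (hpos (r + c))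
  have hnum := mul_pos (mul_pos (mul_pos (hpos (c + m + r)) (hpos c)) (hpos m)) (hpos r)
  obtain ⟨N, hN⟩ := prodFactorials_dvd c m r
  have h := macmahon_mul_prodFactorials r c m
  rw [hN, Nat.cast_mul _ N, mul_comm _ (N : ℚ)] at h
  exact ⟨N, Nat.pos_of_mul_pos_left (hN ▸ hnum), mul_right_cancel₀ (by exact_mod_cast hden.ne') h⟩

/-- `P(1,1,1) = 2`, `P(2,2,2) = 20`, and for all positive `r, c, m` the product
`P(r,c,m)` is a (positive) natural number. -/
theorem stmt_6 :
    macmahon 1 1 1 = 2 ∧ macmahon 2 2 2 = 20 ∧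
    ∀ r c m : ℕ, 1 ≤ r → 1 ≤ c → 1 ≤ m →
      ∃ N : ℕ, 0 < N ∧ macmahon r c m = N :=
  ⟨by norm_num [macmahon], by norm_num [macmahon, prod_Icc_succ_top],
    fun r c m _ _ _ => exists_macmahon_eq_natCast r c m⟩
end

section
/- Let θ₁ and θ₂ be height functions of two lozenge tilings of a simply connected triangulated region R (normalized to agree on the boundary). Then the pointwise maximum max(θ₁,θ₂) and pointwise minimum min(θ₁,θ₂) are again height functions of lozenge tilings of R; hence the set of tilings of R, ordered by pointwise comparison of height functions, is a lattice. -/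
/-- The combinatorial characterization of height functions of lozenge tilings of a simply
connected triangulated region: the region is presented by its set `Eint` of (interior) edges
and its set `Ebd` of boundary edges (pairs of vertices), together with the fixed mod-3
colouring `φ` of the vertex lattice.  A height function takes the prescribed values mod 3,
changes by at most 2 along any edge of the region, and changes by exactly 1 along every
boundary edge. -/
def IsLozHeightFn (Eint Ebd : Set ((ℤ × ℤ) × (ℤ × ℤ))) (φ : ℤ × ℤ → ZMod 3)
    (h : ℤ × ℤ → ℤ) : Prop :=
  (∀ v : ℤ × ℤ, (h v : ZMod 3) = φ v) ∧
  (∀ e ∈ Eint, |h e.1 - h e.2| ≤ 2) ∧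
  (∀ e ∈ Ebd, |h e.1 - h e.2| = 1)

/-- if `θ₁, θ₂` are height functions of two lozenge tilings of a simply connected
triangulated region, normalized to agree on the boundary, then their pointwise maximum and
pointwise minimum are again height functions; hence the set of tilings, ordered by pointwise
comparison of height functions, is a lattice. -/
theorem stmt_8 (Eint Ebd : Set ((ℤ × ℤ) × (ℤ × ℤ))) (φ : ℤ × ℤ → ZMod 3)
    (θ₁ θ₂ : ℤ × ℤ → ℤ)
    (h₁ : IsLozHeightFn Eint Ebd φ θ₁) (h₂ : IsLozHeightFn Eint Ebd φ θ₂)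
    (hbd : ∀ e ∈ Ebd, θ₁ e.1 = θ₂ e.1 ∧ θ₁ e.2 = θ₂ e.2) :
    IsLozHeightFn Eint Ebd φ (fun v => max (θ₁ v) (θ₂ v)) ∧
    IsLozHeightFn Eint Ebd φ (fun v => min (θ₁ v) (θ₂ v)) := by
  obtain ⟨m₁, e₁, b₁⟩ := h₁
  obtain ⟨m₂, e₂, b₂⟩ := h₂
  have key : ∀ a b c d : ℤ, |a - c| ≤ 2 → |b - d| ≤ 2 →
      |max a b - max c d| ≤ 2 ∧ |min a b - min c d| ≤ 2 := by
    intro a b c d hac hbd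
    rw [abs_le] at hac hbd
    rcases le_total a b with h | h <;> rcases le_total c d with h' | h' <;>
      simp [max_eq_left, max_eq_right, min_eq_left, min_eq_right, h, h', abs_le] <;> omega
  refine ⟨⟨?_, ?_, ?_⟩, ?_, ?_, ?_⟩
  · intro v
    rcases max_choice (θ₁ v) (θ₂ v) with h | h <;> simp [h, m₁ v, m₂ v]
  · intro e he
    exact (key _ _ _ _ (e₁ e he) (e₂ e he)).1
  · intro e he
    obtain ⟨hx, hy⟩ := hbd e he
    simpa [hx, hy] using b₂ e he
  · intro v
    rcases min_choice (θ₁ v) (θ₂ v) with h | h <;> simp [h, m₁ v, m₂ v]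
  · intro e he
    exact (key _ _ _ _ (e₁ e he) (e₂ e he)).2
  · intro e he
    obtain ⟨hx, hy⟩ := hbd e he
    simpa [hx, hy] using b₂ e he
end

section
/- The analogous lattice property holds for domino tilings: if θ₁, θ₂ are height functions of two domino tilings of a simply connected quadriculated region R (agreeing on the boundary), then max(θ₁,θ₂) and min(θ₁,θ₂) are height functions of domino tilings of R. -/
/-- The combinatorial characterization of height functions of domino tilings of a simply
connected quadriculated region: the region is presented by its set `Eint` of interior edges and
its set `Ebd` of boundary edges, each edge oriented so that the black square lies on its left,
together with the fixed mod-4 colouring `φ` of the vertex classes.  A height function takes the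
prescribed values mod 4, increases by exactly 1 along every boundary edge (black on the left),
and increases by 1 or decreases by 3 along every interior edge (black on the left). -/
def IsDomHeightFn (Eint Ebd : Set ((ℤ × ℤ) × (ℤ × ℤ))) (φ : ℤ × ℤ → ZMod 4)
    (h : ℤ × ℤ → ℤ) : Prop :=
  (∀ v : ℤ × ℤ, (h v : ZMod 4) = φ v) ∧
  (∀ e ∈ Ebd, h e.2 - h e.1 = 1) ∧
  (∀ e ∈ Eint, h e.2 - h e.1 = 1 ∨ h e.2 - h e.1 = -3)

lemma dvd_of_same_mod4 (a b : ℤ) (h : (a : ZMod 4) = (b : ZMod 4)) : (4 : ℤ) ∣ a - b := by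
  have : ((a - b : ℤ) : ZMod 4) = 0 := by push_cast; rw [h]; ring
  exact (ZMod.intCast_zmod_eq_zero_iff_dvd _ 4).mp this

/-- if `θ₁, θ₂` are height functions of two domino tilings of a simply connected
quadriculated region, agreeing on the boundary, then their pointwise maximum and minimum are
again height functions of domino tilings. -/
theorem stmt_9 (Eint Ebd : Set ((ℤ × ℤ) × (ℤ × ℤ))) (φ : ℤ × ℤ → ZMod 4)
    (θ₁ θ₂ : ℤ × ℤ → ℤ)
    (h₁ : IsDomHeightFn Eint Ebd φ θ₁) (h₂ : IsDomHeightFn Eint Ebd φ θ₂)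
    (hbd : ∀ e ∈ Ebd, θ₁ e.1 = θ₂ e.1 ∧ θ₁ e.2 = θ₂ e.2) :
    IsDomHeightFn Eint Ebd φ (fun v => max (θ₁ v) (θ₂ v)) ∧
    IsDomHeightFn Eint Ebd φ (fun v => min (θ₁ v) (θ₂ v)) := by
  obtain ⟨hφ₁, hbd₁, hint₁⟩ := h₁
  obtain ⟨hφ₂, hbd₂, hint₂⟩ := h₂
  have hdvd : ∀ v, (4 : ℤ) ∣ θ₁ v - θ₂ v := fun v =>
    dvd_of_same_mod4 _ _ ((hφ₁ v).trans (hφ₂ v).symm)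
  have hφmax : ∀ v : ℤ × ℤ, ((max (θ₁ v) (θ₂ v) : ℤ) : ZMod 4) = φ v := by
    intro v
    rcases le_total (θ₁ v) (θ₂ v) with h | h
    · rw [max_eq_right h]; exact hφ₂ v
    · rw [max_eq_left h]; exact hφ₁ v
  have hφmin : ∀ v : ℤ × ℤ, ((min (θ₁ v) (θ₂ v) : ℤ) : ZMod 4) = φ v := by
    intro v
    rcases le_total (θ₁ v) (θ₂ v) with h | h
    · rw [min_eq_left h]; exact hφ₁ v
    · rw [min_eq_right h]; exact hφ₂ v
  refine ⟨⟨hφmax, ?_, ?_⟩, ⟨hφmin, ?_, ?_⟩⟩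
  · intro e he
    obtain ⟨ha, hb⟩ := hbd e he
    have := hbd₁ e he
    simp only [← ha, ← hb, max_self]
    exact this
  · intro e he
    have d1 := hdvd e.1
    have d2 := hdvd e.2
    have i1 := hint₁ e he
    have i2 := hint₂ e he
    simp only [max_def]
    split_ifs <;> omega
  · intro e he
    obtain ⟨ha, hb⟩ := hbd e he
    have := hbd₁ e he
    simp only [← ha, ← hb, min_self]
    exact this
  · intro e he
    have d1 := hdvd e.1
    have d2 := hdvd e.2
    have i1 := hint₁ e he
    have i2 := hint₂ e he
    simp only [min_def]
    split_ifs <;> omega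
end

section
/- Two lozenge tilings of a simply connected triangulated region differ by a single flip (rotating three lozenges forming a unit hexagon by 60°) if and only if their height functions differ at exactly one vertex, where the difference is exactly 3. -/
/-- Vertices of the triangular lattice are points of `ℤ × ℤ` (coordinates in the basis of two
unit vectors at 60°); two vertices are adjacent when they differ by one of the six unit
directions of the lattice. -/
def triAdjacentV (v w : ℤ × ℤ) : Prop :=
  w - v = (1, 0) ∨ w - v = (0, 1) ∨ w - v = (-1, 1) ∨
  w - v = (-1, 0) ∨ w - v = (0, -1) ∨ w - v = (1, -1)

/-- The triangle lying to the left of the oriented lattice edge from `v` to `w`. -/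
def leftTri (v w : ℤ × ℤ) : Tri :=
  if w = (v.1 + 1, v.2) then (v.1, v.2, true)
  else if w = (v.1, v.2 + 1) then (v.1 - 1, v.2, false)
  else if w = (v.1 - 1, v.2 + 1) then (v.1 - 1, v.2, true)
  else if w = (v.1 - 1, v.2) then (v.1 - 1, v.2 - 1, false)
  else if w = (v.1, v.2 - 1) then (v.1, v.2 - 1, true)
  else (v.1, v.2 - 1, false)

/-- The triangle lying to the right of the oriented lattice edge from `v` to `w`. -/
def rightTri (v w : ℤ × ℤ) : Tri := leftTri w v

/-- Height increment along the oriented edge from `v` to `w`: `+1` if the triangle on the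
right is black (upward), `-1` if it is white. -/
def lozWeight (v w : ℤ × ℤ) : ℤ := if (rightTri v w).2.2 = true then 1 else -1

/-- A lattice edge is free for the tiling `T` when it is not interior to a lozenge of `T`. -/
def LozFreeEdge (T : Finset ((ℤ × ℤ) × Fin 3)) (v w : ℤ × ℤ) : Prop :=
  ¬ ∃ p ∈ T, leftTri v w ∈ lozCells p ∧ rightTri v w ∈ lozCells p

/-- An edge of the triangulated region `R`: at least one adjacent triangle lies in `R`. -/
def LozEdgeOfRegion (R : Finset Tri) (v w : ℤ × ℤ) : Prop :=
  triAdjacentV v w ∧ (leftTri v w ∈ R ∨ rightTri v w ∈ R)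

/-- A height function for the lozenge tiling `T` of `R`. -/
def IsLozHeightFunction (R : Finset Tri) (T : Finset ((ℤ × ℤ) × Fin 3))
    (h : ℤ × ℤ → ℤ) : Prop :=
  ∀ v w, LozEdgeOfRegion R v w → LozFreeEdge T v w → h w = h v + lozWeight v w

/-- The three vertices of a triangle. -/
def triVertices (t : Tri) : Finset (ℤ × ℤ) :=
  if t.2.2 then {(t.1, t.2.1), (t.1 + 1, t.2.1), (t.1, t.2.1 + 1)}
  else {(t.1 + 1, t.2.1), (t.1, t.2.1 + 1), (t.1 + 1, t.2.1 + 1)}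

/-- `v` is a vertex of the region `R`. -/
def LozVertexOf (R : Finset Tri) (v : ℤ × ℤ) : Prop := ∃ t ∈ R, v ∈ triVertices t

/-- A boundary vertex of `R`: also a vertex of some triangle not in `R`. -/
def LozBoundaryVertex (R : Finset Tri) (v : ℤ × ℤ) : Prop :=
  LozVertexOf R v ∧ ∃ t : Tri, t ∉ R ∧ v ∈ triVertices t

/-- The finite set of vertices of the region `R`. -/
def lozVertexFinset (R : Finset Tri) : Finset (ℤ × ℤ) := R.biUnion triVertices

/-- One of the two ways of tiling by three lozenges the unit hexagon centred at vertex `v`. -/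
def hexA (v : ℤ × ℤ) : Finset ((ℤ × ℤ) × Fin 3) :=
  {((v.1, v.2), 1), ((v.1 - 1, v.2), 2), ((v.1, v.2 - 1), 0)}

/-- The other way of tiling by three lozenges the unit hexagon centred at vertex `v`. -/
def hexB (v : ℤ × ℤ) : Finset ((ℤ × ℤ) × Fin 3) :=
  {((v.1 - 1, v.2), 0), ((v.1, v.2 - 1), 1), ((v.1, v.2), 2)}

/-- `T'` is obtained from `T` by a flip: the three lozenges of `T` tiling a unit hexagon are
rotated by 60°. -/
def LozFlipRel (T T' : Finset ((ℤ × ℤ) × Fin 3)) : Prop :=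
  ∃ v : ℤ × ℤ,
    (hexA v ⊆ T ∧ T' = (T \ hexA v) ∪ hexB v) ∨
    (hexB v ⊆ T ∧ T' = (T \ hexB v) ∪ hexA v)

/-- Two triangles are adjacent when they share an edge. -/
def triAdjCell (s t : Tri) : Prop :=
  (s.2.2 = true ∧ t.2.2 = false ∧
    (t = (s.1, s.2.1, false) ∨ t = (s.1 - 1, s.2.1, false) ∨ t = (s.1, s.2.1 - 1, false))) ∨
  (t.2.2 = true ∧ s.2.2 = false ∧
    (s = (t.1, t.2.1, false) ∨ s = (t.1 - 1, t.2.1, false) ∨ s = (t.1, t.2.1 - 1, false)))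

/-- A set of triangles is connected when any two of its elements are joined by a path of
edge-adjacent triangles inside the set. -/
def LozConnSet (S : Set Tri) : Prop :=
  ∀ a ∈ S, ∀ b ∈ S, Relation.ReflTransGen (fun p q => triAdjCell p q ∧ p ∈ S ∧ q ∈ S) a b

/-- A finite triangulated region is simply connected when both it and its complement are
connected. -/
def LozSimplyConnected (R : Finset Tri) : Prop :=
  LozConnSet (↑R : Set Tri) ∧ LozConnSet ((↑R : Set Tri)ᶜ)
section evals
variable (x y : ℤ)
lemma leftTri_E : leftTri (x,y) (x+1,y) = (x,y,true) := by simp [leftTri]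
lemma leftTri_NE : leftTri (x,y) (x,y+1) = (x-1,y,false) := by simp [leftTri, Prod.ext_iff]
lemma leftTri_NW : leftTri (x,y) (x-1,y+1) = (x-1,y,true) := by simp [leftTri, Prod.ext_iff]
lemma leftTri_W : leftTri (x,y) (x-1,y) = (x-1,y-1,false) := by simp [leftTri, Prod.ext_iff]; try omega
lemma leftTri_SW : leftTri (x,y) (x,y-1) = (x,y-1,true) := by
  have h1 : (x, y-1) ≠ ((x:ℤ)+1, y) := by simp [Prod.ext_iff]; try omega
  have h2 : (x, y-1) ≠ ((x:ℤ), y+1) := by simp [Prod.ext_iff]; try omega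
  have h3 : (x, y-1) ≠ ((x:ℤ)-1, y+1) := by simp [Prod.ext_iff]; try omega
  have h4 : (x, y-1) ≠ ((x:ℤ)-1, y) := by simp [Prod.ext_iff]; try omega
  simp [leftTri, h1, h2, h3, h4]
lemma leftTri_SE : leftTri (x,y) (x+1,y-1) = (x,y-1,false) := by
  have h1 : (x+1, y-1) ≠ ((x:ℤ)+1, y) := by simp [Prod.ext_iff]; try omega
  have h2 : (x+1, y-1) ≠ ((x:ℤ), y+1) := by simp [Prod.ext_iff]; try omega
  have h3 : (x+1, y-1) ≠ ((x:ℤ)-1, y+1) := by simp [Prod.ext_iff]; try omega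
  have h4 : (x+1, y-1) ≠ ((x:ℤ)-1, y) := by simp [Prod.ext_iff]; try omega
  have h5 : (x+1, y-1) ≠ ((x:ℤ), y-1) := by simp
  simp [leftTri, h1, h2, h3, h4, h5]
end evals
section evals2
variable (x y : ℤ)
lemma rightTri_E : rightTri (x,y) (x+1,y) = (x,y-1,false) := by
  have := leftTri_W (x+1) y; rw [rightTri]; convert this using 3 <;> ring
lemma rightTri_NE : rightTri (x,y) (x,y+1) = (x,y,true) := by
  have := leftTri_SW x (y+1); rw [rightTri]; convert this using 3 <;> ring
lemma rightTri_NW : rightTri (x,y) (x-1,y+1) = (x-1,y,false) := by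
  have := leftTri_SE (x-1) (y+1); rw [rightTri]; convert this using 3 <;> ring
lemma rightTri_W : rightTri (x,y) (x-1,y) = (x-1,y,true) := by
  have := leftTri_E (x-1) y; rw [rightTri]; convert this using 3 <;> ring
lemma rightTri_SW : rightTri (x,y) (x,y-1) = (x-1,y-1,false) := by
  have := leftTri_NE x (y-1); rw [rightTri]; convert this using 3 <;> ring
lemma rightTri_SE : rightTri (x,y) (x+1,y-1) = (x,y-1,true) := by
  have := leftTri_NW (x+1) (y-1); rw [rightTri]; convert this using 3 <;> ring
lemma wt_E : lozWeight (x,y) (x+1,y) = -1 := by rw [lozWeight, rightTri_E]; simp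
lemma wt_NE : lozWeight (x,y) (x,y+1) = 1 := by rw [lozWeight, rightTri_NE]; simp
lemma wt_NW : lozWeight (x,y) (x-1,y+1) = -1 := by rw [lozWeight, rightTri_NW]; simp
lemma wt_W : lozWeight (x,y) (x-1,y) = 1 := by rw [lozWeight, rightTri_W]; simp
lemma wt_SW : lozWeight (x,y) (x,y-1) = -1 := by rw [lozWeight, rightTri_SW]; simp
lemma wt_SE : lozWeight (x,y) (x+1,y-1) = 1 := by rw [lozWeight, rightTri_SE]; simp
end evals2

lemma lozCells0 (x y : ℤ) : lozCells ((x,y),0) = {(x,y,true),(x,y,false)} := by simp [lozCells]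
lemma lozCells1 (x y : ℤ) : lozCells ((x,y),1) = {(x,y,true),(x-1,y,false)} := by simp [lozCells]
lemma lozCells2 (x y : ℤ) : lozCells ((x,y),2) = {(x,y,true),(x,y-1,false)} := by simp [lozCells]

lemma up_mem {q : (ℤ×ℤ)×Fin 3} {x y : ℤ} (h : ((x,y,true) : Tri) ∈ lozCells q) : q.1 = (x,y) := by
  obtain ⟨⟨a,b⟩,k⟩ := q
  fin_cases k <;> simp [lozCells, Prod.ext_iff] at h <;> simp [Prod.ext_iff] <;> omega

lemma down_mem {q : (ℤ×ℤ)×Fin 3} {x y : ℤ} (h : ((x,y,false) : Tri) ∈ lozCells q) :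
    (q.2 = 0 ∧ q.1 = (x, y)) ∨ (q.2 = 1 ∧ q.1 = (x+1, y)) ∨ (q.2 = 2 ∧ q.1 = (x, y+1)) := by
  obtain ⟨⟨a,b⟩,k⟩ := q
  fin_cases k <;> simp [lozCells, Prod.ext_iff] at h <;> simp [Prod.ext_iff] <;> omega
lemma cell_mem {T R} (hT : IsLozTiling T R) {p t} (hp : p ∈ T) (ht : t ∈ lozCells p) : t ∈ R := by
  rw [← hT.2]; exact Finset.mem_biUnion.mpr ⟨p, hp, ht⟩

lemma cover_unique {T R} (hT : IsLozTiling T R) {p q t} (hp : p ∈ T) (hq : q ∈ T)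
    (ht : t ∈ lozCells p) (ht' : t ∈ lozCells q) : p = q := by
  by_contra h
  exact (Finset.disjoint_left.1 (hT.1 p hp q hq h)) ht ht'

lemma free_of_left {T R} (hT : IsLozTiling T R) {p a b} (hp : p ∈ T)
    (hl : leftTri a b ∈ lozCells p) (hr : rightTri a b ∉ lozCells p) : LozFreeEdge T a b := by
  rintro ⟨q, hq, h1, h2⟩
  exact hr ((cover_unique hT hp hq hl h1) ▸ h2)

lemma free_of_right {T R} (hT : IsLozTiling T R) {p a b} (hp : p ∈ T)
    (hl : leftTri a b ∉ lozCells p) (hr : rightTri a b ∈ lozCells p) : LozFreeEdge T a b := by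
  rintro ⟨q, hq, h1, h2⟩
  exact hl ((cover_unique hT hp hq hr h2) ▸ h1)

section cover
variable {q : (ℤ×ℤ)×Fin 3} (x y : ℤ)

lemma cover_E (hl : leftTri (x,y) (x+1,y) ∈ lozCells q)
    (hr : rightTri (x,y) (x+1,y) ∈ lozCells q) : q = ((x,y),2) := by
  rw [leftTri_E] at hl; rw [rightTri_E] at hr
  have h1 := up_mem hl
  rcases down_mem hr with ⟨h2,h3⟩|⟨h2,h3⟩|⟨h2,h3⟩ <;>
    (rw [h1] at h3; simp [Prod.ext_iff] at h3 ⊢) <;> try omega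
  exact ⟨Prod.ext_iff.mp h1, h2⟩

lemma cover_NE (hl : leftTri (x,y) (x,y+1) ∈ lozCells q)
    (hr : rightTri (x,y) (x,y+1) ∈ lozCells q) : q = ((x,y),1) := by
  rw [leftTri_NE] at hl; rw [rightTri_NE] at hr
  have h1 := up_mem hr
  rcases down_mem hl with ⟨h2,h3⟩|⟨h2,h3⟩|⟨h2,h3⟩ <;>
    (rw [h1] at h3; simp [Prod.ext_iff] at h3 ⊢) <;> try omega
  exact ⟨Prod.ext_iff.mp h1, h2⟩

lemma cover_SE (hl : leftTri (x,y) (x+1,y-1) ∈ lozCells q)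
    (hr : rightTri (x,y) (x+1,y-1) ∈ lozCells q) : q = ((x,y-1),0) := by
  rw [leftTri_SE] at hl; rw [rightTri_SE] at hr
  have h1 := up_mem hr
  rcases down_mem hl with ⟨h2,h3⟩|⟨h2,h3⟩|⟨h2,h3⟩ <;>
    (rw [h1] at h3; simp [Prod.ext_iff] at h3 ⊢) <;> try omega
  exact ⟨Prod.ext_iff.mp h1, h2⟩
end cover
section adj
variable (x y : ℤ)
lemma adj_E : triAdjacentV (x,y) (x+1,y) := by simp [triAdjacentV, Prod.ext_iff]
lemma adj_NE : triAdjacentV (x,y) (x,y+1) := by simp [triAdjacentV, Prod.ext_iff]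
lemma adj_NW : triAdjacentV (x,y) (x-1,y+1) := by simp [triAdjacentV, Prod.ext_iff]; try omega
lemma adj_W : triAdjacentV (x,y) (x-1,y) := by simp [triAdjacentV, Prod.ext_iff]; try omega
lemma adj_SW : triAdjacentV (x,y) (x,y-1) := by simp [triAdjacentV, Prod.ext_iff]; try omega
lemma adj_SE : triAdjacentV (x,y) (x+1,y-1) := by simp [triAdjacentV, Prod.ext_iff]; try omega
end adj

section primed
variable (x y z w a b : ℤ)
lemma adj_E' (h1 : z = x+1) (h2 : w = y) : triAdjacentV (x,y) (z,w) := by rw [h1, h2]; exact adj_E x y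
lemma adj_NE' (h1 : z = x) (h2 : w = y+1) : triAdjacentV (x,y) (z,w) := by rw [h1, h2]; exact adj_NE x y
lemma adj_NW' (h1 : z = x-1) (h2 : w = y+1) : triAdjacentV (x,y) (z,w) := by rw [h1, h2]; exact adj_NW x y
lemma adj_W' (h1 : z = x-1) (h2 : w = y) : triAdjacentV (x,y) (z,w) := by rw [h1, h2]; exact adj_W x y
lemma adj_SW' (h1 : z = x) (h2 : w = y-1) : triAdjacentV (x,y) (z,w) := by rw [h1, h2]; exact adj_SW x y
lemma adj_SE' (h1 : z = x+1) (h2 : w = y-1) : triAdjacentV (x,y) (z,w) := by rw [h1, h2]; exact adj_SE x y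

lemma leftTri_E' (h1 : z = x+1) (h2 : w = y) (h3 : a = x) (h4 : b = y) :
    leftTri (x,y) (z,w) = (a,b,true) := by rw [h1, h2, h3, h4]; exact leftTri_E x y
lemma leftTri_NE' (h1 : z = x) (h2 : w = y+1) (h3 : a = x-1) (h4 : b = y) :
    leftTri (x,y) (z,w) = (a,b,false) := by rw [h1, h2, h3, h4]; exact leftTri_NE x y
lemma leftTri_NW' (h1 : z = x-1) (h2 : w = y+1) (h3 : a = x-1) (h4 : b = y) :
    leftTri (x,y) (z,w) = (a,b,true) := by rw [h1, h2, h3, h4]; exact leftTri_NW x y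
lemma leftTri_W' (h1 : z = x-1) (h2 : w = y) (h3 : a = x-1) (h4 : b = y-1) :
    leftTri (x,y) (z,w) = (a,b,false) := by rw [h1, h2, h3, h4]; exact leftTri_W x y
lemma leftTri_SW' (h1 : z = x) (h2 : w = y-1) (h3 : a = x) (h4 : b = y-1) :
    leftTri (x,y) (z,w) = (a,b,true) := by rw [h1, h2, h3, h4]; exact leftTri_SW x y
lemma leftTri_SE' (h1 : z = x+1) (h2 : w = y-1) (h3 : a = x) (h4 : b = y-1) :
    leftTri (x,y) (z,w) = (a,b,false) := by rw [h1, h2, h3, h4]; exact leftTri_SE x y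

lemma rightTri_E' (h1 : z = x+1) (h2 : w = y) (h3 : a = x) (h4 : b = y-1) :
    rightTri (x,y) (z,w) = (a,b,false) := by rw [h1, h2, h3, h4]; exact rightTri_E x y
lemma rightTri_NE' (h1 : z = x) (h2 : w = y+1) (h3 : a = x) (h4 : b = y) :
    rightTri (x,y) (z,w) = (a,b,true) := by rw [h1, h2, h3, h4]; exact rightTri_NE x y
lemma rightTri_NW' (h1 : z = x-1) (h2 : w = y+1) (h3 : a = x-1) (h4 : b = y) :
    rightTri (x,y) (z,w) = (a,b,false) := by rw [h1, h2, h3, h4]; exact rightTri_NW x y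
lemma rightTri_W' (h1 : z = x-1) (h2 : w = y) (h3 : a = x-1) (h4 : b = y) :
    rightTri (x,y) (z,w) = (a,b,true) := by rw [h1, h2, h3, h4]; exact rightTri_W x y
lemma rightTri_SW' (h1 : z = x) (h2 : w = y-1) (h3 : a = x-1) (h4 : b = y-1) :
    rightTri (x,y) (z,w) = (a,b,false) := by rw [h1, h2, h3, h4]; exact rightTri_SW x y
lemma rightTri_SE' (h1 : z = x+1) (h2 : w = y-1) (h3 : a = x) (h4 : b = y-1) :
    rightTri (x,y) (z,w) = (a,b,true) := by rw [h1, h2, h3, h4]; exact rightTri_SE x y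

lemma wt_E' (h1 : z = x+1) (h2 : w = y) : lozWeight (x,y) (z,w) = -1 := by rw [h1, h2]; exact wt_E x y
lemma wt_NE' (h1 : z = x) (h2 : w = y+1) : lozWeight (x,y) (z,w) = 1 := by rw [h1, h2]; exact wt_NE x y
lemma wt_NW' (h1 : z = x-1) (h2 : w = y+1) : lozWeight (x,y) (z,w) = -1 := by rw [h1, h2]; exact wt_NW x y
lemma wt_W' (h1 : z = x-1) (h2 : w = y) : lozWeight (x,y) (z,w) = 1 := by rw [h1, h2]; exact wt_W x y
lemma wt_SW' (h1 : z = x) (h2 : w = y-1) : lozWeight (x,y) (z,w) = -1 := by rw [h1, h2]; exact wt_SW x y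
lemma wt_SE' (h1 : z = x+1) (h2 : w = y-1) : lozWeight (x,y) (z,w) = 1 := by rw [h1, h2]; exact wt_SE x y
end primed
section delta
variable {T : Finset ((ℤ×ℤ)×Fin 3)} {R : Finset Tri} {h : ℤ×ℤ → ℤ} {p : (ℤ×ℤ)×Fin 3}

lemma delta_E' (hT : IsLozTiling T R) (hh : IsLozHeightFunction R T h) (x y : ℤ) (hp : p ∈ T)
    (hl : leftTri (x,y) (x+1,y) ∈ lozCells p) (hr : rightTri (x,y) (x+1,y) ∈ lozCells p) :
    h (x+1,y) = h (x,y) + 2 := by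
  obtain rfl := cover_E x y hl hr
  have hcu : ((x,y,true) : Tri) ∈ R := cell_mem hT hp (by simp [lozCells2])
  have hcd : ((x,y-1,false) : Tri) ∈ R := cell_mem hT hp (by simp [lozCells2])
  have e1 : h (x+1,y-1) = h (x,y) + lozWeight (x,y) (x+1,y-1) := by
    refine hh _ _ ⟨adj_SE x y, Or.inl ?_⟩ (free_of_left hT hp ?_ ?_)
    · rw [leftTri_SE]; exact hcd
    · rw [leftTri_SE]; simp [lozCells2]
    · rw [rightTri_SE]; simp [lozCells2]
  have e2 : h (x+1,y) = h (x+1,y-1) + lozWeight (x+1,y-1) (x+1,y) := by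
    refine hh _ _ ⟨adj_NE' _ _ _ _ rfl (by ring), Or.inl ?_⟩ (free_of_left hT hp ?_ ?_)
    · rw [leftTri_NE' _ _ _ _ _ _ rfl (by ring) (by ring) rfl]; exact hcd
    · rw [leftTri_NE' _ _ _ _ _ _ rfl (by ring) (by ring) rfl]; simp [lozCells2]
    · rw [rightTri_NE' _ _ _ _ _ _ rfl (by ring) rfl rfl]; simp [lozCells2, Prod.ext_iff]; try omega
  rw [wt_SE] at e1
  rw [wt_NE' _ _ _ _ rfl (by ring)] at e2
  omega

lemma delta_NE' (hT : IsLozTiling T R) (hh : IsLozHeightFunction R T h) (x y : ℤ) (hp : p ∈ T)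
    (hl : leftTri (x,y) (x,y+1) ∈ lozCells p) (hr : rightTri (x,y) (x,y+1) ∈ lozCells p) :
    h (x,y+1) = h (x,y) - 2 := by
  obtain rfl := cover_NE x y hl hr
  have hcu : ((x,y,true) : Tri) ∈ R := cell_mem hT hp (by simp [lozCells1])
  have e1 : h (x+1,y) = h (x,y) + lozWeight (x,y) (x+1,y) := by
    refine hh _ _ ⟨adj_E x y, Or.inl ?_⟩ (free_of_left hT hp ?_ ?_)
    · rw [leftTri_E]; exact hcu
    · rw [leftTri_E]; simp [lozCells1]
    · rw [rightTri_E]; simp [lozCells1, Prod.ext_iff]; try omega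
  have e2 : h (x,y+1) = h (x+1,y) + lozWeight (x+1,y) (x,y+1) := by
    refine hh _ _ ⟨adj_NW' _ _ _ _ (by ring) rfl, Or.inl ?_⟩ (free_of_left hT hp ?_ ?_)
    · rw [leftTri_NW' _ _ _ _ _ _ (by ring) rfl (by ring) rfl]; exact hcu
    · rw [leftTri_NW' _ _ _ _ _ _ (by ring) rfl (by ring) rfl]; simp [lozCells1]
    · rw [rightTri_NW' _ _ _ _ _ _ (by ring) rfl (by ring) rfl]; simp [lozCells1, Prod.ext_iff]; try omega
  rw [wt_E] at e1
  rw [wt_NW' _ _ _ _ (by ring) rfl] at e2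
  omega

lemma delta_SE' (hT : IsLozTiling T R) (hh : IsLozHeightFunction R T h) (x y : ℤ) (hp : p ∈ T)
    (hl : leftTri (x,y) (x+1,y-1) ∈ lozCells p) (hr : rightTri (x,y) (x+1,y-1) ∈ lozCells p) :
    h (x+1,y-1) = h (x,y) - 2 := by
  obtain rfl := cover_SE x y hl hr
  have hcu : ((x,y-1,true) : Tri) ∈ R := cell_mem hT hp (by simp [lozCells0])
  have e1 : h (x,y-1) = h (x,y) + lozWeight (x,y) (x,y-1) := by
    refine hh _ _ ⟨adj_SW x y, Or.inl ?_⟩ (free_of_left hT hp ?_ ?_)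
    · rw [leftTri_SW]; exact hcu
    · rw [leftTri_SW]; simp [lozCells0]
    · rw [rightTri_SW]; simp [lozCells0, Prod.ext_iff]; try omega
  have e2 : h (x+1,y-1) = h (x,y-1) + lozWeight (x,y-1) (x+1,y-1) := by
    refine hh _ _ ⟨adj_E' _ _ _ _ rfl rfl, Or.inl ?_⟩ (free_of_left hT hp ?_ ?_)
    · rw [leftTri_E' _ _ _ _ _ _ rfl rfl rfl rfl]; exact hcu
    · rw [leftTri_E' _ _ _ _ _ _ rfl rfl rfl rfl]; simp [lozCells0]
    · rw [rightTri_E' _ _ _ _ _ _ rfl rfl rfl rfl]; simp [lozCells0, Prod.ext_iff]; try omega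
  rw [wt_SW] at e1
  rw [wt_E' _ _ _ _ rfl rfl] at e2
  omega
end delta
section dispatch
variable {T : Finset ((ℤ×ℤ)×Fin 3)} {R : Finset Tri} {h : ℤ×ℤ → ℤ} {p : (ℤ×ℤ)×Fin 3}

lemma nonfree_delta (hT : IsLozTiling T R) (hh : IsLozHeightFunction R T h) {a b : ℤ×ℤ}
    (hadj : triAdjacentV a b) (hp : p ∈ T)
    (hl : leftTri a b ∈ lozCells p) (hr : rightTri a b ∈ lozCells p) :
    h b = h a - 2 * lozWeight a b := by
  obtain ⟨x, y⟩ := a; obtain ⟨z, w⟩ := b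
  rcases hadj with hc|hc|hc|hc|hc|hc <;>
    [ (obtain ⟨rfl, rfl⟩ : z = x + 1 ∧ y = w := by
        simp [Prod.ext_iff] at hc; omega);
      (obtain ⟨rfl, rfl⟩ : x = z ∧ w = y + 1 := by
        simp [Prod.ext_iff] at hc; omega);
      (obtain ⟨rfl, rfl⟩ : z = x - 1 ∧ w = y + 1 := by
        simp [Prod.ext_iff] at hc; omega);
      (obtain ⟨rfl, rfl⟩ : z = x - 1 ∧ y = w := by
        simp [Prod.ext_iff] at hc; omega);
      (obtain ⟨rfl, rfl⟩ : x = z ∧ w = y - 1 := by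
        simp [Prod.ext_iff] at hc; omega);
      (obtain ⟨rfl, rfl⟩ : z = x + 1 ∧ w = y - 1 := by
        simp [Prod.ext_iff] at hc; omega)]
  · -- E
    have := delta_E' hT hh x y hp hl hr
    rw [wt_E]; omega
  · -- NE
    have := delta_NE' hT hh x y hp hl hr
    rw [wt_NE]; omega
  · -- NW : reverse of SE from (x-1, y+1)
    have e : ((x:ℤ)-1+1, (y:ℤ)+1-1) = ((x:ℤ), (y:ℤ)) := by norm_num
    have hl' : leftTri (x-1,y+1) (x-1+1,y+1-1) ∈ lozCells p := by rw [e]; exact hr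
    have hr' : rightTri (x-1,y+1) (x-1+1,y+1-1) ∈ lozCells p := by rw [rightTri, e]; exact hl
    have := delta_SE' hT hh (x-1) (y+1) hp hl' hr'
    rw [e] at this
    rw [wt_NW]; omega
  · -- W : reverse of E from (x-1, y)
    have e : ((x:ℤ)-1+1, (y:ℤ)) = ((x:ℤ), (y:ℤ)) := by norm_num
    have hl' : leftTri (x-1,y) (x-1+1,y) ∈ lozCells p := by rw [e]; exact hr
    have hr' : rightTri (x-1,y) (x-1+1,y) ∈ lozCells p := by rw [rightTri, e]; exact hl
    have := delta_E' hT hh (x-1) y hp hl' hr'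
    rw [e] at this
    rw [wt_W]; omega
  · -- SW : reverse of NE from (x, y-1)
    have e : ((x:ℤ), (y:ℤ)-1+1) = ((x:ℤ), (y:ℤ)) := by norm_num
    have hl' : leftTri (x,y-1) (x,y-1+1) ∈ lozCells p := by rw [e]; exact hr
    have hr' : rightTri (x,y-1) (x,y-1+1) ∈ lozCells p := by rw [rightTri, e]; exact hl
    have := delta_NE' hT hh x (y-1) hp hl' hr'
    rw [e] at this
    rw [wt_SW]; omega
  · -- SE
    have := delta_SE' hT hh x y hp hl hr
    rw [wt_SE]; omega

lemma dichotomy (hT : IsLozTiling T R) (hh : IsLozHeightFunction R T h) {a b : ℤ×ℤ}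
    (hadj : triAdjacentV a b) (hreg : leftTri a b ∈ R ∨ rightTri a b ∈ R) :
    h b = h a + lozWeight a b ∨ h b = h a - 2 * lozWeight a b := by
  by_cases hf : LozFreeEdge T a b
  · exact Or.inl (hh _ _ ⟨hadj, hreg⟩ hf)
  · rw [LozFreeEdge, not_not] at hf
    obtain ⟨p, hp, h1, h2⟩ := hf
    exact Or.inr (nonfree_delta hT hh hadj hp h1 h2)
end dispatch
section memiff
variable {T : Finset ((ℤ×ℤ)×Fin 3)} {R : Finset Tri} {h : ℤ×ℤ → ℤ}

lemma mem2_iff (hT : IsLozTiling T R) (hh : IsLozHeightFunction R T h) (x y : ℤ)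
    (hu : ((x,y,true) : Tri) ∈ R) :
    ((x,y),2) ∈ T ↔ h (x+1,y) = h (x,y) + 2 := by
  constructor
  · intro hp
    have := nonfree_delta hT hh (adj_E x y) hp
      (by rw [leftTri_E]; simp [lozCells2]) (by rw [rightTri_E]; simp [lozCells2])
    rw [wt_E] at this; omega
  · intro heq
    by_cases hf : LozFreeEdge T (x,y) (x+1,y)
    · have := hh _ _ ⟨adj_E x y, Or.inl (by rw [leftTri_E]; exact hu)⟩ hf
      rw [wt_E] at this; omega
    · rw [LozFreeEdge, not_not] at hf
      obtain ⟨q, hq, h1, h2⟩ := hf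
      rwa [cover_E x y h1 h2] at hq

lemma mem1_iff (hT : IsLozTiling T R) (hh : IsLozHeightFunction R T h) (x y : ℤ)
    (hu : ((x,y,true) : Tri) ∈ R) :
    ((x,y),1) ∈ T ↔ h (x,y+1) = h (x,y) - 2 := by
  constructor
  · intro hp
    have := nonfree_delta hT hh (adj_NE x y) hp
      (by rw [leftTri_NE]; simp [lozCells1]) (by rw [rightTri_NE]; simp [lozCells1])
    rw [wt_NE] at this; omega
  · intro heq
    by_cases hf : LozFreeEdge T (x,y) (x,y+1)
    · have := hh _ _ ⟨adj_NE x y, Or.inr (by rw [rightTri_NE]; exact hu)⟩ hf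
      rw [wt_NE] at this; omega
    · rw [LozFreeEdge, not_not] at hf
      obtain ⟨q, hq, h1, h2⟩ := hf
      rwa [cover_NE x y h1 h2] at hq

lemma mem0_iff (hT : IsLozTiling T R) (hh : IsLozHeightFunction R T h) (x y : ℤ)
    (hu : ((x,y,true) : Tri) ∈ R) :
    ((x,y),0) ∈ T ↔ h (x,y+1) = h (x+1,y) + 2 := by
  have hadj : triAdjacentV (x+1,y) (x,y+1) := adj_NW' (x+1) y _ _ (by ring) rfl
  constructor
  · intro hp
    have := nonfree_delta hT hh hadj hp
      (by rw [leftTri_NW' (x+1) y _ _ _ _ (by ring) rfl (by ring) rfl]; simp [lozCells0])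
      (by rw [rightTri_NW' (x+1) y _ _ _ _ (by ring) rfl (by ring) rfl]; simp [lozCells0])
    rw [wt_NW' (x+1) y _ _ (by ring) rfl] at this; omega
  · intro heq
    by_cases hf : LozFreeEdge T (x+1,y) (x,y+1)
    · have := hh _ _ ⟨hadj, Or.inl (by
        rw [leftTri_NW' (x+1) y _ _ _ _ (by ring) rfl (by ring) rfl]; exact hu)⟩ hf
      rw [wt_NW' (x+1) y _ _ (by ring) rfl] at this; omega
    · rw [LozFreeEdge, not_not] at hf
      obtain ⟨q, hq, h1, h2⟩ := hf
      have e : ((x:ℤ)+1, (y:ℤ)+1-1) = ((x:ℤ)+1, (y:ℤ)) := by norm_num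
      have h1' : leftTri (x,y+1) (x+1,y+1-1) ∈ lozCells q := by rw [e]; exact h2
      have h2' : rightTri (x,y+1) (x+1,y+1-1) ∈ lozCells q := by rw [rightTri, e]; exact h1
      have := cover_SE x (y+1) h1' h2'
      rw [show ((x:ℤ), (y:ℤ)+1-1) = ((x:ℤ), (y:ℤ)) from by norm_num] at this
      rwa [this] at hq
end memiff

lemma coverHex {q : (ℤ×ℤ)×Fin 3} {a b v : ℤ×ℤ} (hadj : triAdjacentV a b)
    (hl : leftTri a b ∈ lozCells q) (hr : rightTri a b ∈ lozCells q)
    (hq : q ∈ hexA v ∨ q ∈ hexB v) : a = v ∨ b = v := by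
  obtain ⟨x, y⟩ := a; obtain ⟨z, w⟩ := b; obtain ⟨vx, vy⟩ := v
  rcases hadj with hc|hc|hc|hc|hc|hc <;>
    [ (obtain ⟨rfl, rfl⟩ : z = x + 1 ∧ y = w := by
        simp [Prod.ext_iff] at hc; omega);
      (obtain ⟨rfl, rfl⟩ : x = z ∧ w = y + 1 := by
        simp [Prod.ext_iff] at hc; omega);
      (obtain ⟨rfl, rfl⟩ : z = x - 1 ∧ w = y + 1 := by
        simp [Prod.ext_iff] at hc; omega);
      (obtain ⟨rfl, rfl⟩ : z = x - 1 ∧ y = w := by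
        simp [Prod.ext_iff] at hc; omega);
      (obtain ⟨rfl, rfl⟩ : x = z ∧ w = y - 1 := by
        simp [Prod.ext_iff] at hc; omega);
      (obtain ⟨rfl, rfl⟩ : z = x + 1 ∧ w = y - 1 := by
        simp [Prod.ext_iff] at hc; omega)]
  · -- E : q = ((x,y),2)
    rw [cover_E x y hl hr] at hq
    simp [hexA, hexB, Prod.ext_iff] at hq
    simp [Prod.ext_iff]; omega
  · -- NE : q = ((x,y),1)
    rw [cover_NE x y hl hr] at hq
    simp [hexA, hexB, Prod.ext_iff] at hq
    simp [Prod.ext_iff]; omega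
  · -- NW : q = ((x-1,y),0)
    have e : ((x:ℤ)-1+1, (y:ℤ)+1-1) = ((x:ℤ), (y:ℤ)) := by norm_num
    have hl' : leftTri (x-1,y+1) (x-1+1,y+1-1) ∈ lozCells q := by rw [e]; exact hr
    have hr' : rightTri (x-1,y+1) (x-1+1,y+1-1) ∈ lozCells q := by rw [rightTri, e]; exact hl
    have hcv := cover_SE (x-1) (y+1) hl' hr'
    rw [show ((x:ℤ)-1, (y:ℤ)+1-1) = ((x:ℤ)-1, (y:ℤ)) from by norm_num] at hcv
    rw [hcv] at hq
    simp [hexA, hexB, Prod.ext_iff] at hq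
    simp [Prod.ext_iff]; omega
  · -- W : q = ((x-1,y),2)
    have e : ((x:ℤ)-1+1, (y:ℤ)) = ((x:ℤ), (y:ℤ)) := by norm_num
    have hl' : leftTri (x-1,y) (x-1+1,y) ∈ lozCells q := by rw [e]; exact hr
    have hr' : rightTri (x-1,y) (x-1+1,y) ∈ lozCells q := by rw [rightTri, e]; exact hl
    rw [cover_E (x-1) y hl' hr'] at hq
    simp [hexA, hexB, Prod.ext_iff] at hq
    simp [Prod.ext_iff]; omega
  · -- SW : q = ((x,y-1),1)
    have e : ((x:ℤ), (y:ℤ)-1+1) = ((x:ℤ), (y:ℤ)) := by norm_num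
    have hl' : leftTri (x,y-1) (x,y-1+1) ∈ lozCells q := by rw [e]; exact hr
    have hr' : rightTri (x,y-1) (x,y-1+1) ∈ lozCells q := by rw [rightTri, e]; exact hl
    rw [cover_NE x (y-1) hl' hr'] at hq
    simp [hexA, hexB, Prod.ext_iff] at hq
    simp [Prod.ext_iff]; omega
  · -- SE : q = ((x,y-1),0)
    rw [cover_SE x y hl hr] at hq
    simp [hexA, hexB, Prod.ext_iff] at hq
    simp [Prod.ext_iff]; omega
lemma up_in_cells (x y : ℤ) (k : Fin 3) : ((x,y,true) : Tri) ∈ lozCells ((x,y),k) := by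
  simp [lozCells]

lemma transfer {T T' : Finset ((ℤ×ℤ)×Fin 3)} {R : Finset Tri} {h h' : ℤ×ℤ → ℤ}
    (hT : IsLozTiling T R) (hT' : IsLozTiling T' R)
    (hh : IsLozHeightFunction R T h) (hh' : IsLozHeightFunction R T' h') {v : ℤ×ℤ}
    (hne : ∀ w, LozVertexOf R w → w ≠ v → h w = h' w) {p : (ℤ×ℤ)×Fin 3} (hp : p ∈ T)
    (hA : p ∉ hexA v) (hB : p ∉ hexB v) : p ∈ T' := by
  obtain ⟨⟨x,y⟩,k⟩ := p; obtain ⟨vx,vy⟩ := v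
  have hu : ((x,y,true) : Tri) ∈ R := cell_mem hT hp (up_in_cells x y k)
  have vert1 : LozVertexOf R (x+1,y) := ⟨(x,y,true), hu, by simp [triVertices]⟩
  have vert2 : LozVertexOf R (x,y+1) := ⟨(x,y,true), hu, by simp [triVertices]⟩
  have vert3 : LozVertexOf R (x,y) := ⟨(x,y,true), hu, by simp [triVertices]⟩
  fin_cases k
  · -- endpoints (x+1,y) (x,y+1)
    have hne1 : ((x:ℤ)+1,(y:ℤ)) ≠ (vx,vy) := by
      intro hc
      apply hB; simp [hexB, Prod.ext_iff] at hc ⊢; omega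
    have hne2 : ((x:ℤ),(y:ℤ)+1) ≠ (vx,vy) := by
      intro hc
      apply hA; simp [hexA, Prod.ext_iff] at hc ⊢; omega
    have hd := (mem0_iff hT hh x y hu).mp hp
    rw [hne _ vert1 hne1, hne _ vert2 hne2] at hd
    exact (mem0_iff hT' hh' x y hu).mpr hd
  · -- endpoints (x,y) (x,y+1)
    have hne1 : ((x:ℤ),(y:ℤ)) ≠ (vx,vy) := by
      intro hc
      apply hA; simp [hexA, Prod.ext_iff] at hc ⊢; omega
    have hne2 : ((x:ℤ),(y:ℤ)+1) ≠ (vx,vy) := by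
      intro hc
      apply hB; simp [hexB, Prod.ext_iff] at hc ⊢; omega
    have hd := (mem1_iff hT hh x y hu).mp hp
    rw [hne _ vert3 hne1, hne _ vert2 hne2] at hd
    exact (mem1_iff hT' hh' x y hu).mpr hd
  · -- endpoints (x,y) (x+1,y)
    have hne1 : ((x:ℤ),(y:ℤ)) ≠ (vx,vy) := by
      intro hc
      apply hB; simp [hexB, Prod.ext_iff] at hc ⊢; omega
    have hne2 : ((x:ℤ)+1,(y:ℤ)) ≠ (vx,vy) := by
      intro hc
      apply hA; simp [hexA, Prod.ext_iff] at hc ⊢; omega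
    have hd := (mem2_iff hT hh x y hu).mp hp
    rw [hne _ vert3 hne1, hne _ vert1 hne2] at hd
    exact (mem2_iff hT' hh' x y hu).mpr hd
lemma flip_core {R : Finset Tri} {T₁ T₂ : Finset ((ℤ×ℤ)×Fin 3)} {h₁ h₂ : ℤ×ℤ → ℤ}
    (hT₁ : IsLozTiling T₁ R) (hT₂ : IsLozTiling T₂ R)
    (hh₁ : IsLozHeightFunction R T₁ h₁) (hh₂ : IsLozHeightFunction R T₂ h₂)
    {v : ℤ×ℤ} (hcell : ∀ t : Tri, v ∈ triVertices t → t ∈ R)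
    (hv3 : h₁ v = h₂ v + 3)
    (hne : ∀ w, LozVertexOf R w → w ≠ v → h₁ w = h₂ w) :
    hexA v ⊆ T₁ ∧ hexB v ⊆ T₂ ∧ (∀ p ∈ hexA v, p ∉ T₂) ∧ (∀ p ∈ hexB v, p ∉ T₁) ∧
      T₂ = (T₁ \ hexA v) ∪ hexB v := by
  obtain ⟨vx,vy⟩ := v
  have hA1 : ((vx,vy,true) : Tri) ∈ R := hcell _ (by simp [triVertices])
  have hA2 : ((vx-1,vy,true) : Tri) ∈ R := hcell _ (by simp [triVertices, Prod.ext_iff]; try omega)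
  have hA3 : ((vx,vy-1,true) : Tri) ∈ R := hcell _ (by simp [triVertices, Prod.ext_iff]; try omega)
  -- vertex facts for the six neighbours
  have vNE : LozVertexOf R (vx,vy+1) := ⟨(vx,vy,true), hA1, by simp [triVertices]⟩
  have vE : LozVertexOf R (vx+1,vy) := ⟨(vx,vy,true), hA1, by simp [triVertices]⟩
  have vW : LozVertexOf R (vx-1,vy) := ⟨(vx-1,vy,true), hA2, by simp [triVertices]⟩
  have vNW : LozVertexOf R (vx-1,vy+1) := ⟨(vx-1,vy,true), hA2, by simp [triVertices]⟩
  have vSE : LozVertexOf R (vx+1,vy-1) := ⟨(vx,vy-1,true), hA3, by simp [triVertices]⟩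
  have vSW : LozVertexOf R (vx,vy-1) := ⟨(vx,vy-1,true), hA3, by simp [triVertices]⟩
  have qNE : h₁ (vx,vy+1) = h₂ (vx,vy+1) := hne _ vNE (by simp)
  have qE : h₁ (vx+1,vy) = h₂ (vx+1,vy) := hne _ vE (by simp)
  have qW : h₁ (vx-1,vy) = h₂ (vx-1,vy) := hne _ vW (by simp)
  have qNW : h₁ (vx-1,vy+1) = h₂ (vx-1,vy+1) := hne _ vNW (by simp [Prod.ext_iff]; try omega)
  have qSE : h₁ (vx+1,vy-1) = h₂ (vx+1,vy-1) := hne _ vSE (by simp [Prod.ext_iff]; try omega)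
  have qSW : h₁ (vx,vy-1) = h₂ (vx,vy-1) := hne _ vSW (by simp)
  -- NE spoke : lozenge ((vx,vy),1)
  have dNE1 := dichotomy hT₁ hh₁ (adj_NE vx vy) (Or.inr (by rw [rightTri_NE]; exact hA1))
  have dNE2 := dichotomy hT₂ hh₂ (adj_NE vx vy) (Or.inr (by rw [rightTri_NE]; exact hA1))
  rw [wt_NE] at dNE1 dNE2
  have mA1 : ((vx,vy),1) ∈ T₁ := (mem1_iff hT₁ hh₁ vx vy hA1).mpr (by omega)
  have nA1 : ((vx,vy),1) ∉ T₂ := fun hm => by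
    have := (mem1_iff hT₂ hh₂ vx vy hA1).mp hm; omega
  -- W spoke : lozenge ((vx-1,vy),2)
  have dW1 := dichotomy hT₁ hh₁ (adj_E' (vx-1) vy vx vy (by ring) rfl)
    (Or.inl (by rw [leftTri_E' (vx-1) vy vx vy (vx-1) vy (by ring) rfl rfl rfl]; exact hA2))
  have dW2 := dichotomy hT₂ hh₂ (adj_E' (vx-1) vy vx vy (by ring) rfl)
    (Or.inl (by rw [leftTri_E' (vx-1) vy vx vy (vx-1) vy (by ring) rfl rfl rfl]; exact hA2))
  rw [wt_E' (vx-1) vy vx vy (by ring) rfl] at dW1 dW2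
  have m2W := mem2_iff hT₁ hh₁ (vx-1) vy hA2
  have m2W' := mem2_iff hT₂ hh₂ (vx-1) vy hA2
  rw [show ((vx:ℤ)-1+1, (vy:ℤ)) = ((vx:ℤ), (vy:ℤ)) from by norm_num] at m2W m2W'
  have mA2 : ((vx-1,vy),2) ∈ T₁ := m2W.mpr (by omega)
  have nA2 : ((vx-1,vy),2) ∉ T₂ := fun hm => by have := m2W'.mp hm; omega
  -- SE spoke : lozenge ((vx,vy-1),0)
  have dSE1 := dichotomy hT₁ hh₁ (adj_NW' (vx+1) (vy-1) vx vy (by ring) (by ring))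
    (Or.inl (by rw [leftTri_NW' (vx+1) (vy-1) vx vy vx (vy-1) (by ring) (by ring) (by ring) rfl]; exact hA3))
  have dSE2 := dichotomy hT₂ hh₂ (adj_NW' (vx+1) (vy-1) vx vy (by ring) (by ring))
    (Or.inl (by rw [leftTri_NW' (vx+1) (vy-1) vx vy vx (vy-1) (by ring) (by ring) (by ring) rfl]; exact hA3))
  rw [wt_NW' (vx+1) (vy-1) vx vy (by ring) (by ring)] at dSE1 dSE2
  have m0SE := mem0_iff hT₁ hh₁ vx (vy-1) hA3
  have m0SE' := mem0_iff hT₂ hh₂ vx (vy-1) hA3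
  rw [show ((vx:ℤ), (vy:ℤ)-1+1) = ((vx:ℤ), (vy:ℤ)) from by norm_num] at m0SE m0SE'
  have mA3 : ((vx,vy-1),0) ∈ T₁ := m0SE.mpr (by omega)
  have nA3 : ((vx,vy-1),0) ∉ T₂ := fun hm => by have := m0SE'.mp hm; omega
  -- NW spoke : lozenge ((vx-1,vy),0)
  have dNW1 := dichotomy hT₁ hh₁ (adj_NW vx vy)
    (Or.inl (by rw [leftTri_NW]; exact hA2))
  have dNW2 := dichotomy hT₂ hh₂ (adj_NW vx vy)
    (Or.inl (by rw [leftTri_NW]; exact hA2))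
  rw [wt_NW] at dNW1 dNW2
  have m0NW := mem0_iff hT₁ hh₁ (vx-1) vy hA2
  have m0NW' := mem0_iff hT₂ hh₂ (vx-1) vy hA2
  rw [show ((vx:ℤ)-1+1, (vy:ℤ)) = ((vx:ℤ), (vy:ℤ)) from by norm_num] at m0NW m0NW'
  have mB1 : ((vx-1,vy),0) ∈ T₂ := m0NW'.mpr (by omega)
  have nB1 : ((vx-1,vy),0) ∉ T₁ := fun hm => by have := m0NW.mp hm; omega
  -- SW spoke : lozenge ((vx,vy-1),1)
  have dSW1 := dichotomy hT₁ hh₁ (adj_NE' vx (vy-1) vx vy rfl (by ring))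
    (Or.inr (by rw [rightTri_NE' vx (vy-1) vx vy vx (vy-1) rfl (by ring) rfl rfl]; exact hA3))
  have dSW2 := dichotomy hT₂ hh₂ (adj_NE' vx (vy-1) vx vy rfl (by ring))
    (Or.inr (by rw [rightTri_NE' vx (vy-1) vx vy vx (vy-1) rfl (by ring) rfl rfl]; exact hA3))
  rw [wt_NE' vx (vy-1) vx vy rfl (by ring)] at dSW1 dSW2
  have m1SW := mem1_iff hT₁ hh₁ vx (vy-1) hA3
  have m1SW' := mem1_iff hT₂ hh₂ vx (vy-1) hA3
  rw [show ((vx:ℤ), (vy:ℤ)-1+1) = ((vx:ℤ), (vy:ℤ)) from by norm_num] at m1SW m1SW'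
  have mB2 : ((vx,vy-1),1) ∈ T₂ := m1SW'.mpr (by omega)
  have nB2 : ((vx,vy-1),1) ∉ T₁ := fun hm => by have := m1SW.mp hm; omega
  -- E spoke : lozenge ((vx,vy),2)
  have dE1 := dichotomy hT₁ hh₁ (adj_E vx vy) (Or.inl (by rw [leftTri_E]; exact hA1))
  have dE2 := dichotomy hT₂ hh₂ (adj_E vx vy) (Or.inl (by rw [leftTri_E]; exact hA1))
  rw [wt_E] at dE1 dE2
  have mB3 : ((vx,vy),2) ∈ T₂ := (mem2_iff hT₂ hh₂ vx vy hA1).mpr (by omega)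
  have nB3 : ((vx,vy),2) ∉ T₁ := fun hm => by
    have := (mem2_iff hT₁ hh₁ vx vy hA1).mp hm; omega
  have hAsub : hexA (vx,vy) ⊆ T₁ := by
    intro p hp
    simp [hexA] at hp
    rcases hp with rfl|rfl|rfl
    exacts [mA1, mA2, mA3]
  have hBsub : hexB (vx,vy) ⊆ T₂ := by
    intro p hp
    simp [hexB] at hp
    rcases hp with rfl|rfl|rfl
    exacts [mB1, mB2, mB3]
  have hAn : ∀ p ∈ hexA (vx,vy), p ∉ T₂ := by
    intro p hp
    simp [hexA] at hp
    rcases hp with rfl|rfl|rfl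
    exacts [nA1, nA2, nA3]
  have hBn : ∀ p ∈ hexB (vx,vy), p ∉ T₁ := by
    intro p hp
    simp [hexB] at hp
    rcases hp with rfl|rfl|rfl
    exacts [nB1, nB2, nB3]
  refine ⟨hAsub, hBsub, hAn, hBn, ?_⟩
  ext p
  simp only [Finset.mem_union, Finset.mem_sdiff]
  constructor
  · intro hp2
    by_cases hpB : p ∈ hexB (vx,vy)
    · exact Or.inr hpB
    by_cases hpA : p ∈ hexA (vx,vy)
    · exact absurd hp2 (hAn p hpA)
    · exact Or.inl ⟨transfer hT₂ hT₁ hh₂ hh₁ (fun w a b => (hne w a b).symm) hp2 hpA hpB, hpA⟩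
  · rintro (⟨hp1, hpA⟩ | hpB)
    · by_cases hpB : p ∈ hexB (vx,vy)
      · exact absurd hp1 (hBn p hpB)
      · exact transfer hT₁ hT₂ hh₁ hh₂ hne hp1 hpA hpB
    · exact hBsub hpB
lemma g_pres {R : Finset Tri} {T₁ T₂ : Finset ((ℤ×ℤ)×Fin 3)} {h₁ h₂ : ℤ×ℤ → ℤ}
    (hT₁ : IsLozTiling T₁ R) (hT₂ : IsLozTiling T₂ R)
    (hh₁ : IsLozHeightFunction R T₁ h₁) (hh₂ : IsLozHeightFunction R T₂ h₂)
    {v : ℤ×ℤ} (hEq : T₂ = (T₁ \ hexA v) ∪ hexB v)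
    {a b : ℤ×ℤ} (hadj : triAdjacentV a b) (hreg : leftTri a b ∈ R ∨ rightTri a b ∈ R)
    (ha : a ≠ v) (hb : b ≠ v) : h₁ b - h₁ a = h₂ b - h₂ a := by
  by_cases hf : LozFreeEdge T₁ a b
  · have hf2 : LozFreeEdge T₂ a b := by
      rintro ⟨q, hq, hc1, hc2⟩
      rw [hEq] at hq
      rcases Finset.mem_union.mp hq with hq'|hq'
      · exact hf ⟨q, (Finset.mem_sdiff.mp hq').1, hc1, hc2⟩
      · rcases coverHex hadj hc1 hc2 (Or.inr hq') with h|h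
        exacts [ha h, hb h]
    have e1 := hh₁ _ _ ⟨hadj, hreg⟩ hf
    have e2 := hh₂ _ _ ⟨hadj, hreg⟩ hf2
    omega
  · rw [LozFreeEdge, not_not] at hf
    obtain ⟨p, hp, hc1, hc2⟩ := hf
    have hpA : p ∉ hexA v := fun hc => by
      rcases coverHex hadj hc1 hc2 (Or.inl hc) with h|h
      exacts [ha h, hb h]
    have hp2 : p ∈ T₂ := by
      rw [hEq]; exact Finset.mem_union_left _ (Finset.mem_sdiff.mpr ⟨hp, hpA⟩)
    have e1 := nonfree_delta hT₁ hh₁ hadj hp hc1 hc2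
    have e2 := nonfree_delta hT₂ hh₂ hadj hp2 hc1 hc2
    omega
lemma flip_heights {R : Finset Tri} {T₁ T₂ : Finset ((ℤ×ℤ)×Fin 3)} {h₁ h₂ : ℤ×ℤ → ℤ}
    (hT₁ : IsLozTiling T₁ R) (hT₂ : IsLozTiling T₂ R)
    (hh₁ : IsLozHeightFunction R T₁ h₁) (hh₂ : IsLozHeightFunction R T₂ h₂)
    (hbd : ∀ w, LozBoundaryVertex R w → h₁ w = h₂ w)
    {v : ℤ×ℤ} (hA : hexA v ⊆ T₁) (hEq : T₂ = (T₁ \ hexA v) ∪ hexB v) :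
    LozVertexOf R v ∧ h₁ v - h₂ v = 3 ∧ ∀ w, LozVertexOf R w → w ≠ v → h₁ w = h₂ w := by
  obtain ⟨vx,vy⟩ := v
  have hA1T : ((vx,vy),1) ∈ T₁ := hA (by simp [hexA])
  have hA2T : ((vx-1,vy),2) ∈ T₁ := hA (by simp [hexA])
  have hA3T : ((vx,vy-1),0) ∈ T₁ := hA (by simp [hexA])
  have cU1 : ((vx,vy,true) : Tri) ∈ R := cell_mem hT₁ hA1T (by simp [lozCells1])
  have cD1 : ((vx-1,vy,false) : Tri) ∈ R := cell_mem hT₁ hA1T (by simp [lozCells1])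
  have cU2 : ((vx-1,vy,true) : Tri) ∈ R := cell_mem hT₁ hA2T (by simp [lozCells2])
  have cD2 : ((vx-1,vy-1,false) : Tri) ∈ R := cell_mem hT₁ hA2T (by simp [lozCells2])
  have cU3 : ((vx,vy-1,true) : Tri) ∈ R := cell_mem hT₁ hA3T (by simp [lozCells0])
  have cD3 : ((vx,vy-1,false) : Tri) ∈ R := cell_mem hT₁ hA3T (by simp [lozCells0])
  have hvert : LozVertexOf R (vx,vy) := ⟨(vx,vy,true), cU1, by simp [triVertices]⟩
  -- bound
  have hVne : ((R.biUnion triVertices).image Prod.fst).Nonempty :=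
    ⟨vx, Finset.mem_image.mpr ⟨(vx,vy),
      Finset.mem_biUnion.mpr ⟨(vx,vy,true), cU1, by simp [triVertices]⟩, rfl⟩⟩
  set B := ((R.biUnion triVertices).image Prod.fst).max' hVne with hB
  have hle : ∀ w : ℤ×ℤ, LozVertexOf R w → w.1 ≤ B := by
    rintro ⟨wx,wy⟩ ⟨t, ht, hwt⟩
    exact Finset.le_max' _ _ (Finset.mem_image.mpr
      ⟨(wx,wy), Finset.mem_biUnion.mpr ⟨t, ht, hwt⟩, rfl⟩)
  -- the walk to the boundary
  have walk : ∀ n : ℕ, ∀ w : ℤ×ℤ, LozVertexOf R w → w ≠ (vx,vy) → B - w.1 ≤ n →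
      h₁ w = h₂ w := by
    intro n
    induction n with
    | zero =>
      rintro ⟨wx,wy⟩ hw hwv hb
      by_cases hbw : LozBoundaryVertex R (wx,wy)
      · exact hbd _ hbw
      have hcw : ∀ t : Tri, (wx,wy) ∈ triVertices t → t ∈ R := by
        intro t ht; by_contra hc; exact hbw ⟨hw, t, hc, ht⟩
      have hwt : ((wx,wy,true) : Tri) ∈ R := hcw _ (by simp [triVertices])
      have hv' : LozVertexOf R (wx+1,wy) := ⟨(wx,wy,true), hwt, by simp [triVertices]⟩
      have := hle _ hv'
      simp at this hb; omega
    | succ n ih =>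
      rintro ⟨wx,wy⟩ hw hwv hb
      by_cases hbw : LozBoundaryVertex R (wx,wy)
      · exact hbd _ hbw
      have hcw : ∀ t : Tri, (wx,wy) ∈ triVertices t → t ∈ R := by
        intro t ht; by_contra hc; exact hbw ⟨hw, t, hc, ht⟩
      have hwt : ((wx,wy,true) : Tri) ∈ R := hcw _ (by simp [triVertices])
      have hv' : LozVertexOf R (wx+1,wy) := ⟨(wx,wy,true), hwt, by simp [triVertices]⟩
      by_cases hveq : ((wx:ℤ)+1, (wy:ℤ)) = ((vx:ℤ), (vy:ℤ))
      · -- detour around the hexagon centre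
        obtain ⟨rfl, rfl⟩ : wx = vx - 1 ∧ wy = vy := by
          simp [Prod.ext_iff] at hveq; omega
        have e1 : h₁ (vx,wy-1) - h₁ (vx-1,wy) = h₂ (vx,wy-1) - h₂ (vx-1,wy) :=
          g_pres hT₁ hT₂ hh₁ hh₂ hEq (adj_SE' (vx-1) wy vx (wy-1) (by ring) rfl)
            (Or.inl (by rw [leftTri_SE' (vx-1) wy vx (wy-1) (vx-1) (wy-1) (by ring) rfl rfl rfl]
                        exact cD2))
            (by simp [Prod.ext_iff]; try omega) (by simp [Prod.ext_iff]; try omega)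
        have e2 : h₁ (vx+1,wy-1) - h₁ (vx,wy-1) = h₂ (vx+1,wy-1) - h₂ (vx,wy-1) :=
          g_pres hT₁ hT₂ hh₁ hh₂ hEq (adj_E vx (wy-1))
            (Or.inl (by rw [leftTri_E]; exact cU3))
            (by simp [Prod.ext_iff]; try omega) (by simp [Prod.ext_iff]; try omega)
        have e3 : h₁ (vx+1,wy) - h₁ (vx+1,wy-1) = h₂ (vx+1,wy) - h₂ (vx+1,wy-1) :=
          g_pres hT₁ hT₂ hh₁ hh₂ hEq (adj_NE' (vx+1) (wy-1) (vx+1) wy rfl (by ring))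
            (Or.inl (by rw [leftTri_NE' (vx+1) (wy-1) (vx+1) wy vx (wy-1) rfl (by ring) (by ring) rfl]
                        exact cD3))
            (by simp [Prod.ext_iff]; try omega) (by simp [Prod.ext_iff]; try omega)
        have hv3 : LozVertexOf R (vx+1,wy) :=
          ⟨(vx,wy,true), cU1, by simp [triVertices, Prod.ext_iff]; try omega⟩
        have ihm := ih (vx+1, wy) hv3 (by simp [Prod.ext_iff]) (by
          have := hle _ hv3; simp at this hb ⊢; omega)
        omega
      · have e := g_pres hT₁ hT₂ hh₁ hh₂ hEq (adj_E wx wy)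
          (Or.inl (by rw [leftTri_E]; exact hwt)) hwv hveq
        have ihm := ih (wx+1, wy) hv' hveq (by
          have := hle _ hv'; simp at this hb ⊢; omega)
        omega
  have heq : ∀ w, LozVertexOf R w → w ≠ (vx,vy) → h₁ w = h₂ w := fun w hw hwv =>
    walk (B - w.1).toNat w hw hwv (Int.self_le_toNat _)
  refine ⟨hvert, ?_, heq⟩
  -- compute the height difference at v
  have hvE : LozVertexOf R (vx+1,vy) := ⟨(vx,vy,true), cU1, by simp [triVertices]⟩
  have heqE : h₁ (vx+1,vy) = h₂ (vx+1,vy) := heq _ hvE (by simp)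
  have hB3 : ((vx,vy),2) ∈ T₂ := by
    rw [hEq]; exact Finset.mem_union_right _ (by simp [hexB])
  have e2 := (mem2_iff hT₂ hh₂ vx vy cU1).mp hB3
  have hfree : LozFreeEdge T₁ (vx,vy) (vx+1,vy) := by
    rintro ⟨q, hq, h1, h2⟩
    rw [cover_E vx vy h1 h2] at hq
    have := cover_unique hT₁ hq hA1T (t := (vx,vy,true)) (by simp [lozCells2]) (by simp [lozCells1])
    simp [Prod.ext_iff] at this
  have e1 := hh₁ _ _ ⟨adj_E vx vy, Or.inl (by rw [leftTri_E]; exact cU1)⟩ hfree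
  rw [wt_E] at e1
  omega

/-- two lozenge tilings of a simply connected triangulated region differ by a
single flip iff their height functions (normalized to agree on the boundary) differ at exactly
one vertex, where the difference is exactly 3. -/
theorem stmt_11 (R : Finset Tri) (T₁ T₂ : Finset ((ℤ × ℤ) × Fin 3))
    (h₁ h₂ : ℤ × ℤ → ℤ)
    (hR : LozSimplyConnected R) (hT₁ : IsLozTiling T₁ R) (hT₂ : IsLozTiling T₂ R)
    (hh₁ : IsLozHeightFunction R T₁ h₁) (hh₂ : IsLozHeightFunction R T₂ h₂)
    (hbd : ∀ v, LozBoundaryVertex R v → h₁ v = h₂ v) :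
    LozFlipRel T₁ T₂ ↔
      ∃ v, LozVertexOf R v ∧ (h₁ v - h₂ v = 3 ∨ h₁ v - h₂ v = -3) ∧
        ∀ w, LozVertexOf R w → w ≠ v → h₁ w = h₂ w := by
  constructor
  · rintro ⟨v, ⟨hA, hEq⟩ | ⟨hB, hEq⟩⟩
    · obtain ⟨hvert, hd, heq⟩ := flip_heights hT₁ hT₂ hh₁ hh₂ hbd hA hEq
      exact ⟨v, hvert, Or.inl hd, heq⟩
    · obtain ⟨vx, vy⟩ := v
      have hAsubT₂ : hexA (vx,vy) ⊆ T₂ := by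
        rw [hEq]; intro p hp; exact Finset.mem_union_right _ hp
      have hAnotT₁ : ∀ p ∈ hexA (vx,vy), p ∉ T₁ := by
        intro p hp hpT
        simp [hexA] at hp
        rcases hp with rfl|rfl|rfl
        · have hq : ((vx,vy),2) ∈ T₁ := hB (by simp [hexB])
          have := cover_unique hT₁ hpT hq (t := (vx,vy,true))
            (by simp [lozCells1]) (by simp [lozCells2])
          simp [Prod.ext_iff] at this
        · have hq : ((vx-1,vy),0) ∈ T₁ := hB (by simp [hexB])
          have := cover_unique hT₁ hpT hq (t := (vx-1,vy,true))
            (by simp [lozCells2]) (by simp [lozCells0])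
          simp [Prod.ext_iff] at this
        · have hq : ((vx,vy-1),1) ∈ T₁ := hB (by simp [hexB])
          have := cover_unique hT₁ hpT hq (t := (vx,vy-1,true))
            (by simp [lozCells0]) (by simp [lozCells1])
          simp [Prod.ext_iff] at this
      have hT₁eq : T₁ = (T₂ \ hexA (vx,vy)) ∪ hexB (vx,vy) := by
        rw [hEq]; ext p
        simp only [Finset.mem_union, Finset.mem_sdiff]
        constructor
        · intro hp1
          by_cases hpB : p ∈ hexB (vx,vy)
          · exact Or.inr hpB
          by_cases hpA : p ∈ hexA (vx,vy)
          · exact absurd hp1 (hAnotT₁ p hpA)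
          · exact Or.inl ⟨Or.inl ⟨hp1, hpB⟩, hpA⟩
        · rintro (⟨(⟨hp1, _⟩ | hpA), hnA⟩ | hpB)
          · exact hp1
          · exact absurd hpA hnA
          · exact hB hpB
      obtain ⟨hvert, hd, heq⟩ :=
        flip_heights hT₂ hT₁ hh₂ hh₁ (fun w hw => (hbd w hw).symm) hAsubT₂ hT₁eq
      exact ⟨(vx,vy), hvert, Or.inr (by omega), fun w hw hwv => (heq w hw hwv).symm⟩
  · rintro ⟨v, hvert, hd, heq⟩
    have hvnb : ¬ LozBoundaryVertex R v := fun hb => by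
      have := hbd v hb; rcases hd with hd|hd <;> omega
    have hcell : ∀ t : Tri, v ∈ triVertices t → t ∈ R := by
      intro t ht; by_contra hc; exact hvnb ⟨hvert, t, hc, ht⟩
    rcases hd with hd | hd
    · obtain ⟨hAs, hBs, hAn, hBn, hEq⟩ := flip_core hT₁ hT₂ hh₁ hh₂ hcell (by omega) heq
      exact ⟨v, Or.inl ⟨hAs, hEq⟩⟩
    · obtain ⟨hAs, hBs, hAn, hBn, hEq⟩ := flip_core hT₂ hT₁ hh₂ hh₁ hcell (by omega)
        (fun w hw hwv => (heq w hw hwv).symm)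
      refine ⟨v, Or.inr ⟨hBs, ?_⟩⟩
      ext p
      rw [hEq]
      simp only [Finset.mem_union, Finset.mem_sdiff]
      constructor
      · intro hp2
        by_cases hpA : p ∈ hexA v
        · exact Or.inr hpA
        by_cases hpB : p ∈ hexB v
        · exact absurd hp2 (hBn p hpB)
        · exact Or.inl ⟨Or.inl ⟨hp2, hpA⟩, hpB⟩
      · rintro (⟨(⟨hp2, _⟩ | hpB), hnB⟩ | hpA)
        · exact hp2
        · exact absurd hpB hnB
        · exact hAs hpA
end

section
/- The distance in the flip graph between two domino tilings t₁, t₂ of a simply connected quadriculated region equals (1/4)·Σ_v |θ₁(v) − θ₂(v)|, the sum over all vertices of the region of the absolute difference of their height functions. -/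
/-- A domino: two horizontally or vertically adjacent cells of the quadriculated plane `ℤ × ℤ`. -/
def IsDomino (d : Finset (ℤ × ℤ)) : Prop :=
  ∃ x y : ℤ, d = {(x, y), (x + 1, y)} ∨ d = {(x, y), (x, y + 1)}

/-- A tiling of the region `R` by dominoes: a partition of `R` into dominoes. -/
def IsTiling (T : Finset (Finset (ℤ × ℤ))) (R : Finset (ℤ × ℤ)) : Prop :=
  (∀ d ∈ T, IsDomino d) ∧
  (∀ d ∈ T, ∀ d' ∈ T, d ≠ d' → Disjoint d d') ∧
  T.biUnion id = R

/-- Two vertices of the grid are adjacent when at euclidean distance 1. -/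
def adjacentV (v w : ℤ × ℤ) : Prop := |v.1 - w.1| + |v.2 - w.2| = 1

/-- The cell of `ℤ × ℤ` lying to the left of the oriented grid edge from `v` to `w`
(cell `(x,y)` occupies the unit square `[x,x+1] × [y,y+1]`). -/
def leftCell (v w : ℤ × ℤ) : ℤ × ℤ :=
  if w = (v.1 + 1, v.2) then (v.1, v.2)
  else if w = (v.1, v.2 + 1) then (v.1 - 1, v.2)
  else if w = (v.1 - 1, v.2) then (v.1 - 1, v.2 - 1)
  else (v.1, v.2 - 1)

/-- The cell to the right of the oriented edge from `v` to `w`. -/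
def rightCell (v w : ℤ × ℤ) : ℤ × ℤ := leftCell w v

/-- Height increment along the oriented edge from `v` to `w`: `+1` if the cell on the left is
black (coordinate sum even), `-1` if it is white. -/
def edgeWeight (v w : ℤ × ℤ) : ℤ :=
  if ((leftCell v w).1 + (leftCell v w).2) % 2 = 0 then 1 else -1

/-- A grid edge is free for the tiling `T` when it is not interior to a domino of `T`. -/
def FreeEdge (T : Finset (Finset (ℤ × ℤ))) (v w : ℤ × ℤ) : Prop :=
  ¬ ∃ d ∈ T, leftCell v w ∈ d ∧ rightCell v w ∈ d

/-- An edge of the region `R`: a grid edge at least one of whose two adjacent cells lies in `R`. -/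
def EdgeOfRegion (R : Finset (ℤ × ℤ)) (v w : ℤ × ℤ) : Prop :=
  adjacentV v w ∧ (leftCell v w ∈ R ∨ rightCell v w ∈ R)

/-- A height function for the tiling `T` of `R`: along every free edge of the region the value
increases by `+1` when the cell on the left is black and decreases by `1` when it is white. -/
def IsHeightFunction (R : Finset (ℤ × ℤ)) (T : Finset (Finset (ℤ × ℤ)))
    (h : ℤ × ℤ → ℤ) : Prop :=
  ∀ v w, EdgeOfRegion R v w → FreeEdge T v w → h w = h v + edgeWeight v w

/-- Edge-adjacency of cells. -/
def cellAdj (c c' : ℤ × ℤ) : Prop := |c.1 - c'.1| + |c.2 - c'.2| = 1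

/-- A set of cells is connected when any two of its cells are joined by a path of
edge-adjacent cells inside the set. -/
def ConnSet (S : Set (ℤ × ℤ)) : Prop :=
  ∀ a ∈ S, ∀ b ∈ S, Relation.ReflTransGen (fun p q => cellAdj p q ∧ p ∈ S ∧ q ∈ S) a b

/-- A finite region is simply connected when both it and its complement are connected. -/
def SimplyConnected (R : Finset (ℤ × ℤ)) : Prop :=
  ConnSet (↑R : Set (ℤ × ℤ)) ∧ ConnSet ((↑R : Set (ℤ × ℤ))ᶜ)

/-- `v` is a vertex of the region `R` when it is a corner of some cell of `R`. -/
def VertexOf (R : Finset (ℤ × ℤ)) (v : ℤ × ℤ) : Prop :=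
  (v.1 - 1, v.2 - 1) ∈ R ∨ (v.1, v.2 - 1) ∈ R ∨ (v.1 - 1, v.2) ∈ R ∨ (v.1, v.2) ∈ R

/-- A boundary vertex of `R`: a vertex of `R` which is also a corner of a cell not in `R`. -/
def BoundaryVertex (R : Finset (ℤ × ℤ)) (v : ℤ × ℤ) : Prop :=
  VertexOf R v ∧
    ((v.1 - 1, v.2 - 1) ∉ R ∨ (v.1, v.2 - 1) ∉ R ∨ (v.1 - 1, v.2) ∉ R ∨ (v.1, v.2) ∉ R)

/-- The finite set of vertices of the region `R`. -/
def vertexFinset (R : Finset (ℤ × ℤ)) : Finset (ℤ × ℤ) :=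
  R.biUnion (fun c => {(c.1, c.2), (c.1 + 1, c.2), (c.1, c.2 + 1), (c.1 + 1, c.2 + 1)})

/-- `T'` is obtained from `T` by a flip: two dominoes of `T` forming a `2 × 2` square are
rotated by 90°. -/
def FlipRel (T T' : Finset (Finset (ℤ × ℤ))) : Prop :=
  ∃ x y : ℤ,
    (({(x, y), (x + 1, y)} : Finset (ℤ × ℤ)) ∈ T ∧
     ({(x, y + 1), (x + 1, y + 1)} : Finset (ℤ × ℤ)) ∈ T ∧
     T' = (T \ ({{(x, y), (x + 1, y)}, {(x, y + 1), (x + 1, y + 1)}} :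
              Finset (Finset (ℤ × ℤ)))) ∪
          ({{(x, y), (x, y + 1)}, {(x + 1, y), (x + 1, y + 1)}} :
              Finset (Finset (ℤ × ℤ)))) ∨
    (({(x, y), (x, y + 1)} : Finset (ℤ × ℤ)) ∈ T ∧
     ({(x + 1, y), (x + 1, y + 1)} : Finset (ℤ × ℤ)) ∈ T ∧
     T' = (T \ ({{(x, y), (x, y + 1)}, {(x + 1, y), (x + 1, y + 1)}} :
              Finset (Finset (ℤ × ℤ)))) ∪
          ({{(x, y), (x + 1, y)}, {(x, y + 1), (x + 1, y + 1)}} :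
              Finset (Finset (ℤ × ℤ))))

/-- Distance in the flip graph: the least number of flips transforming `T₁` into `T₂`. -/
noncomputable def flipDist (T₁ T₂ : Finset (Finset (ℤ × ℤ))) : ℕ :=
  sInf {n : ℕ | ∃ f : ℕ → Finset (Finset (ℤ × ℤ)),
    f 0 = T₁ ∧ f n = T₂ ∧ ∀ i < n, FlipRel (f i) (f (i + 1))}
-- Basic geometry lemmas
lemma adj_cases {v w : ℤ × ℤ} (h : adjacentV v w) :
    w = (v.1 + 1, v.2) ∨ w = (v.1, v.2 + 1) ∨ w = (v.1 - 1, v.2) ∨ w = (v.1, v.2 - 1) := by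
  rcases v with ⟨a, b⟩; rcases w with ⟨c, d⟩
  simp only [adjacentV] at h
  simp only [Prod.mk.injEq]
  rcases abs_cases ((a : ℤ) - c) with ⟨e1, _⟩ | ⟨e1, _⟩ <;>
    rcases abs_cases ((b : ℤ) - d) with ⟨e2, _⟩ | ⟨e2, _⟩ <;> omega

lemma leftCell_E (a b : ℤ) : leftCell (a, b) (a + 1, b) = (a, b) := by
  simp [leftCell]

lemma leftCell_N (a b : ℤ) : leftCell (a, b) (a, b + 1) = (a - 1, b) := by
  simp only [leftCell]
  rw [if_neg (by intro hc; rw [Prod.ext_iff] at hc; simp at hc; try omega), if_pos (by simp)]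

lemma leftCell_W (a b : ℤ) : leftCell (a, b) (a - 1, b) = (a - 1, b - 1) := by
  simp only [leftCell]
  rw [if_neg (by intro hc; rw [Prod.ext_iff] at hc; simp at hc; try omega), if_neg (by intro hc; rw [Prod.ext_iff] at hc; simp at hc; try omega),
    if_pos (by simp)]

lemma leftCell_S (a b : ℤ) : leftCell (a, b) (a, b - 1) = (a, b - 1) := by
  simp only [leftCell]
  rw [if_neg (by intro hc; rw [Prod.ext_iff] at hc; simp at hc; try omega), if_neg (by intro hc; rw [Prod.ext_iff] at hc; simp at hc; try omega),
    if_neg (by intro hc; rw [Prod.ext_iff] at hc; simp at hc; try omega)]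

lemma rightCell_E (a b : ℤ) : rightCell (a, b) (a + 1, b) = (a, b - 1) := by
  have := leftCell_W (a + 1) b
  simp only [rightCell]
  rw [show (a:ℤ) + 1 - 1 = a by ring] at this
  convert this using 2 <;> ring

lemma rightCell_N (a b : ℤ) : rightCell (a, b) (a, b + 1) = (a, b) := by
  have := leftCell_S a (b + 1)
  simp only [rightCell]
  rw [show (b:ℤ) + 1 - 1 = b by ring] at this
  convert this using 2 <;> ring

lemma rightCell_W (a b : ℤ) : rightCell (a, b) (a - 1, b) = (a - 1, b) := by
  have := leftCell_E (a - 1) b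
  simp only [rightCell]
  rw [show (a:ℤ) - 1 + 1 = a by ring] at this
  convert this using 2 <;> ring

lemma rightCell_S (a b : ℤ) : rightCell (a, b) (a, b - 1) = (a - 1, b - 1) := by
  have := leftCell_N a (b - 1)
  simp only [rightCell]
  rw [show (b:ℤ) - 1 + 1 = b by ring] at this
  convert this using 2 <;> ring
/-- Color of a cell. -/
def col (c : ℤ × ℤ) : ℤ := if (c.1 + c.2) % 2 = 0 then 1 else -1

lemma col_E (a b : ℤ) : col (a + 1, b) = -col (a, b) := by
  simp only [col]; split_ifs <;> omega

lemma col_N (a b : ℤ) : col (a, b + 1) = -col (a, b) := by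
  simp only [col]; split_ifs <;> omega

lemma col_W (a b : ℤ) : col (a - 1, b) = -col (a, b) := by
  simp only [col]; split_ifs <;> omega

lemma col_S (a b : ℤ) : col (a, b - 1) = -col (a, b) := by
  simp only [col]; split_ifs <;> omega

lemma col_sq (c : ℤ × ℤ) : col c = 1 ∨ col c = -1 := by
  simp only [col]; split_ifs <;> simp

lemma ew_E (a b : ℤ) : edgeWeight (a, b) (a + 1, b) = col (a, b) := by
  rw [edgeWeight, leftCell_E]; rfl

lemma ew_N (a b : ℤ) : edgeWeight (a, b) (a, b + 1) = -col (a, b) := by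
  rw [edgeWeight, leftCell_N]
  show col (a - 1, b) = _
  exact col_W a b

lemma ew_W (a b : ℤ) : edgeWeight (a, b) (a - 1, b) = col (a, b) := by
  rw [edgeWeight, leftCell_W]
  show col (a - 1, b - 1) = _
  rw [col_W, col_S]; ring

lemma ew_S (a b : ℤ) : edgeWeight (a, b) (a, b - 1) = -col (a, b) := by
  rw [edgeWeight, leftCell_S]
  show col (a, b - 1) = _
  exact col_S a b

-- Tiling basics
lemma cell_mem_R {T : Finset (Finset (ℤ × ℤ))} {R : Finset (ℤ × ℤ)} (hT : IsTiling T R)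
    {d : Finset (ℤ × ℤ)} {c : ℤ × ℤ} (hd : d ∈ T) (hc : c ∈ d) : c ∈ R := by
  rw [← hT.2.2]
  exact Finset.mem_biUnion.2 ⟨d, hd, hc⟩

lemma dom_unique {T : Finset (Finset (ℤ × ℤ))} {R : Finset (ℤ × ℤ)} (hT : IsTiling T R)
    {d d' : Finset (ℤ × ℤ)} {c : ℤ × ℤ} (hd : d ∈ T) (hd' : d' ∈ T)
    (hc : c ∈ d) (hc' : c ∈ d') : d = d' := by
  by_contra hne
  exact Finset.disjoint_left.1 (hT.2.1 d hd d' hd' hne) hc hc'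

lemma exists_dom {T : Finset (Finset (ℤ × ℤ))} {R : Finset (ℤ × ℤ)} (hT : IsTiling T R)
    {c : ℤ × ℤ} (hc : c ∈ R) : ∃ d ∈ T, c ∈ d := by
  rw [← hT.2.2] at hc
  simpa using Finset.mem_biUnion.1 hc

lemma domino_eq_pair {d : Finset (ℤ × ℤ)} (h : IsDomino d) {a b : ℤ × ℤ}
    (ha : a ∈ d) (hb : b ∈ d) (hne : a ≠ b) : d = {a, b} := by
  rcases h with ⟨x, y, rfl | rfl⟩ <;>
  · simp only [Finset.mem_insert, Finset.mem_singleton] at ha hb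
    rcases ha with rfl | rfl <;> rcases hb with rfl | rfl <;>
      first
        | exact absurd rfl hne
        | rfl
        | exact Finset.pair_comm _ _

lemma partner_cases {d : Finset (ℤ × ℤ)} (h : IsDomino d) {c : ℤ × ℤ} (hc : c ∈ d) :
    d = {c, (c.1 + 1, c.2)} ∨ d = {c, (c.1 - 1, c.2)} ∨
    d = {c, (c.1, c.2 + 1)} ∨ d = {c, (c.1, c.2 - 1)} := by
  rcases h with ⟨x, y, rfl | rfl⟩ <;>
    simp only [Finset.mem_insert, Finset.mem_singleton] at hc <;>
    rcases hc with rfl | rfl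
  · left; rfl
  · right; left
    rw [Finset.pair_comm]
    norm_num
  · right; right; left; rfl
  · right; right; right
    rw [Finset.pair_comm]
    norm_num
lemma adjE (a b : ℤ) : adjacentV (a, b) (a + 1, b) := by
  simp [adjacentV]
lemma adjN (a b : ℤ) : adjacentV (a, b) (a, b + 1) := by
  simp [adjacentV]
lemma adjW (a b : ℤ) : adjacentV (a, b) (a - 1, b) := by
  simp [adjacentV]
lemma adjS (a b : ℤ) : adjacentV (a, b) (a, b - 1) := by
  simp [adjacentV]

lemma not_both_in {T : Finset (Finset (ℤ × ℤ))} {R : Finset (ℤ × ℤ)} (hT : IsTiling T R)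
    {d : Finset (ℤ × ℤ)} (hd : d ∈ T) {c n : ℤ × ℤ} (hc : c ∈ d) (hn : n ∉ d) :
    ¬∃ d' ∈ T, c ∈ d' ∧ n ∈ d' := by
  rintro ⟨d', hd', hc', hn'⟩
  exact hn ((dom_unique hT hd hd' hc hc') ▸ hn')


lemma not_both_in' {T : Finset (Finset (ℤ × ℤ))} {R : Finset (ℤ × ℤ)} (hT : IsTiling T R)
    {d : Finset (ℤ × ℤ)} (hd : d ∈ T) {c n : ℤ × ℤ} (hc : c ∈ d) (hn : n ∉ d) :
    ∀ x ∈ T, c ∈ x → n ∉ x :=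
  fun x hx hc' hn' => not_both_in hT hd hc hn ⟨x, hx, hc', hn'⟩

/-- The four corner relations around a cell `(p,q) ∈ R` whose domino is `d`. -/
lemma cell_corners {T : Finset (Finset (ℤ × ℤ))} {R : Finset (ℤ × ℤ)} {h : ℤ × ℤ → ℤ}
    (hT : IsTiling T R) (hh : IsHeightFunction R T h) {p q : ℤ}
    {d : Finset (ℤ × ℤ)} (hd : d ∈ T) (hcd : (p, q) ∈ d) :
    ((p, q - 1) ∉ d → h (p + 1, q) = h (p, q) + col (p, q)) ∧
    ((p + 1, q) ∉ d → h (p + 1, q + 1) = h (p + 1, q) + col (p, q)) ∧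
    ((p, q + 1) ∉ d → h (p, q + 1) = h (p + 1, q + 1) + col (p, q)) ∧
    ((p - 1, q) ∉ d → h (p, q) = h (p, q + 1) + col (p, q)) := by
  have hcR : (p, q) ∈ R := cell_mem_R hT hd hcd
  refine ⟨fun hn => ?_, fun hn => ?_, fun hn => ?_, fun hn => ?_⟩
  · have := hh (p, q) (p + 1, q) ⟨adjE p q, Or.inl (by rw [leftCell_E]; exact hcR)⟩
      (by rw [FreeEdge, leftCell_E, rightCell_E]; exact not_both_in hT hd hcd hn)
    rwa [ew_E] at this
  · have := hh (p + 1, q) (p + 1, q + 1)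
      ⟨adjN (p + 1) q, Or.inl (by rw [leftCell_N]; norm_num; exact hcR)⟩
      (by rw [FreeEdge, leftCell_N, rightCell_N]; norm_num
          exact not_both_in' hT hd hcd hn)
    rw [ew_N, col_E] at this
    rw [this]; ring
  · have := hh (p + 1, q + 1) (p, q + 1)
      ((by norm_num : ((p : ℤ), q + 1) = (p + 1 - 1, q + 1)) ▸
        ⟨adjW (p + 1) (q + 1), Or.inl (by rw [leftCell_W]; norm_num; exact hcR)⟩)
    rw [FreeEdge, (by norm_num : ((p : ℤ), q + 1) = (p + 1 - 1, q + 1)) ] at this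
    rw [leftCell_W, rightCell_W] at this
    norm_num at this
    have h2 := this (not_both_in' hT hd hcd hn)
    rw [show edgeWeight (p+1, q+1) (p, q+1) = col (p, q) by
      rw [(by norm_num : ((p : ℤ), q + 1) = (p + 1 - 1, q + 1)), ew_W, col_E, col_N]; ring]
      at h2
    exact h2
  · have := hh (p, q + 1) (p, q)
      ((by norm_num : ((p : ℤ), q) = (p, q + 1 - 1)) ▸
        ⟨adjS p (q + 1), Or.inl (by rw [leftCell_S]; norm_num; exact hcR)⟩)
    rw [FreeEdge, (by norm_num : ((p : ℤ), q) = (p, q + 1 - 1))] at this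
    rw [leftCell_S, rightCell_S] at this
    norm_num at this
    have h2 := this (not_both_in' hT hd hcd hn)
    rw [show edgeWeight (p, q+1) (p, q) = col (p, q) by
      rw [(by norm_num : ((p : ℤ), q) = (p, q + 1 - 1)), ew_S, col_N]; ring] at h2
    exact h2
/-- Any edge of the region: increment is `+w` if free, `-3w` if interior to a domino. -/
lemma edge_step {T : Finset (Finset (ℤ × ℤ))} {R : Finset (ℤ × ℤ)} {h : ℤ × ℤ → ℤ}
    (hT : IsTiling T R) (hh : IsHeightFunction R T h) {v w : ℤ × ℤ}
    (he : EdgeOfRegion R v w) :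
    (FreeEdge T v w ∧ h w = h v + edgeWeight v w) ∨
    (¬FreeEdge T v w ∧ h w = h v - 3 * edgeWeight v w) := by
  by_cases hf : FreeEdge T v w
  · exact Or.inl ⟨hf, hh v w he hf⟩
  right
  refine ⟨hf, ?_⟩
  rw [FreeEdge, not_not] at hf
  obtain ⟨d, hd, hld, hrd⟩ := hf
  obtain ⟨s, t⟩ := v
  have hdom := hT.1 d hd
  rcases adj_cases he.1 with rfl | rfl | rfl | rfl
  · -- E edge, left cell (s,t), partner (s,t-1)
    rw [leftCell_E] at hld; rw [rightCell_E] at hrd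
    have hC := cell_corners hT hh hd hld
    have hne : ∀ u : ℤ × ℤ, u ∈ ({(s+1,t), (s,t+1), (s-1,t)} : Finset (ℤ × ℤ)) → u ∉ d := by
      rintro ⟨u1, u2⟩ hu hud
      simp only [Finset.mem_insert, Finset.mem_singleton, Prod.mk.injEq] at hu
      have hnepair : ((s, t) : ℤ × ℤ) ≠ (u1, u2) := by
        intro hEq; rw [Prod.mk.injEq] at hEq; omega
      have hd2 := domino_eq_pair hdom hld hud hnepair
      rw [hd2] at hrd
      simp only [Finset.mem_insert, Finset.mem_singleton, Prod.mk.injEq] at hrd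
      omega
    have e1 := hC.2.1 (hne _ (by simp))
    have e2 := hC.2.2.1 (hne _ (by simp))
    have e3 := hC.2.2.2 (hne _ (by simp))
    show h (s + 1, t) = h (s, t) - 3 * edgeWeight (s, t) (s + 1, t)
    rw [ew_E]
    omega
  · -- N edge, left cell (s-1,t), partner (s,t)
    obtain ⟨p, rfl⟩ : ∃ p, s = p + 1 := ⟨s - 1, by ring⟩
    rw [leftCell_N] at hld; rw [rightCell_N] at hrd
    norm_num at hld
    have hC := cell_corners hT hh hd hld
    have hne : ∀ u : ℤ × ℤ, u ∈ ({(p,t-1), (p,t+1), (p-1,t)} : Finset (ℤ × ℤ)) → u ∉ d := by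
      rintro ⟨u1, u2⟩ hu hud
      simp only [Finset.mem_insert, Finset.mem_singleton, Prod.mk.injEq] at hu
      have hnepair : ((p, t) : ℤ × ℤ) ≠ (u1, u2) := by
        intro hEq; rw [Prod.mk.injEq] at hEq; omega
      have hd2 := domino_eq_pair hdom hld hud hnepair
      rw [hd2] at hrd
      simp only [Finset.mem_insert, Finset.mem_singleton, Prod.mk.injEq] at hrd
      omega
    have e1 := hC.1 (hne _ (by simp))
    have e2 := hC.2.2.1 (hne _ (by simp))
    have e3 := hC.2.2.2 (hne _ (by simp))
    show h (p + 1, t + 1) = h (p + 1, t) - 3 * edgeWeight (p + 1, t) (p + 1, t + 1)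
    rw [ew_N]
    have hcol := col_E p t
    omega
  · -- W edge, left cell (s-1,t-1), partner (s-1,t)
    obtain ⟨p, rfl⟩ : ∃ p, s = p + 1 := ⟨s - 1, by ring⟩
    obtain ⟨q, rfl⟩ : ∃ q, t = q + 1 := ⟨t - 1, by ring⟩
    rw [leftCell_W] at hld; rw [rightCell_W] at hrd
    norm_num at hld hrd
    have hC := cell_corners hT hh hd hld
    have hne : ∀ u : ℤ × ℤ, u ∈ ({(p,q-1), (p+1,q), (p-1,q)} : Finset (ℤ × ℤ)) → u ∉ d := by
      rintro ⟨u1, u2⟩ hu hud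
      simp only [Finset.mem_insert, Finset.mem_singleton, Prod.mk.injEq] at hu
      have hnepair : ((p, q) : ℤ × ℤ) ≠ (u1, u2) := by
        intro hEq; rw [Prod.mk.injEq] at hEq; omega
      have hd2 := domino_eq_pair hdom hld hud hnepair
      rw [hd2] at hrd
      simp only [Finset.mem_insert, Finset.mem_singleton, Prod.mk.injEq] at hrd
      omega
    have e1 := hC.1 (hne _ (by simp))
    have e2 := hC.2.1 (hne _ (by simp))
    have e3 := hC.2.2.2 (hne _ (by simp))
    show h (p + 1 - 1, q + 1) = h (p + 1, q + 1) - 3 * edgeWeight (p + 1, q + 1) (p + 1 - 1, q + 1)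
    rw [ew_W]
    have hw1 : ((p : ℤ) + 1 - 1, q + 1) = (p, q + 1) := by norm_num
    rw [hw1]
    have hcol : col ((p : ℤ) + 1, q + 1) = col (p, q) := by rw [col_E, col_N]; ring
    omega
  · -- S edge, left cell (s,t-1), partner (s-1,t-1)
    obtain ⟨q, rfl⟩ : ∃ q, t = q + 1 := ⟨t - 1, by ring⟩
    rw [leftCell_S] at hld; rw [rightCell_S] at hrd
    norm_num at hld hrd
    have hC := cell_corners hT hh hd hld
    have hne : ∀ u : ℤ × ℤ, u ∈ ({(s,q-1), (s+1,q), (s,q+1)} : Finset (ℤ × ℤ)) → u ∉ d := by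
      rintro ⟨u1, u2⟩ hu hud
      simp only [Finset.mem_insert, Finset.mem_singleton, Prod.mk.injEq] at hu
      have hnepair : ((s, q) : ℤ × ℤ) ≠ (u1, u2) := by
        intro hEq; rw [Prod.mk.injEq] at hEq; omega
      have hd2 := domino_eq_pair hdom hld hud hnepair
      rw [hd2] at hrd
      simp only [Finset.mem_insert, Finset.mem_singleton, Prod.mk.injEq] at hrd
      omega
    have e1 := hC.1 (hne _ (by simp))
    have e2 := hC.2.1 (hne _ (by simp))
    have e3 := hC.2.2.1 (hne _ (by simp))
    show h (s, q + 1 - 1) = h (s, q + 1) - 3 * edgeWeight (s, q + 1) (s, q + 1 - 1)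
    rw [ew_S]
    have hw1 : ((s : ℤ), q + 1 - 1) = (s, q) := by norm_num
    rw [hw1]
    have hcol := col_N s q
    omega
section Propagate

variable {R : Finset (ℤ × ℤ)} {g : ℤ × ℤ → ℤ} {m : ℤ}

/-- Differences of `g` between corners of a cell of `R` are multiples of `m`. -/
lemma corner_div (hedge : ∀ v w, EdgeOfRegion R v w → m ∣ (g w - g v))
    {p q : ℤ} (hc : (p, q) ∈ R) :
    m ∣ g (p + 1, q) - g (p, q) ∧ m ∣ g (p + 1, q + 1) - g (p, q) ∧
      m ∣ g (p, q + 1) - g (p, q) := by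
  have e1 := hedge (p, q) (p + 1, q) ⟨adjE p q, Or.inl (by rw [leftCell_E]; exact hc)⟩
  have e2 := hedge (p + 1, q) (p + 1, q + 1)
    ⟨adjN (p + 1) q, Or.inl (by rw [leftCell_N]; norm_num; exact hc)⟩
  have e3 := hedge (p, q) (p, q + 1) ⟨adjN p q, Or.inr (by rw [rightCell_N]; exact hc)⟩
  refine ⟨e1, ?_, e3⟩
  have := dvd_add e1 e2
  rwa [show g (p+1, q) - g (p, q) + (g (p+1, q+1) - g (p+1, q))
      = g (p+1, q+1) - g (p, q) by ring] at this

lemma base_div (hedge : ∀ v w, EdgeOfRegion R v w → m ∣ (g w - g v))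
    {c c' : ℤ × ℤ} (hc : c ∈ R) (hc' : c' ∈ R) (hadj : cellAdj c c') :
    m ∣ g (c'.1, c'.2) - g (c.1, c.2) := by
  obtain ⟨p, q⟩ := c
  have hC := corner_div hedge hc
  have hadj' : c' = (p + 1, q) ∨ c' = (p, q + 1) ∨ c' = (p - 1, q) ∨ c' = (p, q - 1) := by
    rcases c' with ⟨a, b⟩
    simp only [cellAdj] at hadj
    simp only [Prod.mk.injEq]
    rcases abs_cases ((p : ℤ) - a) with ⟨e1, _⟩ | ⟨e1, _⟩ <;>
      rcases abs_cases ((q : ℤ) - b) with ⟨e2, _⟩ | ⟨e2, _⟩ <;> omega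
  rcases hadj' with rfl | rfl | rfl | rfl
  · exact hC.1
  · exact hC.2.2
  · have hC' := corner_div hedge hc'
    have h2 := hC'.1
    norm_num at h2
    show m ∣ g (p - 1, q) - g (p, q)
    rw [show g (p-1, q) - g (p, q) = -(g (p, q) - g (p-1, q)) by ring]
    exact dvd_neg.2 h2
  · have hC' := corner_div hedge hc'
    have h2 := hC'.2.2
    norm_num at h2
    show m ∣ g (p, q - 1) - g (p, q)
    rw [show g (p, q-1) - g (p, q) = -(g (p, q) - g (p, q-1)) by ring]
    exact dvd_neg.2 h2

lemma path_div (hedge : ∀ v w, EdgeOfRegion R v w → m ∣ (g w - g v))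
    {c c' : ℤ × ℤ}
    (hpath : Relation.ReflTransGen (fun p q => cellAdj p q ∧ p ∈ (↑R : Set (ℤ × ℤ)) ∧
      q ∈ (↑R : Set (ℤ × ℤ))) c c') :
    m ∣ g (c'.1, c'.2) - g (c.1, c.2) := by
  induction hpath with
  | refl => simp
  | tail _ hstep ih =>
    obtain ⟨hadj, hb, hcnew⟩ := hstep
    have h2 := base_div hedge (by simpa using hb) (by simpa using hcnew) hadj
    have := dvd_add ih h2
    rwa [sub_add_sub_cancel'] at this

/-- Main propagation lemma. -/
lemma propagate {T : Finset (Finset (ℤ × ℤ))} (hT : IsTiling T R)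
    (hconn : ConnSet (↑R : Set (ℤ × ℤ)))
    (hedge : ∀ v w, EdgeOfRegion R v w → m ∣ (g w - g v))
    (hbd0 : ∀ v, BoundaryVertex R v → g v = 0) :
    ∀ v ∈ vertexFinset R, m ∣ g v := by
  intro v hv
  obtain ⟨c, hcR, hvc⟩ := Finset.mem_biUnion.1 hv
  -- a boundary vertex: base corner of a cell with minimal first coordinate
  have hRne : R.Nonempty := ⟨c, hcR⟩
  obtain ⟨c₀, hc₀R, hc₀min⟩ := R.exists_min_image Prod.fst hRne
  have hbv : BoundaryVertex R (c₀.1, c₀.2) := by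
    constructor
    · right; right; right; simpa using hc₀R
    · left
      intro hmem
      have := hc₀min _ hmem
      simp at this
  have hzero : g (c₀.1, c₀.2) = 0 := hbd0 _ hbv
  -- path from c₀ to c
  have hpath := hconn c₀ (by simpa using hc₀R) c (by simpa using hcR)
  have h1 : m ∣ g (c.1, c.2) - g (c₀.1, c₀.2) := path_div hedge hpath
  rw [hzero, sub_zero] at h1
  -- v is a corner of c
  obtain ⟨p, q⟩ := c
  have hC := corner_div hedge hcR
  simp only [Finset.mem_insert, Finset.mem_singleton] at hvc
  rcases hvc with rfl | rfl | rfl | rfl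
  · exact h1
  · have := dvd_add h1 hC.1; simpa using this
  · have := dvd_add h1 hC.2.2; simpa using this
  · have := dvd_add h1 hC.2.1; simpa using this

end Propagate
lemma col_ne_zero (c : ℤ × ℤ) : col c ≠ 0 := by
  rcases col_sq c with h | h <;> rw [h] <;> norm_num

lemma edgeWeight_eq_col (v w : ℤ × ℤ) : edgeWeight v w = col (leftCell v w) := rfl

lemma edgeWeight_ne_zero (v w : ℤ × ℤ) : edgeWeight v w ≠ 0 := by
  rw [edgeWeight_eq_col]; exact col_ne_zero _

lemma corner_mem_vertexFinset {R : Finset (ℤ × ℤ)} {p q : ℤ} (hc : (p, q) ∈ R) :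
    (p, q) ∈ vertexFinset R ∧ (p + 1, q) ∈ vertexFinset R ∧
    (p, q + 1) ∈ vertexFinset R ∧ (p + 1, q + 1) ∈ vertexFinset R := by
  refine ⟨?_, ?_, ?_, ?_⟩ <;> exact Finset.mem_biUnion.2 ⟨(p, q), hc, by simp⟩

/-- Difference of height functions of two tilings is divisible by 4 everywhere. -/
lemma div_four {R : Finset (ℤ × ℤ)} {T₁ T₂ : Finset (Finset (ℤ × ℤ))} {h₁ h₂ : ℤ × ℤ → ℤ}
    (hconn : ConnSet (↑R : Set (ℤ × ℤ)))
    (hT₁ : IsTiling T₁ R) (hT₂ : IsTiling T₂ R)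
    (hh₁ : IsHeightFunction R T₁ h₁) (hh₂ : IsHeightFunction R T₂ h₂)
    (hbd : ∀ v, BoundaryVertex R v → h₁ v = h₂ v) :
    ∀ v ∈ vertexFinset R, (4 : ℤ) ∣ h₁ v - h₂ v := by
  apply propagate hT₁ hconn (g := fun v => h₁ v - h₂ v)
  · intro v w he
    rcases edge_step hT₁ hh₁ he with ⟨_, e1⟩ | ⟨_, e1⟩ <;>
      rcases edge_step hT₂ hh₂ he with ⟨_, e2⟩ | ⟨_, e2⟩ <;>
      · show (4 : ℤ) ∣ h₁ w - h₂ w - (h₁ v - h₂ v)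
        omega
  · intro v hv
    simp [hbd v hv]

/-- Two height functions of the same tiling agreeing on the boundary agree everywhere. -/
lemma height_unique {R : Finset (ℤ × ℤ)} {T : Finset (Finset (ℤ × ℤ))} {h h' : ℤ × ℤ → ℤ}
    (hconn : ConnSet (↑R : Set (ℤ × ℤ)))
    (hT : IsTiling T R)
    (hh : IsHeightFunction R T h) (hh' : IsHeightFunction R T h')
    (hbd : ∀ v, BoundaryVertex R v → h v = h' v) :
    ∀ v ∈ vertexFinset R, h v = h' v := by
  intro v hv
  have := propagate hT hconn (g := fun v => h v - h' v) (m := 0) ?_ ?_ v hv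
  · simpa [sub_eq_zero] using this
  · intro v w he
    rcases edge_step hT hh he with ⟨hf, e1⟩ | ⟨hf, e1⟩ <;>
      rcases edge_step hT hh' he with ⟨hf', e2⟩ | ⟨hf', e2⟩ <;>
      first
        | (exact absurd hf' hf)
        | (exact absurd hf hf')
        | (show (0 : ℤ) ∣ h w - h' w - (h v - h' v); rw [zero_dvd_iff]; omega)
  · intro v hv
    simp [hbd v hv]

/-- The height function determines the tiling. -/
lemma tiling_subset {R : Finset (ℤ × ℤ)} {T₁ T₂ : Finset (Finset (ℤ × ℤ))} {h₁ h₂ : ℤ × ℤ → ℤ}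
    (hT₁ : IsTiling T₁ R) (hT₂ : IsTiling T₂ R)
    (hh₁ : IsHeightFunction R T₁ h₁) (hh₂ : IsHeightFunction R T₂ h₂)
    (heq : ∀ v ∈ vertexFinset R, h₁ v = h₂ v) : T₁ ⊆ T₂ := by
  intro d hd
  rcases hT₁.1 d hd with ⟨x, y, rfl | rfl⟩
  · -- horizontal domino, shared edge = right edge of (x,y)
    have hcR : ((x : ℤ), y) ∈ R := cell_mem_R hT₁ hd (by simp)
    have hV := corner_mem_vertexFinset hcR
    have he : EdgeOfRegion R (x + 1, y) (x + 1, y + 1) :=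
      ⟨adjN (x + 1) y, Or.inl (by rw [leftCell_N]; norm_num; exact hcR)⟩
    have hnf1 : ¬FreeEdge T₁ (x + 1, y) (x + 1, y + 1) := by
      rw [FreeEdge, not_not, leftCell_N, rightCell_N]
      exact ⟨_, hd, by norm_num, by norm_num⟩
    rcases edge_step hT₁ hh₁ he with ⟨hf, _⟩ | ⟨_, e1⟩
    · exact absurd hf hnf1
    rcases edge_step hT₂ hh₂ he with ⟨_, e2⟩ | ⟨hnf2, _⟩
    · exfalso
      rw [heq _ hV.2.1, heq _ hV.2.2.2] at e1
      have := edgeWeight_ne_zero ((x : ℤ) + 1, y) (x + 1, y + 1)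
      omega
    · rw [FreeEdge, not_not, leftCell_N, rightCell_N] at hnf2
      obtain ⟨d', hd', hl', hr'⟩ := hnf2
      norm_num at hl' hr'
      have : d' = {((x : ℤ), y), (x + 1, y)} :=
        domino_eq_pair (hT₂.1 d' hd') hl' hr' (by intro hc; rw [Prod.mk.injEq] at hc; omega)
      rwa [← this]
  · -- vertical domino, shared edge = top edge of (x,y)
    have hcR : ((x : ℤ), y) ∈ R := cell_mem_R hT₁ hd (by simp)
    have hV := corner_mem_vertexFinset hcR
    have he : EdgeOfRegion R (x + 1, y + 1) (x + 1 - 1, y + 1) :=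
      ⟨adjW (x + 1) (y + 1), Or.inl (by rw [leftCell_W]; norm_num; exact hcR)⟩
    have hnf1 : ¬FreeEdge T₁ (x + 1, y + 1) (x + 1 - 1, y + 1) := by
      rw [FreeEdge, not_not, leftCell_W, rightCell_W]
      exact ⟨_, hd, by norm_num, by norm_num⟩
    rcases edge_step hT₁ hh₁ he with ⟨hf, _⟩ | ⟨_, e1⟩
    · exact absurd hf hnf1
    rcases edge_step hT₂ hh₂ he with ⟨_, e2⟩ | ⟨hnf2, _⟩
    · exfalso
      have hw : ((x : ℤ) + 1 - 1, y + 1) = (x, y + 1) := by norm_num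
      rw [hw] at e1 e2
      rw [heq _ hV.2.2.2, heq _ hV.2.2.1] at e1
      have := edgeWeight_ne_zero ((x : ℤ) + 1, y + 1) (x + 1 - 1, y + 1)
      rw [hw] at this
      omega
    · rw [FreeEdge, not_not, leftCell_W, rightCell_W] at hnf2
      obtain ⟨d', hd', hl', hr'⟩ := hnf2
      norm_num at hl' hr'
      have : d' = {((x : ℤ), y), (x, y + 1)} :=
        domino_eq_pair (hT₂.1 d' hd') hl' hr' (by intro hc; rw [Prod.mk.injEq] at hc; omega)
      rwa [← this]

lemma tiling_eq {R : Finset (ℤ × ℤ)} {T₁ T₂ : Finset (Finset (ℤ × ℤ))} {h₁ h₂ : ℤ × ℤ → ℤ}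
    (hT₁ : IsTiling T₁ R) (hT₂ : IsTiling T₂ R)
    (hh₁ : IsHeightFunction R T₁ h₁) (hh₂ : IsHeightFunction R T₂ h₂)
    (heq : ∀ v ∈ vertexFinset R, h₁ v = h₂ v) : T₁ = T₂ :=
  Finset.Subset.antisymm (tiling_subset hT₁ hT₂ hh₁ hh₂ heq)
    (tiling_subset hT₂ hT₁ hh₂ hh₁ (fun v hv => (heq v hv).symm))
/-- The edge whose two adjacent cells are the horizontal pair `(p,q),(p+1,q)` has endpoints
`(p+1,q)` and `(p+1,q+1)`. -/
lemma edge_of_hpair {v w : ℤ × ℤ} (hadj : adjacentV v w) {p q : ℤ}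
    (hl : leftCell v w = (p, q) ∨ leftCell v w = (p + 1, q))
    (hr : rightCell v w = (p, q) ∨ rightCell v w = (p + 1, q)) :
    (v = (p + 1, q) ∧ w = (p + 1, q + 1)) ∨ (v = (p + 1, q + 1) ∧ w = (p + 1, q)) := by
  obtain ⟨s, t⟩ := v
  rcases adj_cases hadj with rfl | rfl | rfl | rfl <;>
    [(rw [leftCell_E] at hl; rw [rightCell_E] at hr);
     (rw [leftCell_N] at hl; rw [rightCell_N] at hr);
     (rw [leftCell_W] at hl; rw [rightCell_W] at hr);
     (rw [leftCell_S] at hl; rw [rightCell_S] at hr)] <;>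
    simp only [Prod.mk.injEq] at hl hr ⊢ <;> omega

/-- The edge whose two adjacent cells are the vertical pair `(p,q),(p,q+1)` has endpoints
`(p,q+1)` and `(p+1,q+1)`. -/
lemma edge_of_vpair {v w : ℤ × ℤ} (hadj : adjacentV v w) {p q : ℤ}
    (hl : leftCell v w = (p, q) ∨ leftCell v w = (p, q + 1))
    (hr : rightCell v w = (p, q) ∨ rightCell v w = (p, q + 1)) :
    (v = (p, q + 1) ∧ w = (p + 1, q + 1)) ∨ (v = (p + 1, q + 1) ∧ w = (p, q + 1)) := by
  obtain ⟨s, t⟩ := v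
  rcases adj_cases hadj with rfl | rfl | rfl | rfl <;>
    [(rw [leftCell_E] at hl; rw [rightCell_E] at hr);
     (rw [leftCell_N] at hl; rw [rightCell_N] at hr);
     (rw [leftCell_W] at hl; rw [rightCell_W] at hr);
     (rw [leftCell_S] at hl; rw [rightCell_S] at hr)] <;>
    simp only [Prod.mk.injEq] at hl hr ⊢ <;> omega
lemma mem_pair_left (a b : ℤ × ℤ) : a ∈ ({a, b} : Finset (ℤ × ℤ)) :=
  Finset.mem_insert_self a {b}
lemma mem_pair_right (a b : ℤ × ℤ) : b ∈ ({a, b} : Finset (ℤ × ℤ)) :=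
  Finset.mem_insert.2 (Or.inr (Finset.mem_singleton_self b))
lemma mem_pair_iff (a b c : ℤ × ℤ) : c ∈ ({a, b} : Finset (ℤ × ℤ)) ↔ c = a ∨ c = b := by
  simp [Finset.mem_insert]
lemma mem_fpair_left (a b : Finset (ℤ × ℤ)) : a ∈ ({a, b} : Finset (Finset (ℤ × ℤ))) :=
  Finset.mem_insert_self a {b}
lemma mem_fpair_right (a b : Finset (ℤ × ℤ)) : b ∈ ({a, b} : Finset (Finset (ℤ × ℤ))) :=
  Finset.mem_insert.2 (Or.inr (Finset.mem_singleton_self b))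
lemma mem_fpair_iff (a b c : Finset (ℤ × ℤ)) :
    c ∈ ({a, b} : Finset (Finset (ℤ × ℤ))) ↔ c = a ∨ c = b := by
  simp [Finset.mem_insert]
/-- Flipping a horizontal pair of dominoes to a vertical pair. -/
lemma flipH {R : Finset (ℤ × ℤ)} {T : Finset (Finset (ℤ × ℤ))} {h : ℤ × ℤ → ℤ}
    (hT : IsTiling T R) (hh : IsHeightFunction R T h) {x y : ℤ}
    (hd1 : ({(x, y), (x + 1, y)} : Finset (ℤ × ℤ)) ∈ T)
    (hd2 : ({(x, y + 1), (x + 1, y + 1)} : Finset (ℤ × ℤ)) ∈ T) :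
    IsTiling ((T \ ({{(x, y), (x + 1, y)}, {(x, y + 1), (x + 1, y + 1)}} :
        Finset (Finset (ℤ × ℤ)))) ∪
        ({{(x, y), (x, y + 1)}, {(x + 1, y), (x + 1, y + 1)}} :
        Finset (Finset (ℤ × ℤ)))) R ∧
    IsHeightFunction R ((T \ ({{(x, y), (x + 1, y)}, {(x, y + 1), (x + 1, y + 1)}} :
        Finset (Finset (ℤ × ℤ)))) ∪
        ({{(x, y), (x, y + 1)}, {(x + 1, y), (x + 1, y + 1)}} :
        Finset (Finset (ℤ × ℤ))))
      (Function.update h (x + 1, y + 1) (h (x + 1, y + 1) + 4 * col (x + 1, y + 1))) ∧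
    ¬BoundaryVertex R (x + 1, y + 1) := by
  -- cells in R
  have hSW : ((x : ℤ), y) ∈ R := cell_mem_R hT hd1 (mem_pair_left _ _)
  have hSE : ((x : ℤ) + 1, y) ∈ R := cell_mem_R hT hd1 (mem_pair_right _ _)
  have hNW : ((x : ℤ), y + 1) ∈ R := cell_mem_R hT hd2 (mem_pair_left _ _)
  have hNE : ((x : ℤ) + 1, y + 1) ∈ R := cell_mem_R hT hd2 (mem_pair_right _ _)
  have hn_SE_d2 : ((x : ℤ) + 1, y) ∉ ({(x, y + 1), (x + 1, y + 1)} : Finset (ℤ × ℤ)) := by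
    rw [mem_pair_iff]
    rintro (hc | hc) <;> (rw [Prod.mk.injEq] at hc; omega)
  have hn_NW_d1 : ((x : ℤ), y + 1) ∉ ({(x, y), (x + 1, y)} : Finset (ℤ × ℤ)) := by
    rw [mem_pair_iff]
    rintro (hc | hc) <;> (rw [Prod.mk.injEq] at hc; omega)
  -- color bookkeeping
  have hcol_NW : col ((x : ℤ), y + 1) = -col (x + 1, y + 1) := by rw [col_E, neg_neg]
  have hcol_SE : col ((x : ℤ) + 1, y) = -col (x + 1, y + 1) := by rw [col_N, neg_neg]
  -- the four height relations around the centre in T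
  have hN : h (x + 1, y + 1 + 1) = h (x + 1, y + 1) + 3 * col (x + 1, y + 1) := by
    have he : EdgeOfRegion R (x + 1, y + 1) (x + 1, y + 1 + 1) :=
      ⟨adjN (x + 1) (y + 1), Or.inl (by rw [leftCell_N, show ((x:ℤ)+1-1, y+1) = (x, y+1) by norm_num]; exact hNW)⟩
    rcases edge_step hT hh he with ⟨hfr, _⟩ | ⟨_, e⟩
    · exact absurd ⟨_, hd2, by rw [leftCell_N, show ((x:ℤ)+1-1, y+1) = (x, y+1) by norm_num]; exact mem_pair_left _ _,
        by rw [rightCell_N]; exact mem_pair_right _ _⟩ hfr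
    · rw [ew_N] at e
      rw [e]; ring
  have hS : h (x + 1, y) = h (x + 1, y + 1) + 3 * col (x + 1, y + 1) := by
    have he : EdgeOfRegion R (x + 1, y + 1) (x + 1, y + 1 - 1) :=
      ⟨adjS (x + 1) (y + 1), Or.inl (by
        rw [leftCell_S, show ((x : ℤ) + 1, y + 1 - 1) = (x + 1, y) by norm_num]
        exact hSE)⟩
    rcases edge_step hT hh he with ⟨hfr, _⟩ | ⟨_, e⟩
    · refine absurd ⟨_, hd1, ?_, ?_⟩ hfr
      · rw [leftCell_S, show ((x : ℤ) + 1, y + 1 - 1) = (x + 1, y) by norm_num]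
        exact mem_pair_right _ _
      · rw [rightCell_S, show ((x : ℤ) + 1 - 1, y + 1 - 1) = (x, y) by norm_num]
        exact mem_pair_left _ _
    · rw [ew_S, show ((x : ℤ) + 1, y + 1 - 1) = (x + 1, y) by norm_num] at e
      rw [e]; ring
  have hE : h (x + 1 + 1, y + 1) = h (x + 1, y + 1) + col (x + 1, y + 1) := by
    have he : EdgeOfRegion R (x + 1, y + 1) (x + 1 + 1, y + 1) :=
      ⟨adjE (x + 1) (y + 1), Or.inl (by rw [leftCell_E]; exact hNE)⟩
    have hfr : FreeEdge T (x + 1, y + 1) (x + 1 + 1, y + 1) := by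
      rw [FreeEdge, leftCell_E, rightCell_E,
        show ((x : ℤ) + 1, y + 1 - 1) = (x + 1, y) by norm_num]
      exact not_both_in hT hd2 (mem_pair_right _ _) hn_SE_d2
    have := hh _ _ he hfr
    rwa [ew_E] at this
  have hW : h (x, y + 1) = h (x + 1, y + 1) + col (x + 1, y + 1) := by
    have he : EdgeOfRegion R (x + 1, y + 1) (x + 1 - 1, y + 1) :=
      ⟨adjW (x + 1) (y + 1), Or.inl (by
        rw [leftCell_W, show ((x : ℤ) + 1 - 1, y + 1 - 1) = (x, y) by norm_num]
        exact hSW)⟩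
    have hfr : FreeEdge T (x + 1, y + 1) (x + 1 - 1, y + 1) := by
      rw [FreeEdge, leftCell_W, rightCell_W,
        show ((x : ℤ) + 1 - 1, y + 1 - 1) = (x, y) by norm_num,
        show ((x : ℤ) + 1 - 1, y + 1) = (x, y + 1) by norm_num]
      exact not_both_in hT hd1 (mem_pair_left _ _) hn_NW_d1
    have := hh _ _ he hfr
    rw [ew_W, show ((x : ℤ) + 1 - 1, y + 1) = (x, y + 1) by norm_num] at this
    exact this
  -- T' is a tiling
  have htile : IsTiling ((T \ ({{(x, y), (x + 1, y)}, {(x, y + 1), (x + 1, y + 1)}} :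
      Finset (Finset (ℤ × ℤ)))) ∪
      ({{(x, y), (x, y + 1)}, {(x + 1, y), (x + 1, y + 1)}} :
      Finset (Finset (ℤ × ℤ)))) R := by
    refine ⟨?_, ?_, ?_⟩
    · intro d hd
      rcases Finset.mem_union.1 hd with hd' | hd'
      · exact hT.1 d (Finset.mem_sdiff.1 hd').1
      · rcases (mem_fpair_iff _ _ _).1 hd' with rfl | rfl
        · exact ⟨x, y, Or.inr rfl⟩
        · exact ⟨x + 1, y, Or.inr rfl⟩
    · intro d hd d' hd' hne
      have key : ∀ e ∈ T \ ({{(x, y), (x + 1, y)}, {(x, y + 1), (x + 1, y + 1)}} :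
          Finset (Finset (ℤ × ℤ))), ∀ f ∈
          ({{(x, y), (x, y + 1)}, {(x + 1, y), (x + 1, y + 1)}} :
          Finset (Finset (ℤ × ℤ))), Disjoint e f := by
        intro e he f hf
        obtain ⟨heT, hen⟩ := Finset.mem_sdiff.1 he
        rw [mem_fpair_iff] at hen
        push_neg at hen
        rw [Finset.disjoint_right]
        intro c hcf hce
        rcases (mem_fpair_iff _ _ _).1 hf with rfl | rfl <;>
          rcases (mem_pair_iff _ _ _).1 hcf with rfl | rfl
        · exact hen.1 (dom_unique hT heT hd1 hce (mem_pair_left _ _))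
        · exact hen.2 (dom_unique hT heT hd2 hce (mem_pair_left _ _))
        · exact hen.1 (dom_unique hT heT hd1 hce (mem_pair_right _ _))
        · exact hen.2 (dom_unique hT heT hd2 hce (mem_pair_right _ _))
      have hdis34 : Disjoint ({(x, y), (x, y + 1)} : Finset (ℤ × ℤ))
          ({(x + 1, y), (x + 1, y + 1)} : Finset (ℤ × ℤ)) := by
        rw [Finset.disjoint_left]
        intro c hc3 hc4
        rw [mem_pair_iff] at hc3 hc4
        rcases c with ⟨c1, c2⟩
        simp only [Prod.mk.injEq] at hc3 hc4
        omega
      rcases Finset.mem_union.1 hd with hdo | hdn <;>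
        rcases Finset.mem_union.1 hd' with hdo' | hdn'
      · exact hT.2.1 d (Finset.mem_sdiff.1 hdo).1 d' (Finset.mem_sdiff.1 hdo').1 hne
      · exact key d hdo d' hdn'
      · exact (key d' hdo' d hdn).symm
      · rcases (mem_fpair_iff _ _ _).1 hdn with rfl | rfl <;>
          rcases (mem_fpair_iff _ _ _).1 hdn' with rfl | rfl
        · exact absurd rfl hne
        · exact hdis34
        · exact hdis34.symm
        · exact absurd rfl hne
    · ext c
      constructor
      · intro hc
        obtain ⟨d, hd, hcd⟩ := Finset.mem_biUnion.1 hc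
        rcases Finset.mem_union.1 hd with hdo | hdn
        · exact cell_mem_R hT (Finset.mem_sdiff.1 hdo).1 hcd
        · rcases (mem_fpair_iff _ _ _).1 hdn with rfl | rfl <;>
            rcases (mem_pair_iff _ _ _).1 hcd with rfl | rfl
          · exact hSW
          · exact hNW
          · exact hSE
          · exact hNE
      · intro hc
        obtain ⟨d, hd, hcd⟩ := exists_dom hT hc
        by_cases hdd1 : d = ({(x, y), (x + 1, y)} : Finset (ℤ × ℤ))
        · subst hdd1
          rcases (mem_pair_iff _ _ _).1 hcd with rfl | rfl
          · exact Finset.mem_biUnion.2 ⟨_, Finset.mem_union_right _ (mem_fpair_left _ _),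
              mem_pair_left _ _⟩
          · exact Finset.mem_biUnion.2 ⟨_, Finset.mem_union_right _ (mem_fpair_right _ _),
              mem_pair_left _ _⟩
        by_cases hdd2 : d = ({(x, y + 1), (x + 1, y + 1)} : Finset (ℤ × ℤ))
        · subst hdd2
          rcases (mem_pair_iff _ _ _).1 hcd with rfl | rfl
          · exact Finset.mem_biUnion.2 ⟨_, Finset.mem_union_right _ (mem_fpair_left _ _),
              mem_pair_right _ _⟩
          · exact Finset.mem_biUnion.2 ⟨_, Finset.mem_union_right _ (mem_fpair_right _ _),
              mem_pair_right _ _⟩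
        · refine Finset.mem_biUnion.2 ⟨d, Finset.mem_union_left _
            (Finset.mem_sdiff.2 ⟨hd, ?_⟩), hcd⟩
          rw [mem_fpair_iff]
          push_neg
          exact ⟨hdd1, hdd2⟩
  refine ⟨htile, ?_, ?_⟩
  swap
  · -- the centre is not a boundary vertex
    rintro ⟨-, hbad⟩
    rcases hbad with hb | hb | hb | hb
    · exact hb (by rw [show ((x:ℤ) + 1 - 1, y + 1 - 1) = (x, y) by norm_num]; exact hSW)
    · exact hb (by rw [show ((x:ℤ) + 1, y + 1 - 1) = (x + 1, y) by norm_num]; exact hSE)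
    · exact hb (by rw [show ((x:ℤ) + 1 - 1, y + 1) = (x, y + 1) by norm_num]; exact hNW)
    · exact hb hNE
  -- the height function condition for T'
  intro v w he hf
  have hadj := he.1
  by_cases hv : v = ((x + 1 : ℤ), (y + 1 : ℤ))
  · subst hv
    rcases adj_cases hadj with rfl | rfl | rfl | rfl
    · -- E edge: interior to d4 in T'
      exact absurd ⟨_, Finset.mem_union_right _ (mem_fpair_right _ _),
        by show leftCell (x+1, y+1) (x+1+1, y+1) ∈ _; rw [leftCell_E]; exact mem_pair_right _ _,
        by show rightCell (x+1, y+1) (x+1+1, y+1) ∈ _; rw [rightCell_E,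
             show ((x : ℤ) + 1, y + 1 - 1) = (x + 1, y) by norm_num]
           exact mem_pair_left _ _⟩ hf
    · -- N edge: free
      show Function.update h (x+1, y+1) _ (x + 1, y + 1 + 1)
        = Function.update h (x+1, y+1) _ (x+1, y+1) + edgeWeight (x+1, y+1) (x + 1, y + 1 + 1)
      rw [Function.update_self, Function.update_of_ne (by
        intro hc; rw [Prod.mk.injEq] at hc; omega), ew_N]
      omega
    · -- W edge: interior to d3 in T'
      exact absurd ⟨_, Finset.mem_union_right _ (mem_fpair_left _ _),
        by show leftCell (x+1, y+1) (x+1-1, y+1) ∈ _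
           rw [leftCell_W, show ((x : ℤ) + 1 - 1, y + 1 - 1) = (x, y) by norm_num]
           exact mem_pair_left _ _,
        by show rightCell (x+1, y+1) (x+1-1, y+1) ∈ _
           rw [rightCell_W, show ((x : ℤ) + 1 - 1, y + 1) = (x, y + 1) by norm_num]
           exact mem_pair_right _ _⟩ hf
    · -- S edge: free
      show Function.update h (x+1, y+1) _ (x + 1, y + 1 - 1)
        = Function.update h (x+1, y+1) _ (x+1, y+1) + edgeWeight (x+1, y+1) (x + 1, y + 1 - 1)
      rw [Function.update_self, Function.update_of_ne (by
        intro hc; rw [Prod.mk.injEq] at hc; omega), ew_S]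
      rw [show ((x : ℤ) + 1, y + 1 - 1) = (x + 1, y) by norm_num]
      omega
  by_cases hw : w = ((x + 1 : ℤ), (y + 1 : ℤ))
  · subst hw
    rcases adj_cases hadj with heq | heq | heq | heq
    · -- v is the W neighbour: edge interior to d3
      have hveq : v = ((x : ℤ), y + 1) := by
        rw [Prod.mk.injEq] at heq
        rw [Prod.ext_iff]
        constructor <;> omega
      subst hveq
      exact absurd ⟨_, Finset.mem_union_right _ (mem_fpair_left _ _),
        by show leftCell (x, y+1) (x+1, y+1) ∈ _
           rw [show ((x : ℤ) + 1, y + 1) = (x + 1, y + 1) by norm_num]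
           have := leftCell_E x (y + 1)
           rw [this]
           exact mem_pair_right _ _,
        by have := rightCell_E x (y + 1)
           show rightCell (x, y+1) (x+1, y+1) ∈ _
           rw [this, show ((x : ℤ), y + 1 - 1) = (x, y) by norm_num]
           exact mem_pair_left _ _⟩ hf
    · -- v is the S neighbour
      have hveq : v = ((x : ℤ) + 1, y) := by
        rw [Prod.mk.injEq] at heq
        rw [Prod.ext_iff]
        constructor <;> omega
      subst hveq
      show Function.update h (x+1, y+1) _ (x+1, y+1)
        = Function.update h (x+1, y+1) _ (x + 1, y) + edgeWeight (x + 1, y) (x+1, y+1)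
      rw [Function.update_self, Function.update_of_ne (by
        intro hc; rw [Prod.mk.injEq] at hc; omega)]
      have hwN := ew_N (x + 1) y
      have hcN := col_N (x + 1) y
      rw [hwN]
      omega
    · -- v is the E neighbour: edge interior to d4
      have hveq : v = ((x : ℤ) + 1 + 1, y + 1) := by
        rw [Prod.mk.injEq] at heq
        rw [Prod.ext_iff]
        constructor <;> omega
      subst hveq
      exact absurd ⟨_, Finset.mem_union_right _ (mem_fpair_right _ _),
        by show leftCell (x+1+1, y+1) (x+1, y+1) ∈ _
           have := leftCell_W (x+1+1) (y+1)
           rw [show ((x : ℤ) + 1, y + 1) = (x+1+1-1, y+1) by norm_num, this,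
             show ((x : ℤ)+1+1-1, y+1-1) = (x+1, y) by norm_num]
           exact mem_pair_left _ _,
        by show rightCell (x+1+1, y+1) (x+1, y+1) ∈ _
           have := rightCell_W (x+1+1) (y+1)
           rw [show ((x : ℤ) + 1, y + 1) = (x+1+1-1, y+1) by norm_num, this,
             show ((x : ℤ)+1+1-1, y+1) = (x+1, y+1) by norm_num]
           exact mem_pair_right _ _⟩ hf
    · -- v is the N neighbour
      have hveq : v = ((x : ℤ) + 1, y + 1 + 1) := by
        rw [Prod.mk.injEq] at heq
        rw [Prod.ext_iff]
        constructor <;> omega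
      subst hveq
      show Function.update h (x+1, y+1) _ (x+1, y+1)
        = Function.update h (x+1, y+1) _ (x + 1, y + 1 + 1)
          + edgeWeight (x + 1, y + 1 + 1) (x+1, y+1)
      rw [Function.update_self, Function.update_of_ne (by
        intro hc; rw [Prod.mk.injEq] at hc; omega)]
      have hwS := ew_S (x + 1) (y + 1 + 1)
      rw [show ((x : ℤ) + 1, y + 1 + 1 - 1) = (x + 1, y + 1) by norm_num] at hwS
      have hcN := col_N (x + 1) (y + 1)
      rw [hwS]
      omega
  · -- edge not incident to the centre
    rw [Function.update_of_ne hw, Function.update_of_ne hv]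
    apply hh v w he
    rintro ⟨d, hd, hld, hrd⟩
    by_cases hdd1 : d = ({(x, y), (x + 1, y)} : Finset (ℤ × ℤ))
    · subst hdd1
      rw [mem_pair_iff] at hld hrd
      rcases edge_of_hpair hadj hld hrd with ⟨-, hwv⟩ | ⟨hvv, -⟩
      · exact hw hwv
      · exact hv hvv
    by_cases hdd2 : d = ({(x, y + 1), (x + 1, y + 1)} : Finset (ℤ × ℤ))
    · subst hdd2
      rw [mem_pair_iff] at hld hrd
      rcases edge_of_hpair hadj hld hrd with ⟨hvv, -⟩ | ⟨-, hwv⟩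
      · exact hv hvv
      · exact hw hwv
    · refine hf ⟨d, Finset.mem_union_left _ (Finset.mem_sdiff.2 ⟨hd, ?_⟩), hld, hrd⟩
      rw [mem_fpair_iff]
      push_neg
      exact ⟨hdd1, hdd2⟩
/-- Flipping a vertical pair of dominoes to a horizontal pair. -/
lemma flipV {R : Finset (ℤ × ℤ)} {T : Finset (Finset (ℤ × ℤ))} {h : ℤ × ℤ → ℤ}
    (hT : IsTiling T R) (hh : IsHeightFunction R T h) {x y : ℤ}
    (hd1 : ({(x, y), (x, y + 1)} : Finset (ℤ × ℤ)) ∈ T)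
    (hd2 : ({(x + 1, y), (x + 1, y + 1)} : Finset (ℤ × ℤ)) ∈ T) :
    IsTiling ((T \ ({{(x, y), (x, y + 1)}, {(x + 1, y), (x + 1, y + 1)}} :
        Finset (Finset (ℤ × ℤ)))) ∪
        ({{(x, y), (x + 1, y)}, {(x, y + 1), (x + 1, y + 1)}} :
        Finset (Finset (ℤ × ℤ)))) R ∧
    IsHeightFunction R ((T \ ({{(x, y), (x, y + 1)}, {(x + 1, y), (x + 1, y + 1)}} :
        Finset (Finset (ℤ × ℤ)))) ∪
        ({{(x, y), (x + 1, y)}, {(x, y + 1), (x + 1, y + 1)}} :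
        Finset (Finset (ℤ × ℤ))))
      (Function.update h (x + 1, y + 1) (h (x + 1, y + 1) - 4 * col (x + 1, y + 1))) ∧
    ¬BoundaryVertex R (x + 1, y + 1) := by
  -- cells in R
  have hSW : ((x : ℤ), y) ∈ R := cell_mem_R hT hd1 (mem_pair_left _ _)
  have hNW : ((x : ℤ), y + 1) ∈ R := cell_mem_R hT hd1 (mem_pair_right _ _)
  have hSE : ((x : ℤ) + 1, y) ∈ R := cell_mem_R hT hd2 (mem_pair_left _ _)
  have hNE : ((x : ℤ) + 1, y + 1) ∈ R := cell_mem_R hT hd2 (mem_pair_right _ _)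
  have hn_NE_d1 : ((x : ℤ) + 1, y + 1) ∉ ({(x, y), (x, y + 1)} : Finset (ℤ × ℤ)) := by
    rw [mem_pair_iff]
    rintro (hc | hc) <;> (rw [Prod.mk.injEq] at hc; omega)
  have hn_SW_d2 : ((x : ℤ), y) ∉ ({(x + 1, y), (x + 1, y + 1)} : Finset (ℤ × ℤ)) := by
    rw [mem_pair_iff]
    rintro (hc | hc) <;> (rw [Prod.mk.injEq] at hc; omega)
  -- the four height relations around the centre in T
  have hN : h (x + 1, y + 1 + 1) = h (x + 1, y + 1) - col (x + 1, y + 1) := by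
    have he : EdgeOfRegion R (x + 1, y + 1) (x + 1, y + 1 + 1) :=
      ⟨adjN (x + 1) (y + 1), Or.inl (by
        rw [leftCell_N, show ((x:ℤ)+1-1, y+1) = (x, y+1) by norm_num]; exact hNW)⟩
    have hfr : FreeEdge T (x + 1, y + 1) (x + 1, y + 1 + 1) := by
      rw [FreeEdge, leftCell_N, rightCell_N,
        show ((x:ℤ)+1-1, y+1) = (x, y+1) by norm_num]
      exact not_both_in hT hd1 (mem_pair_right _ _) hn_NE_d1
    have := hh _ _ he hfr
    rw [ew_N] at this
    rw [this]; ring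
  have hS : h (x + 1, y) = h (x + 1, y + 1) - col (x + 1, y + 1) := by
    have he : EdgeOfRegion R (x + 1, y + 1) (x + 1, y + 1 - 1) :=
      ⟨adjS (x + 1) (y + 1), Or.inl (by
        rw [leftCell_S, show ((x : ℤ) + 1, y + 1 - 1) = (x + 1, y) by norm_num]
        exact hSE)⟩
    have hfr : FreeEdge T (x + 1, y + 1) (x + 1, y + 1 - 1) := by
      rw [FreeEdge, leftCell_S, rightCell_S,
        show ((x : ℤ) + 1, y + 1 - 1) = (x + 1, y) by norm_num,
        show ((x : ℤ) + 1 - 1, y + 1 - 1) = (x, y) by norm_num]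
      exact not_both_in hT hd2 (mem_pair_left _ _) hn_SW_d2
    have := hh _ _ he hfr
    rw [ew_S, show ((x : ℤ) + 1, y + 1 - 1) = (x + 1, y) by norm_num] at this
    rw [this]; ring
  have hE : h (x + 1 + 1, y + 1) = h (x + 1, y + 1) - 3 * col (x + 1, y + 1) := by
    have he : EdgeOfRegion R (x + 1, y + 1) (x + 1 + 1, y + 1) :=
      ⟨adjE (x + 1) (y + 1), Or.inl (by rw [leftCell_E]; exact hNE)⟩
    rcases edge_step hT hh he with ⟨hfr, _⟩ | ⟨_, e⟩
    · refine absurd ⟨_, hd2, ?_, ?_⟩ hfr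
      · rw [leftCell_E]; exact mem_pair_right _ _
      · rw [rightCell_E, show ((x : ℤ) + 1, y + 1 - 1) = (x + 1, y) by norm_num]
        exact mem_pair_left _ _
    · rwa [ew_E] at e
  have hW : h (x, y + 1) = h (x + 1, y + 1) - 3 * col (x + 1, y + 1) := by
    have he : EdgeOfRegion R (x + 1, y + 1) (x + 1 - 1, y + 1) :=
      ⟨adjW (x + 1) (y + 1), Or.inl (by
        rw [leftCell_W, show ((x : ℤ) + 1 - 1, y + 1 - 1) = (x, y) by norm_num]
        exact hSW)⟩
    rcases edge_step hT hh he with ⟨hfr, _⟩ | ⟨_, e⟩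
    · refine absurd ⟨_, hd1, ?_, ?_⟩ hfr
      · rw [leftCell_W, show ((x : ℤ) + 1 - 1, y + 1 - 1) = (x, y) by norm_num]
        exact mem_pair_left _ _
      · rw [rightCell_W, show ((x : ℤ) + 1 - 1, y + 1) = (x, y + 1) by norm_num]
        exact mem_pair_right _ _
    · rw [ew_W, show ((x : ℤ) + 1 - 1, y + 1) = (x, y + 1) by norm_num] at e
      exact e
  -- T' is a tiling
  have htile : IsTiling ((T \ ({{(x, y), (x, y + 1)}, {(x + 1, y), (x + 1, y + 1)}} :
      Finset (Finset (ℤ × ℤ)))) ∪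
      ({{(x, y), (x + 1, y)}, {(x, y + 1), (x + 1, y + 1)}} :
      Finset (Finset (ℤ × ℤ)))) R := by
    refine ⟨?_, ?_, ?_⟩
    · intro d hd
      rcases Finset.mem_union.1 hd with hd' | hd'
      · exact hT.1 d (Finset.mem_sdiff.1 hd').1
      · rcases (mem_fpair_iff _ _ _).1 hd' with rfl | rfl
        · exact ⟨x, y, Or.inl rfl⟩
        · exact ⟨x, y + 1, Or.inl rfl⟩
    · intro d hd d' hd' hne
      have key : ∀ e ∈ T \ ({{(x, y), (x, y + 1)}, {(x + 1, y), (x + 1, y + 1)}} :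
          Finset (Finset (ℤ × ℤ))), ∀ f ∈
          ({{(x, y), (x + 1, y)}, {(x, y + 1), (x + 1, y + 1)}} :
          Finset (Finset (ℤ × ℤ))), Disjoint e f := by
        intro e he f hf
        obtain ⟨heT, hen⟩ := Finset.mem_sdiff.1 he
        rw [mem_fpair_iff] at hen
        push_neg at hen
        rw [Finset.disjoint_right]
        intro c hcf hce
        rcases (mem_fpair_iff _ _ _).1 hf with rfl | rfl <;>
          rcases (mem_pair_iff _ _ _).1 hcf with rfl | rfl
        · exact hen.1 (dom_unique hT heT hd1 hce (mem_pair_left _ _))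
        · exact hen.2 (dom_unique hT heT hd2 hce (mem_pair_left _ _))
        · exact hen.1 (dom_unique hT heT hd1 hce (mem_pair_right _ _))
        · exact hen.2 (dom_unique hT heT hd2 hce (mem_pair_right _ _))
      have hdis34 : Disjoint ({(x, y), (x + 1, y)} : Finset (ℤ × ℤ))
          ({(x, y + 1), (x + 1, y + 1)} : Finset (ℤ × ℤ)) := by
        rw [Finset.disjoint_left]
        intro c hc3 hc4
        rw [mem_pair_iff] at hc3 hc4
        rcases c with ⟨c1, c2⟩
        simp only [Prod.mk.injEq] at hc3 hc4
        omega
      rcases Finset.mem_union.1 hd with hdo | hdn <;>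
        rcases Finset.mem_union.1 hd' with hdo' | hdn'
      · exact hT.2.1 d (Finset.mem_sdiff.1 hdo).1 d' (Finset.mem_sdiff.1 hdo').1 hne
      · exact key d hdo d' hdn'
      · exact (key d' hdo' d hdn).symm
      · rcases (mem_fpair_iff _ _ _).1 hdn with rfl | rfl <;>
          rcases (mem_fpair_iff _ _ _).1 hdn' with rfl | rfl
        · exact absurd rfl hne
        · exact hdis34
        · exact hdis34.symm
        · exact absurd rfl hne
    · ext c
      constructor
      · intro hc
        obtain ⟨d, hd, hcd⟩ := Finset.mem_biUnion.1 hc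
        rcases Finset.mem_union.1 hd with hdo | hdn
        · exact cell_mem_R hT (Finset.mem_sdiff.1 hdo).1 hcd
        · rcases (mem_fpair_iff _ _ _).1 hdn with rfl | rfl <;>
            rcases (mem_pair_iff _ _ _).1 hcd with rfl | rfl
          · exact hSW
          · exact hSE
          · exact hNW
          · exact hNE
      · intro hc
        obtain ⟨d, hd, hcd⟩ := exists_dom hT hc
        by_cases hdd1 : d = ({(x, y), (x, y + 1)} : Finset (ℤ × ℤ))
        · subst hdd1
          rcases (mem_pair_iff _ _ _).1 hcd with rfl | rfl
          · exact Finset.mem_biUnion.2 ⟨_, Finset.mem_union_right _ (mem_fpair_left _ _),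
              mem_pair_left _ _⟩
          · exact Finset.mem_biUnion.2 ⟨_, Finset.mem_union_right _ (mem_fpair_right _ _),
              mem_pair_left _ _⟩
        by_cases hdd2 : d = ({(x + 1, y), (x + 1, y + 1)} : Finset (ℤ × ℤ))
        · subst hdd2
          rcases (mem_pair_iff _ _ _).1 hcd with rfl | rfl
          · exact Finset.mem_biUnion.2 ⟨_, Finset.mem_union_right _ (mem_fpair_left _ _),
              mem_pair_right _ _⟩
          · exact Finset.mem_biUnion.2 ⟨_, Finset.mem_union_right _ (mem_fpair_right _ _),
              mem_pair_right _ _⟩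
        · refine Finset.mem_biUnion.2 ⟨d, Finset.mem_union_left _
            (Finset.mem_sdiff.2 ⟨hd, ?_⟩), hcd⟩
          rw [mem_fpair_iff]
          push_neg
          exact ⟨hdd1, hdd2⟩
  refine ⟨htile, ?_, ?_⟩
  swap
  · -- the centre is not a boundary vertex
    rintro ⟨-, hbad⟩
    rcases hbad with hb | hb | hb | hb
    · exact hb (by rw [show ((x:ℤ) + 1 - 1, y + 1 - 1) = (x, y) by norm_num]; exact hSW)
    · exact hb (by rw [show ((x:ℤ) + 1, y + 1 - 1) = (x + 1, y) by norm_num]; exact hSE)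
    · exact hb (by rw [show ((x:ℤ) + 1 - 1, y + 1) = (x, y + 1) by norm_num]; exact hNW)
    · exact hb hNE
  -- the height function condition for T'
  intro v w he hf
  have hadj := he.1
  by_cases hv : v = ((x + 1 : ℤ), (y + 1 : ℤ))
  · subst hv
    rcases adj_cases hadj with rfl | rfl | rfl | rfl
    · -- E edge: free
      show Function.update h (x+1, y+1) _ (x + 1 + 1, y + 1)
        = Function.update h (x+1, y+1) _ (x+1, y+1) + edgeWeight (x+1, y+1) (x + 1 + 1, y + 1)
      rw [Function.update_self, Function.update_of_ne (by
        intro hc; rw [Prod.mk.injEq] at hc; omega), ew_E]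
      omega
    · -- N edge: interior to d4 = {(x,y+1),(x+1,y+1)} in T'
      exact absurd ⟨_, Finset.mem_union_right _ (mem_fpair_right _ _),
        by show leftCell (x+1, y+1) (x+1, y+1+1) ∈ _
           rw [leftCell_N, show ((x:ℤ)+1-1, y+1) = (x, y+1) by norm_num]
           exact mem_pair_left _ _,
        by show rightCell (x+1, y+1) (x+1, y+1+1) ∈ _
           rw [rightCell_N]
           exact mem_pair_right _ _⟩ hf
    · -- W edge: free
      show Function.update h (x+1, y+1) _ (x + 1 - 1, y + 1)
        = Function.update h (x+1, y+1) _ (x+1, y+1) + edgeWeight (x+1, y+1) (x + 1 - 1, y + 1)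
      rw [Function.update_self, Function.update_of_ne (by
        intro hc; rw [Prod.mk.injEq] at hc; omega), ew_W]
      rw [show ((x : ℤ) + 1 - 1, y + 1) = (x, y + 1) by norm_num]
      omega
    · -- S edge: interior to d3 = {(x,y),(x+1,y)} in T'
      exact absurd ⟨_, Finset.mem_union_right _ (mem_fpair_left _ _),
        by show leftCell (x+1, y+1) (x+1, y+1-1) ∈ _
           rw [leftCell_S, show ((x : ℤ) + 1, y + 1 - 1) = (x + 1, y) by norm_num]
           exact mem_pair_right _ _,
        by show rightCell (x+1, y+1) (x+1, y+1-1) ∈ _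
           rw [rightCell_S, show ((x : ℤ) + 1 - 1, y + 1 - 1) = (x, y) by norm_num]
           exact mem_pair_left _ _⟩ hf
  by_cases hw : w = ((x + 1 : ℤ), (y + 1 : ℤ))
  · subst hw
    rcases adj_cases hadj with heq | heq | heq | heq
    · -- v is the W neighbour: free edge
      have hveq : v = ((x : ℤ), y + 1) := by
        rw [Prod.mk.injEq] at heq
        rw [Prod.ext_iff]
        constructor <;> omega
      subst hveq
      show Function.update h (x+1, y+1) _ (x+1, y+1)
        = Function.update h (x+1, y+1) _ (x, y + 1) + edgeWeight (x, y + 1) (x+1, y+1)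
      rw [Function.update_self, Function.update_of_ne (by
        intro hc; rw [Prod.mk.injEq] at hc; omega)]
      have hwE := ew_E x (y + 1)
      have hcE := col_E x (y + 1)
      rw [hwE]
      omega
    · -- v is the S neighbour: edge interior to d3
      have hveq : v = ((x : ℤ) + 1, y) := by
        rw [Prod.mk.injEq] at heq
        rw [Prod.ext_iff]
        constructor <;> omega
      subst hveq
      refine absurd ⟨_, Finset.mem_union_right _ (mem_fpair_left _ _), ?_, ?_⟩ hf
      · show leftCell (x+1, y) (x+1, y+1) ∈ _
        rw [leftCell_N, show ((x:ℤ)+1-1, y) = (x, y) by norm_num]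
        exact mem_pair_left _ _
      · show rightCell (x+1, y) (x+1, y+1) ∈ _
        rw [rightCell_N]
        exact mem_pair_right _ _
    · -- v is the E neighbour: free edge
      have hveq : v = ((x : ℤ) + 1 + 1, y + 1) := by
        rw [Prod.mk.injEq] at heq
        rw [Prod.ext_iff]
        constructor <;> omega
      subst hveq
      show Function.update h (x+1, y+1) _ (x+1, y+1)
        = Function.update h (x+1, y+1) _ (x + 1 + 1, y + 1)
          + edgeWeight (x + 1 + 1, y + 1) (x+1, y+1)
      rw [Function.update_self, Function.update_of_ne (by
        intro hc; rw [Prod.mk.injEq] at hc; omega)]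
      have hwW := ew_W (x + 1 + 1) (y + 1)
      rw [show ((x : ℤ) + 1 + 1 - 1, y + 1) = (x + 1, y + 1) by norm_num] at hwW
      have hcE := col_E (x + 1) (y + 1)
      rw [hwW]
      omega
    · -- v is the N neighbour: edge interior to d4
      have hveq : v = ((x : ℤ) + 1, y + 1 + 1) := by
        rw [Prod.mk.injEq] at heq
        rw [Prod.ext_iff]
        constructor <;> omega
      subst hveq
      refine absurd ⟨_, Finset.mem_union_right _ (mem_fpair_right _ _), ?_, ?_⟩ hf
      · show leftCell (x+1, y+1+1) (x+1, y+1) ∈ _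
        have := leftCell_S (x+1) (y+1+1)
        rw [show ((x : ℤ)+1, y+1) = (x+1, y+1+1-1) by norm_num, this,
          show ((x : ℤ)+1, y+1+1-1) = (x+1, y+1) by norm_num]
        exact mem_pair_right _ _
      · show rightCell (x+1, y+1+1) (x+1, y+1) ∈ _
        have := rightCell_S (x+1) (y+1+1)
        rw [show ((x : ℤ)+1, y+1) = (x+1, y+1+1-1) by norm_num, this,
          show ((x : ℤ)+1-1, y+1+1-1) = (x, y+1) by norm_num]
        exact mem_pair_left _ _
  · -- edge not incident to the centre
    rw [Function.update_of_ne hw, Function.update_of_ne hv]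
    apply hh v w he
    rintro ⟨d, hd, hld, hrd⟩
    by_cases hdd1 : d = ({(x, y), (x, y + 1)} : Finset (ℤ × ℤ))
    · subst hdd1
      rw [mem_pair_iff] at hld hrd
      rcases edge_of_vpair hadj hld hrd with ⟨-, hwv⟩ | ⟨hvv, -⟩
      · exact hw hwv
      · exact hv hvv
    by_cases hdd2 : d = ({(x + 1, y), (x + 1, y + 1)} : Finset (ℤ × ℤ))
    · subst hdd2
      rw [mem_pair_iff] at hld hrd
      rcases edge_of_vpair hadj hld hrd with ⟨hvv, -⟩ | ⟨-, hwv⟩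
      · exact hv hvv
      · exact hw hwv
    · refine hf ⟨d, Finset.mem_union_left _ (Finset.mem_sdiff.2 ⟨hd, ?_⟩), hld, hrd⟩
      rw [mem_fpair_iff]
      push_neg
      exact ⟨hdd1, hdd2⟩
lemma flipRel_of_H {T : Finset (Finset (ℤ × ℤ))} {x y : ℤ}
    (hd1 : ({(x, y), (x + 1, y)} : Finset (ℤ × ℤ)) ∈ T)
    (hd2 : ({(x, y + 1), (x + 1, y + 1)} : Finset (ℤ × ℤ)) ∈ T) :
    FlipRel T ((T \ ({{(x, y), (x + 1, y)}, {(x, y + 1), (x + 1, y + 1)}} :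
        Finset (Finset (ℤ × ℤ)))) ∪
        ({{(x, y), (x, y + 1)}, {(x + 1, y), (x + 1, y + 1)}} :
        Finset (Finset (ℤ × ℤ)))) :=
  ⟨x, y, Or.inl ⟨hd1, hd2, rfl⟩⟩

lemma flipRel_of_V {T : Finset (Finset (ℤ × ℤ))} {x y : ℤ}
    (hd1 : ({(x, y), (x, y + 1)} : Finset (ℤ × ℤ)) ∈ T)
    (hd2 : ({(x + 1, y), (x + 1, y + 1)} : Finset (ℤ × ℤ)) ∈ T) :
    FlipRel T ((T \ ({{(x, y), (x, y + 1)}, {(x + 1, y), (x + 1, y + 1)}} :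
        Finset (Finset (ℤ × ℤ)))) ∪
        ({{(x, y), (x + 1, y)}, {(x, y + 1), (x + 1, y + 1)}} :
        Finset (Finset (ℤ × ℤ)))) :=
  ⟨x, y, Or.inr ⟨hd1, hd2, rfl⟩⟩

/-- Undoing a flip. -/
lemma flip_undo {T : Finset (Finset (ℤ × ℤ))} {R : Finset (ℤ × ℤ)} (hT : IsTiling T R)
    {e1 e2 f1 f2 : Finset (ℤ × ℤ)} (hd1 : e1 ∈ T) (hd2 : e2 ∈ T)
    (hne : e1 ≠ e2)
    (hf1 : f1 ∉ T) (hf2 : f2 ∉ T) :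
    ((T \ ({e1, e2} : Finset (Finset (ℤ × ℤ)))) ∪ ({f1, f2} : Finset (Finset (ℤ × ℤ)))) \
      ({f1, f2} : Finset (Finset (ℤ × ℤ))) ∪ ({e1, e2} : Finset (Finset (ℤ × ℤ))) = T := by
  ext d
  constructor
  · intro hd
    rcases Finset.mem_union.1 hd with hd' | hd'
    · obtain ⟨hin, hnf⟩ := Finset.mem_sdiff.1 hd'
      rcases Finset.mem_union.1 hin with hg | hg
      · exact (Finset.mem_sdiff.1 hg).1
      · exact absurd hg hnf
    · rcases (mem_fpair_iff _ _ _).1 hd' with rfl | rfl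
      · exact hd1
      · exact hd2
  · intro hd
    by_cases h1 : d = e1
    · exact Finset.mem_union_right _ ((mem_fpair_iff _ _ _).2 (Or.inl h1))
    by_cases h2 : d = e2
    · exact Finset.mem_union_right _ ((mem_fpair_iff _ _ _).2 (Or.inr h2))
    · apply Finset.mem_union_left
      rw [Finset.mem_sdiff]
      refine ⟨Finset.mem_union_left _ (Finset.mem_sdiff.2 ⟨hd, ?_⟩), ?_⟩
      · rw [mem_fpair_iff]; push_neg; exact ⟨h1, h2⟩
      · rw [mem_fpair_iff]; push_neg
        exact ⟨fun hc => absurd (hc ▸ hd) hf1, fun hc => absurd (hc ▸ hd) hf2⟩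

/-- Two specific cells determine whether dominoes are distinct / not in T. -/
lemma vert_not_in_of_horiz {T : Finset (Finset (ℤ × ℤ))} {R : Finset (ℤ × ℤ)}
    (hT : IsTiling T R) {x y : ℤ}
    (hd1 : ({(x, y), (x + 1, y)} : Finset (ℤ × ℤ)) ∈ T)
    (hd2 : ({(x, y + 1), (x + 1, y + 1)} : Finset (ℤ × ℤ)) ∈ T) :
    ({(x, y), (x, y + 1)} : Finset (ℤ × ℤ)) ∉ T ∧
    ({(x + 1, y), (x + 1, y + 1)} : Finset (ℤ × ℤ)) ∉ T := by
  constructor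
  · intro hmem
    have := dom_unique hT hmem hd1 (mem_pair_left _ _) (mem_pair_left _ _)
    have h2 : ((x : ℤ), y + 1) ∈ ({(x, y), (x + 1, y)} : Finset (ℤ × ℤ)) := by
      rw [← this]; exact mem_pair_right _ _
    rw [mem_pair_iff] at h2
    rcases h2 with hc | hc <;> (rw [Prod.mk.injEq] at hc; omega)
  · intro hmem
    have := dom_unique hT hmem hd1 (mem_pair_left _ _) (mem_pair_right _ _)
    have h2 : ((x : ℤ) + 1, y + 1) ∈ ({(x, y), (x + 1, y)} : Finset (ℤ × ℤ)) := by
      rw [← this]; exact mem_pair_right _ _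
    rw [mem_pair_iff] at h2
    rcases h2 with hc | hc <;> (rw [Prod.mk.injEq] at hc; omega)

lemma horiz_not_in_of_vert {T : Finset (Finset (ℤ × ℤ))} {R : Finset (ℤ × ℤ)}
    (hT : IsTiling T R) {x y : ℤ}
    (hd1 : ({(x, y), (x, y + 1)} : Finset (ℤ × ℤ)) ∈ T)
    (hd2 : ({(x + 1, y), (x + 1, y + 1)} : Finset (ℤ × ℤ)) ∈ T) :
    ({(x, y), (x + 1, y)} : Finset (ℤ × ℤ)) ∉ T ∧
    ({(x, y + 1), (x + 1, y + 1)} : Finset (ℤ × ℤ)) ∉ T := by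
  constructor
  · intro hmem
    have := dom_unique hT hmem hd1 (mem_pair_left _ _) (mem_pair_left _ _)
    have h2 : ((x : ℤ) + 1, y) ∈ ({(x, y), (x, y + 1)} : Finset (ℤ × ℤ)) := by
      rw [← this]; exact mem_pair_right _ _
    rw [mem_pair_iff] at h2
    rcases h2 with hc | hc <;> (rw [Prod.mk.injEq] at hc; omega)
  · intro hmem
    have := dom_unique hT hmem hd2 (mem_pair_right _ _) (mem_pair_right _ _)
    have h2 : ((x : ℤ), y + 1) ∈ ({(x + 1, y), (x + 1, y + 1)} : Finset (ℤ × ℤ)) := by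
      rw [← this]; exact mem_pair_left _ _
    rw [mem_pair_iff] at h2
    rcases h2 with hc | hc <;> (rw [Prod.mk.injEq] at hc; omega)

lemma pair_ne_pair_HV {x y : ℤ} :
    ({(x, y), (x + 1, y)} : Finset (ℤ × ℤ)) ≠ ({(x, y + 1), (x + 1, y + 1)} : Finset (ℤ × ℤ)) := by
  intro hc
  have : ((x : ℤ), y) ∈ ({(x, y + 1), (x + 1, y + 1)} : Finset (ℤ × ℤ)) := by
    rw [← hc]; exact mem_pair_left _ _
  rw [mem_pair_iff] at this
  rcases this with hc' | hc' <;> (rw [Prod.mk.injEq] at hc'; omega)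

lemma pair_ne_pair_V {x y : ℤ} :
    ({(x, y), (x, y + 1)} : Finset (ℤ × ℤ)) ≠ ({(x + 1, y), (x + 1, y + 1)} : Finset (ℤ × ℤ)) := by
  intro hc
  have : ((x : ℤ), y) ∈ ({(x + 1, y), (x + 1, y + 1)} : Finset (ℤ × ℤ)) := by
    rw [← hc]; exact mem_pair_left _ _
  rw [mem_pair_iff] at this
  rcases this with hc' | hc' <;> (rw [Prod.mk.injEq] at hc'; omega)

/-- Flip relation is symmetric (for tilings). -/
lemma flipRel_symm {T T' : Finset (Finset (ℤ × ℤ))} {R : Finset (ℤ × ℤ)}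
    (hT : IsTiling T R) (hrel : FlipRel T T') : FlipRel T' T := by
  obtain ⟨x, y, hH | hV⟩ := hrel
  · obtain ⟨hd1, hd2, rfl⟩ := hH
    obtain ⟨hn3, hn4⟩ := vert_not_in_of_horiz hT hd1 hd2
    refine ⟨x, y, Or.inr ⟨Finset.mem_union_right _ (mem_fpair_left _ _),
      Finset.mem_union_right _ (mem_fpair_right _ _), ?_⟩⟩
    exact (flip_undo hT hd1 hd2 pair_ne_pair_HV hn3 hn4).symm
  · obtain ⟨hd1, hd2, rfl⟩ := hV
    obtain ⟨hn3, hn4⟩ := horiz_not_in_of_vert hT hd1 hd2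
    refine ⟨x, y, Or.inl ⟨Finset.mem_union_right _ (mem_fpair_left _ _),
      Finset.mem_union_right _ (mem_fpair_right _ _), ?_⟩⟩
    exact (flip_undo hT hd1 hd2 pair_ne_pair_V hn3 hn4).symm
lemma interior_cells {R : Finset (ℤ × ℤ)} {v : ℤ × ℤ} (hv : v ∈ vertexFinset R)
    (hnb : ¬BoundaryVertex R v) :
    (v.1 - 1, v.2 - 1) ∈ R ∧ (v.1, v.2 - 1) ∈ R ∧ (v.1 - 1, v.2) ∈ R ∧ (v.1, v.2) ∈ R := by
  have hvo : VertexOf R v := by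
    obtain ⟨c, hc, hvc⟩ := Finset.mem_biUnion.1 hv
    obtain ⟨c1, c2⟩ := c
    simp only [Finset.mem_insert, Finset.mem_singleton] at hvc
    unfold VertexOf
    rcases hvc with rfl | rfl | rfl | rfl
    · right; right; right; simpa using hc
    · right; right; left; simpa using hc
    · right; left; simpa using hc
    · left; simpa using hc
  rw [BoundaryVertex, not_and_or] at hnb
  rcases hnb with hnb | hnb
  · exact absurd hvo hnb
  · push_neg at hnb
    exact ⟨hnb.1, hnb.2.1, hnb.2.2.1, hnb.2.2.2⟩

lemma descend {R : Finset (ℤ × ℤ)} {T₁ T₂ : Finset (Finset (ℤ × ℤ))} {h₁ h₂ : ℤ × ℤ → ℤ}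
    (hconn : ConnSet (↑R : Set (ℤ × ℤ)))
    (hT₁ : IsTiling T₁ R) (hT₂ : IsTiling T₂ R)
    (hh₁ : IsHeightFunction R T₁ h₁) (hh₂ : IsHeightFunction R T₂ h₂)
    (hbd : ∀ v, BoundaryVertex R v → h₁ v = h₂ v)
    (hne : ∃ v ∈ vertexFinset R, h₂ v < h₁ v) :
    ∃ T₁' h₁', FlipRel T₁ T₁' ∧ IsTiling T₁' R ∧ IsHeightFunction R T₁' h₁' ∧
      (∀ v, BoundaryVertex R v → h₁' v = h₂ v) ∧
      ∑ v ∈ vertexFinset R, |h₁' v - h₂ v|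
        = (∑ v ∈ vertexFinset R, |h₁ v - h₂ v|) - 4 := by
  classical
  set S := Finset.filter (fun v => h₂ v < h₁ v) (vertexFinset R) with hSdef
  have hSne : S.Nonempty := by
    obtain ⟨v, hv, hlt⟩ := hne
    exact ⟨v, Finset.mem_filter.2 ⟨hv, hlt⟩⟩
  obtain ⟨v, hvS, hmax⟩ := Finset.exists_max_image S h₁ hSne
  obtain ⟨hvV, hlt⟩ := Finset.mem_filter.1 hvS
  have hnb : ¬BoundaryVertex R v := fun hb => by have := hbd v hb; omega
  have h4c := interior_cells hvV hnb
  obtain ⟨x, y, rfl⟩ : ∃ x y : ℤ, v = (x + 1, y + 1) :=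
    ⟨v.1 - 1, v.2 - 1, by rw [Prod.ext_iff]; constructor <;> norm_num⟩
  have hSW : ((x : ℤ), y) ∈ R := by have := h4c.1; norm_num at this; exact this
  have hSE : ((x : ℤ) + 1, y) ∈ R := by have := h4c.2.1; norm_num at this; exact this
  have hNW : ((x : ℤ), y + 1) ∈ R := by have := h4c.2.2.1; norm_num at this; exact this
  have hNE : ((x : ℤ) + 1, y + 1) ∈ R := h4c.2.2.2
  have hdiv := div_four hconn hT₁ hT₂ hh₁ hh₂ hbd _ hvV
  have hge4 : h₁ ((x : ℤ) + 1, y + 1) - h₂ (x + 1, y + 1) ≥ 4 := by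
    obtain ⟨k, hk⟩ := hdiv; omega
  -- an out-edge of the maximum with weight +1 must be interior to a domino of T₁
  have key : ∀ n : ℤ × ℤ, EdgeOfRegion R (x + 1, y + 1) n →
      edgeWeight (x + 1, y + 1) n = 1 → n ∈ vertexFinset R →
      ∃ d ∈ T₁, leftCell (x + 1, y + 1) n ∈ d ∧ rightCell (x + 1, y + 1) n ∈ d := by
    intro n hreg hwt hnV
    rcases edge_step hT₁ hh₁ hreg with ⟨_, e1⟩ | ⟨hnf, _⟩
    · exfalso
      rw [hwt] at e1
      by_cases hn2 : h₂ n < h₁ n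
      · have := hmax n (Finset.mem_filter.2 ⟨hnV, hn2⟩)
        omega
      · push_neg at hn2
        rcases edge_step hT₂ hh₂ hreg with ⟨_, e2⟩ | ⟨_, e2⟩ <;> rw [hwt] at e2 <;> omega
    · rw [FreeEdge, not_not] at hnf
      exact hnf
  rcases col_sq ((x : ℤ) + 1, y + 1) with hcol | hcol
  · -- NE cell black: E and W edges have weight +1, vertical dominoes; use flipV
    have hregE : EdgeOfRegion R (x + 1, y + 1) (x + 1 + 1, y + 1) :=
      ⟨adjE (x + 1) (y + 1), Or.inl (by rw [leftCell_E]; exact hNE)⟩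
    have hwtE : edgeWeight ((x : ℤ) + 1, y + 1) (x + 1 + 1, y + 1) = 1 := by
      rw [ew_E, hcol]
    obtain ⟨d, hd, hl, hr⟩ := key _ hregE hwtE (corner_mem_vertexFinset hNE).2.1
    rw [leftCell_E] at hl
    rw [rightCell_E, show ((x : ℤ) + 1, y + 1 - 1) = (x + 1, y) by norm_num] at hr
    have hdeq := domino_eq_pair (hT₁.1 d hd) hr hl
      (by intro hc; rw [Prod.mk.injEq] at hc; omega)
    rw [hdeq] at hd
    have hregW : EdgeOfRegion R (x + 1, y + 1) (x + 1 - 1, y + 1) :=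
      ⟨adjW (x + 1) (y + 1), Or.inl (by
        rw [leftCell_W, show ((x : ℤ) + 1 - 1, y + 1 - 1) = (x, y) by norm_num]
        exact hSW)⟩
    have hwtW : edgeWeight ((x : ℤ) + 1, y + 1) (x + 1 - 1, y + 1) = 1 := by
      rw [ew_W, hcol]
    obtain ⟨d', hd', hl', hr'⟩ := key _ hregW hwtW (by
      rw [show ((x : ℤ) + 1 - 1, y + 1) = (x, y + 1) by norm_num]
      exact (corner_mem_vertexFinset hNW).1)
    rw [leftCell_W, show ((x : ℤ) + 1 - 1, y + 1 - 1) = (x, y) by norm_num] at hl'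
    rw [rightCell_W, show ((x : ℤ) + 1 - 1, y + 1) = (x, y + 1) by norm_num] at hr'
    have hdeq' := domino_eq_pair (hT₁.1 d' hd') hl' hr'
      (by intro hc; rw [Prod.mk.injEq] at hc; omega)
    rw [hdeq'] at hd'
    obtain ⟨htile', hh', hnb'⟩ := flipV hT₁ hh₁ hd' hd
    refine ⟨_, _, flipRel_of_V hd' hd, htile', hh', ?_, ?_⟩
    · intro u hu
      have hune : u ≠ ((x : ℤ) + 1, y + 1) := by rintro rfl; exact hnb' hu
      rw [Function.update_of_ne hune]
      exact hbd u hu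
    · have hcongr : ∑ u ∈ (vertexFinset R).erase ((x : ℤ) + 1, y + 1),
          |Function.update h₁ ((x : ℤ) + 1, y + 1)
            (h₁ (x + 1, y + 1) - 4 * col (x + 1, y + 1)) u - h₂ u|
          = ∑ u ∈ (vertexFinset R).erase ((x : ℤ) + 1, y + 1), |h₁ u - h₂ u| :=
        Finset.sum_congr rfl (fun u hu => by
          rw [Function.update_of_ne (Finset.ne_of_mem_erase hu)])
      have habs : |Function.update h₁ ((x : ℤ) + 1, y + 1)
          (h₁ (x + 1, y + 1) - 4 * col (x + 1, y + 1)) ((x : ℤ) + 1, y + 1)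
          - h₂ ((x : ℤ) + 1, y + 1)| = |h₁ ((x : ℤ) + 1, y + 1) - h₂ ((x : ℤ) + 1, y + 1)| - 4 := by
        rw [Function.update_self, hcol,
          abs_of_nonneg (by omega : (0:ℤ) ≤ h₁ ((x : ℤ) + 1, y + 1) - 4 * 1 - h₂ (x + 1, y + 1)),
          abs_of_nonneg (by omega : (0:ℤ) ≤ h₁ ((x : ℤ) + 1, y + 1) - h₂ (x + 1, y + 1))]
        ring
      calc ∑ u ∈ vertexFinset R, |Function.update h₁ ((x : ℤ) + 1, y + 1)
              (h₁ (x + 1, y + 1) - 4 * col (x + 1, y + 1)) u - h₂ u|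
          = ∑ u ∈ (vertexFinset R).erase ((x : ℤ) + 1, y + 1),
              |Function.update h₁ ((x : ℤ) + 1, y + 1)
                (h₁ (x + 1, y + 1) - 4 * col (x + 1, y + 1)) u - h₂ u|
            + |Function.update h₁ ((x : ℤ) + 1, y + 1)
                (h₁ (x + 1, y + 1) - 4 * col (x + 1, y + 1)) ((x : ℤ) + 1, y + 1)
              - h₂ ((x : ℤ) + 1, y + 1)| := (Finset.sum_erase_add _ _ hvV).symm
        _ = ∑ u ∈ (vertexFinset R).erase ((x : ℤ) + 1, y + 1), |h₁ u - h₂ u|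
            + (|h₁ ((x : ℤ) + 1, y + 1) - h₂ ((x : ℤ) + 1, y + 1)| - 4) := by
              rw [hcongr, habs]
        _ = (∑ u ∈ (vertexFinset R).erase ((x : ℤ) + 1, y + 1), |h₁ u - h₂ u|
            + |h₁ ((x : ℤ) + 1, y + 1) - h₂ ((x : ℤ) + 1, y + 1)|) - 4 := by ring
        _ = (∑ u ∈ vertexFinset R, |h₁ u - h₂ u|) - 4 := by
              rw [Finset.sum_erase_add _ _ hvV]
  · -- NE cell white: N and S edges have weight +1, horizontal dominoes; use flipH
    have hregN : EdgeOfRegion R (x + 1, y + 1) (x + 1, y + 1 + 1) :=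
      ⟨adjN (x + 1) (y + 1), Or.inl (by
        rw [leftCell_N, show ((x : ℤ) + 1 - 1, y + 1) = (x, y + 1) by norm_num]
        exact hNW)⟩
    have hwtN : edgeWeight ((x : ℤ) + 1, y + 1) (x + 1, y + 1 + 1) = 1 := by
      rw [ew_N, hcol]; ring
    obtain ⟨d, hd, hl, hr⟩ := key _ hregN hwtN (corner_mem_vertexFinset hNE).2.2.1
    rw [leftCell_N, show ((x : ℤ) + 1 - 1, y + 1) = (x, y + 1) by norm_num] at hl
    rw [rightCell_N] at hr
    have hdeq := domino_eq_pair (hT₁.1 d hd) hl hr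
      (by intro hc; rw [Prod.mk.injEq] at hc; omega)
    rw [hdeq] at hd
    have hregS : EdgeOfRegion R (x + 1, y + 1) (x + 1, y + 1 - 1) :=
      ⟨adjS (x + 1) (y + 1), Or.inl (by
        rw [leftCell_S, show ((x : ℤ) + 1, y + 1 - 1) = (x + 1, y) by norm_num]
        exact hSE)⟩
    have hwtS : edgeWeight ((x : ℤ) + 1, y + 1) (x + 1, y + 1 - 1) = 1 := by
      rw [ew_S, hcol]; ring
    obtain ⟨d', hd', hl', hr'⟩ := key _ hregS hwtS (by
      rw [show ((x : ℤ) + 1, y + 1 - 1) = (x + 1, y) by norm_num]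
      exact (corner_mem_vertexFinset hSW).2.1)
    rw [leftCell_S, show ((x : ℤ) + 1, y + 1 - 1) = (x + 1, y) by norm_num] at hl'
    rw [rightCell_S, show ((x : ℤ) + 1 - 1, y + 1 - 1) = (x, y) by norm_num] at hr'
    have hdeq' := domino_eq_pair (hT₁.1 d' hd') hr' hl'
      (by intro hc; rw [Prod.mk.injEq] at hc; omega)
    rw [hdeq'] at hd'
    obtain ⟨htile', hh', hnb'⟩ := flipH hT₁ hh₁ hd' hd
    refine ⟨_, _, flipRel_of_H hd' hd, htile', hh', ?_, ?_⟩
    · intro u hu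
      have hune : u ≠ ((x : ℤ) + 1, y + 1) := by rintro rfl; exact hnb' hu
      rw [Function.update_of_ne hune]
      exact hbd u hu
    · have hcongr : ∑ u ∈ (vertexFinset R).erase ((x : ℤ) + 1, y + 1),
          |Function.update h₁ ((x : ℤ) + 1, y + 1)
            (h₁ (x + 1, y + 1) + 4 * col (x + 1, y + 1)) u - h₂ u|
          = ∑ u ∈ (vertexFinset R).erase ((x : ℤ) + 1, y + 1), |h₁ u - h₂ u| :=
        Finset.sum_congr rfl (fun u hu => by
          rw [Function.update_of_ne (Finset.ne_of_mem_erase hu)])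
      have habs : |Function.update h₁ ((x : ℤ) + 1, y + 1)
          (h₁ (x + 1, y + 1) + 4 * col (x + 1, y + 1)) ((x : ℤ) + 1, y + 1)
          - h₂ ((x : ℤ) + 1, y + 1)| = |h₁ ((x : ℤ) + 1, y + 1) - h₂ ((x : ℤ) + 1, y + 1)| - 4 := by
        rw [Function.update_self, hcol,
          abs_of_nonneg (by omega :
            (0:ℤ) ≤ h₁ ((x : ℤ) + 1, y + 1) + 4 * (-1) - h₂ (x + 1, y + 1)),
          abs_of_nonneg (by omega : (0:ℤ) ≤ h₁ ((x : ℤ) + 1, y + 1) - h₂ (x + 1, y + 1))]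
        ring
      calc ∑ u ∈ vertexFinset R, |Function.update h₁ ((x : ℤ) + 1, y + 1)
              (h₁ (x + 1, y + 1) + 4 * col (x + 1, y + 1)) u - h₂ u|
          = ∑ u ∈ (vertexFinset R).erase ((x : ℤ) + 1, y + 1),
              |Function.update h₁ ((x : ℤ) + 1, y + 1)
                (h₁ (x + 1, y + 1) + 4 * col (x + 1, y + 1)) u - h₂ u|
            + |Function.update h₁ ((x : ℤ) + 1, y + 1)
                (h₁ (x + 1, y + 1) + 4 * col (x + 1, y + 1)) ((x : ℤ) + 1, y + 1)
              - h₂ ((x : ℤ) + 1, y + 1)| := (Finset.sum_erase_add _ _ hvV).symm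
        _ = ∑ u ∈ (vertexFinset R).erase ((x : ℤ) + 1, y + 1), |h₁ u - h₂ u|
            + (|h₁ ((x : ℤ) + 1, y + 1) - h₂ ((x : ℤ) + 1, y + 1)| - 4) := by
              rw [hcongr, habs]
        _ = (∑ u ∈ (vertexFinset R).erase ((x : ℤ) + 1, y + 1), |h₁ u - h₂ u|
            + |h₁ ((x : ℤ) + 1, y + 1) - h₂ ((x : ℤ) + 1, y + 1)|) - 4 := by ring
        _ = (∑ u ∈ vertexFinset R, |h₁ u - h₂ u|) - 4 := by
              rw [Finset.sum_erase_add _ _ hvV]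
/-- Existence of a flip path of length `n = Σ/4`. -/
lemma exists_path {R : Finset (ℤ × ℤ)} (hconn : ConnSet (↑R : Set (ℤ × ℤ))) :
    ∀ n : ℕ, ∀ T₁ T₂ : Finset (Finset (ℤ × ℤ)), ∀ h₁ h₂ : ℤ × ℤ → ℤ,
    IsTiling T₁ R → IsTiling T₂ R →
    IsHeightFunction R T₁ h₁ → IsHeightFunction R T₂ h₂ →
    (∀ v, BoundaryVertex R v → h₁ v = h₂ v) →
    (∑ v ∈ vertexFinset R, |h₁ v - h₂ v|) = 4 * n →
    ∃ f : ℕ → Finset (Finset (ℤ × ℤ)),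
      f 0 = T₁ ∧ f n = T₂ ∧ ∀ i < n, FlipRel (f i) (f (i + 1)) := by
  intro n
  induction n with
  | zero =>
    intro T₁ T₂ h₁ h₂ hT₁ hT₂ hh₁ hh₂ hbd hsum
    norm_num at hsum
    have hzero : ∀ v ∈ vertexFinset R, h₁ v = h₂ v := by
      have := (Finset.sum_eq_zero_iff_of_nonneg
        (fun v _ => abs_nonneg (h₁ v - h₂ v))).1 hsum
      intro v hv
      have := this v hv
      rw [abs_eq_zero, sub_eq_zero] at this
      exact this
    have hTeq : T₁ = T₂ := tiling_eq hT₁ hT₂ hh₁ hh₂ hzero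
    exact ⟨fun _ => T₁, rfl, hTeq, fun i hi => absurd hi (by omega)⟩
  | succ n ih =>
    intro T₁ T₂ h₁ h₂ hT₁ hT₂ hh₁ hh₂ hbd hsum
    have hex : ∃ v ∈ vertexFinset R, h₁ v ≠ h₂ v := by
      by_contra hc
      push_neg at hc
      have : ∑ v ∈ vertexFinset R, |h₁ v - h₂ v| = 0 :=
        Finset.sum_eq_zero (fun v hv => by rw [hc v hv, sub_self, abs_zero])
      omega
    by_cases hcase : ∃ v ∈ vertexFinset R, h₂ v < h₁ v
    · obtain ⟨T₁', h₁', hrel, hT₁', hh₁', hbd', hsum'⟩ :=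
        descend hconn hT₁ hT₂ hh₁ hh₂ hbd hcase
      have hsum'' : (∑ v ∈ vertexFinset R, |h₁' v - h₂ v|) = 4 * n := by omega
      obtain ⟨g, hg0, hgn, hgstep⟩ := ih T₁' T₂ h₁' h₂ hT₁' hT₂ hh₁' hh₂ hbd' hsum''
      refine ⟨fun i => if i = 0 then T₁ else g (i - 1), by simp, by simp [hgn], ?_⟩
      intro i hi
      rcases Nat.eq_zero_or_pos i with rfl | hpos
      · simpa [hg0] using hrel
      · have h1 : ¬(i = 0) := by omega
        have h2 : ¬(i + 1 = 0) := by omega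
        simp only [h1, h2, if_false]
        have : i - 1 + 1 = i + 1 - 1 := by omega
        rw [show i + 1 - 1 = i - 1 + 1 by omega]
        exact hgstep (i - 1) (by omega)
    · -- h₁ ≤ h₂ everywhere; descend on the other side
      push_neg at hcase
      have hcase' : ∃ v ∈ vertexFinset R, h₁ v < h₂ v := by
        obtain ⟨v, hv, hne⟩ := hex
        exact ⟨v, hv, lt_of_le_of_ne (hcase v hv) hne⟩
      obtain ⟨T₂', h₂', hrel, hT₂', hh₂', hbd', hsum'⟩ :=
        descend hconn hT₂ hT₁ hh₂ hh₁ (fun v hv => (hbd v hv).symm) hcase'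
      have hflip : ∀ u, |h₂' u - h₁ u| = |h₁ u - h₂' u| := fun u => abs_sub_comm _ _
      have hflip2 : ∀ u, |h₂ u - h₁ u| = |h₁ u - h₂ u| := fun u => abs_sub_comm _ _
      have hsum'' : (∑ v ∈ vertexFinset R, |h₁ v - h₂' v|) = 4 * n := by
        have e1 : ∑ v ∈ vertexFinset R, |h₁ v - h₂' v|
            = ∑ v ∈ vertexFinset R, |h₂' v - h₁ v| :=
          Finset.sum_congr rfl (fun u _ => (hflip u).symm)
        have e2 : ∑ v ∈ vertexFinset R, |h₂ v - h₁ v|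
            = ∑ v ∈ vertexFinset R, |h₁ v - h₂ v| :=
          Finset.sum_congr rfl (fun u _ => hflip2 u)
        omega
      obtain ⟨g, hg0, hgn, hgstep⟩ := ih T₁ T₂' h₁ h₂' hT₁ hT₂' hh₁ hh₂'
        (fun v hv => (hbd' v hv).symm) hsum''
      refine ⟨fun i => if i = n + 1 then T₂ else g i, ?_, ?_, ?_⟩
      · show (if (0 : ℕ) = n + 1 then T₂ else g 0) = T₁
        rw [if_neg (by omega : ¬(0 : ℕ) = n + 1)]
        exact hg0
      · show (if n + 1 = n + 1 then T₂ else g (n + 1)) = T₂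
        rw [if_pos rfl]
      · intro i hi
        show FlipRel (if i = n + 1 then T₂ else g i)
          (if i + 1 = n + 1 then T₂ else g (i + 1))
        by_cases hin : i = n
        · subst hin
          rw [if_neg (by omega : ¬i = i + 1), if_pos rfl, hgn]
          exact flipRel_symm hT₂ hrel
        · rw [if_neg (by omega : ¬i = n + 1), if_neg (by omega : ¬i + 1 = n + 1)]
          exact hgstep i (by omega)

/-- Lower bound: any flip path from `T` to `T₂` has length at least `Σ/4`. -/
lemma lower_bound {R : Finset (ℤ × ℤ)} (hconn : ConnSet (↑R : Set (ℤ × ℤ))) :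
    ∀ n : ℕ, ∀ T T₂ : Finset (Finset (ℤ × ℤ)), ∀ h h₂ : ℤ × ℤ → ℤ,
    IsTiling T R → IsTiling T₂ R →
    IsHeightFunction R T h → IsHeightFunction R T₂ h₂ →
    (∀ v, BoundaryVertex R v → h v = h₂ v) →
    ∀ f : ℕ → Finset (Finset (ℤ × ℤ)),
      f 0 = T → f n = T₂ → (∀ i < n, FlipRel (f i) (f (i + 1))) →
      (∑ v ∈ vertexFinset R, |h v - h₂ v|) ≤ 4 * n := by
  intro n
  induction n with
  | zero =>
    intro T T₂ h h₂ hT hT₂ hh hh₂ hbd f hf0 hfn hstep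
    have hTeq : T = T₂ := by rw [← hf0, ← hfn]
    subst hTeq
    have := height_unique hconn hT hh hh₂ hbd
    have : ∑ v ∈ vertexFinset R, |h v - h₂ v| = 0 :=
      Finset.sum_eq_zero (fun v hv => by rw [this v hv, sub_self, abs_zero])
    omega
  | succ n ih =>
    intro T T₂ h h₂ hT hT₂ hh hh₂ hbd f hf0 hfn hstep
    have hrel : FlipRel T (f 1) := by
      rw [← hf0]
      exact hstep 0 (by omega)
    obtain ⟨x, y, hH | hV⟩ := hrel
    · obtain ⟨hd1, hd2, hT'eq⟩ := hH
      obtain ⟨htile', hh', hnb'⟩ := flipH hT hh hd1 hd2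
      rw [← hT'eq] at htile' hh'
      have hbd' : ∀ v, BoundaryVertex R v → Function.update h (x + 1, y + 1)
          (h (x + 1, y + 1) + 4 * col (x + 1, y + 1)) v = h₂ v := by
        intro u hu
        have hune : u ≠ ((x : ℤ) + 1, y + 1) := by rintro rfl; exact hnb' hu
        rw [Function.update_of_ne hune]
        exact hbd u hu
      have hih := ih (f 1) T₂ _ h₂ htile' hT₂ hh' hh₂ hbd' (fun i => f (i + 1)) rfl hfn
        (fun i hi => hstep (i + 1) (by omega))
      -- compare the two sums
      have hvV : ((x : ℤ) + 1, y + 1) ∈ vertexFinset R :=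
        (corner_mem_vertexFinset (cell_mem_R hT hd1 (mem_pair_left _ _))).2.2.2
      have hcongr : ∑ u ∈ (vertexFinset R).erase ((x : ℤ) + 1, y + 1),
          |Function.update h ((x : ℤ) + 1, y + 1)
            (h (x + 1, y + 1) + 4 * col (x + 1, y + 1)) u - h₂ u|
          = ∑ u ∈ (vertexFinset R).erase ((x : ℤ) + 1, y + 1), |h u - h₂ u| :=
        Finset.sum_congr rfl (fun u hu => by
          rw [Function.update_of_ne (Finset.ne_of_mem_erase hu)])
      have hs1 := Finset.sum_erase_add (vertexFinset R)
        (fun u => |Function.update h ((x : ℤ) + 1, y + 1)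
          (h (x + 1, y + 1) + 4 * col (x + 1, y + 1)) u - h₂ u|) hvV
      have hs2 := Finset.sum_erase_add (vertexFinset R) (fun u => |h u - h₂ u|) hvV
      have habs : |Function.update h ((x : ℤ) + 1, y + 1)
          (h (x + 1, y + 1) + 4 * col (x + 1, y + 1)) ((x : ℤ) + 1, y + 1)
          - h₂ ((x : ℤ) + 1, y + 1)|
          ≥ |h ((x : ℤ) + 1, y + 1) - h₂ ((x : ℤ) + 1, y + 1)| - 4 := by
        rw [Function.update_self]
        rcases col_sq ((x : ℤ) + 1, y + 1) with hc | hc <;> rw [hc] <;>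
          rcases abs_cases (h ((x : ℤ) + 1, y + 1) - h₂ ((x : ℤ) + 1, y + 1)) with
            ⟨e1, _⟩ | ⟨e1, _⟩ <;>
          rcases abs_cases (h ((x : ℤ) + 1, y + 1) + 4 * 1 - h₂ ((x : ℤ) + 1, y + 1)) with
            ⟨e2, _⟩ | ⟨e2, _⟩ <;>
          rcases abs_cases (h ((x : ℤ) + 1, y + 1) + 4 * (-1) - h₂ ((x : ℤ) + 1, y + 1)) with
            ⟨e3, _⟩ | ⟨e3, _⟩ <;>
          omega
      omega
    · obtain ⟨hd1, hd2, hT'eq⟩ := hV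
      obtain ⟨htile', hh', hnb'⟩ := flipV hT hh hd1 hd2
      rw [← hT'eq] at htile' hh'
      have hbd' : ∀ v, BoundaryVertex R v → Function.update h (x + 1, y + 1)
          (h (x + 1, y + 1) - 4 * col (x + 1, y + 1)) v = h₂ v := by
        intro u hu
        have hune : u ≠ ((x : ℤ) + 1, y + 1) := by rintro rfl; exact hnb' hu
        rw [Function.update_of_ne hune]
        exact hbd u hu
      have hih := ih (f 1) T₂ _ h₂ htile' hT₂ hh' hh₂ hbd' (fun i => f (i + 1)) rfl hfn
        (fun i hi => hstep (i + 1) (by omega))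
      have hvV : ((x : ℤ) + 1, y + 1) ∈ vertexFinset R :=
        (corner_mem_vertexFinset (cell_mem_R hT hd2 (mem_pair_left _ _))).2.2.1
      have hcongr : ∑ u ∈ (vertexFinset R).erase ((x : ℤ) + 1, y + 1),
          |Function.update h ((x : ℤ) + 1, y + 1)
            (h (x + 1, y + 1) - 4 * col (x + 1, y + 1)) u - h₂ u|
          = ∑ u ∈ (vertexFinset R).erase ((x : ℤ) + 1, y + 1), |h u - h₂ u| :=
        Finset.sum_congr rfl (fun u hu => by
          rw [Function.update_of_ne (Finset.ne_of_mem_erase hu)])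
      have hs1 := Finset.sum_erase_add (vertexFinset R)
        (fun u => |Function.update h ((x : ℤ) + 1, y + 1)
          (h (x + 1, y + 1) - 4 * col (x + 1, y + 1)) u - h₂ u|) hvV
      have hs2 := Finset.sum_erase_add (vertexFinset R) (fun u => |h u - h₂ u|) hvV
      have habs : |Function.update h ((x : ℤ) + 1, y + 1)
          (h (x + 1, y + 1) - 4 * col (x + 1, y + 1)) ((x : ℤ) + 1, y + 1)
          - h₂ ((x : ℤ) + 1, y + 1)|
          ≥ |h ((x : ℤ) + 1, y + 1) - h₂ ((x : ℤ) + 1, y + 1)| - 4 := by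
        rw [Function.update_self]
        rcases col_sq ((x : ℤ) + 1, y + 1) with hc | hc <;> rw [hc] <;>
          rcases abs_cases (h ((x : ℤ) + 1, y + 1) - h₂ ((x : ℤ) + 1, y + 1)) with
            ⟨e1, _⟩ | ⟨e1, _⟩ <;>
          rcases abs_cases (h ((x : ℤ) + 1, y + 1) - 4 * 1 - h₂ ((x : ℤ) + 1, y + 1)) with
            ⟨e2, _⟩ | ⟨e2, _⟩ <;>
          rcases abs_cases (h ((x : ℤ) + 1, y + 1) - 4 * (-1) - h₂ ((x : ℤ) + 1, y + 1)) with
            ⟨e3, _⟩ | ⟨e3, _⟩ <;>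
          omega
      omega
/-- the flip-graph distance between two domino tilings of a simply connected
region is `(1/4) Σ_v |θ₁(v) − θ₂(v)|`, summed over the vertices of the region. -/
theorem stmt_13 (R : Finset (ℤ × ℤ)) (T₁ T₂ : Finset (Finset (ℤ × ℤ)))
    (h₁ h₂ : ℤ × ℤ → ℤ)
    (hR : SimplyConnected R) (hT₁ : IsTiling T₁ R) (hT₂ : IsTiling T₂ R)
    (hh₁ : IsHeightFunction R T₁ h₁) (hh₂ : IsHeightFunction R T₂ h₂)
    (hbd : ∀ v, BoundaryVertex R v → h₁ v = h₂ v) :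
    (flipDist T₁ T₂ : ℤ) * 4 = ∑ v ∈ vertexFinset R, |h₁ v - h₂ v| := by
  have hconn := hR.1
  have hdiv4 : (4 : ℤ) ∣ ∑ v ∈ vertexFinset R, |h₁ v - h₂ v| :=
    Finset.dvd_sum (fun v hv =>
      (dvd_abs _ _).2 (div_four hconn hT₁ hT₂ hh₁ hh₂ hbd v hv))
  have hnonneg : (0 : ℤ) ≤ ∑ v ∈ vertexFinset R, |h₁ v - h₂ v| :=
    Finset.sum_nonneg fun v _ => abs_nonneg _
  obtain ⟨k, hk⟩ := hdiv4
  have hk0 : 0 ≤ k := by omega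
  have hsum' : (∑ v ∈ vertexFinset R, |h₁ v - h₂ v|) = 4 * (k.toNat : ℤ) := by
    rw [Int.toNat_of_nonneg hk0]; exact hk
  obtain ⟨f, hf0, hfn, hstep⟩ :=
    exists_path hconn k.toNat T₁ T₂ h₁ h₂ hT₁ hT₂ hh₁ hh₂ hbd hsum'
  have hmem : k.toNat ∈ {n : ℕ | ∃ f : ℕ → Finset (Finset (ℤ × ℤ)),
      f 0 = T₁ ∧ f n = T₂ ∧ ∀ i < n, FlipRel (f i) (f (i + 1))} := ⟨f, hf0, hfn, hstep⟩
  have hle : flipDist T₁ T₂ ≤ k.toNat := Nat.sInf_le hmem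
  have hne : {n : ℕ | ∃ f : ℕ → Finset (Finset (ℤ × ℤ)),
      f 0 = T₁ ∧ f n = T₂ ∧ ∀ i < n, FlipRel (f i) (f (i + 1))}.Nonempty := ⟨k.toNat, hmem⟩
  obtain ⟨g, hg0, hgn, hgstep⟩ := Nat.sInf_mem hne
  have hge : (∑ v ∈ vertexFinset R, |h₁ v - h₂ v|) ≤ 4 * (flipDist T₁ T₂ : ℤ) :=
    lower_bound hconn (flipDist T₁ T₂) T₁ T₂ h₁ h₂ hT₁ hT₂ hh₁ hh₂ hbd g hg0 hgn hgstep
  omega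
end
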